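/- arXiv:2105.05725 — 5 statements merged into one kernel-verified Lean document; each statement's English description precedes it below -/
import Mathlib

section
/- Layer-coherence of intersections with tall hourglasses: if H_1 is a maximal hourglass of height h_1 ≥ 4 in a graph G of maximum degree three, and H_2 is any other maximal hourglass, then for each layer i of H_1 with layer agents u_i, w_i, it holds that u_i ∈ V(H_2) if and only if w_i ∈ V(H_2). -/
/-- The vertex set of an hourglass with layers `(u i, w i)`, `i < h`. -/
def hgSet {V : Type*} (h : ℕ) (u w : ℕ → V) : Set V :=
  {v | ∃ i < h, v = u i ∨ v = w i}

/-- `IsHourglass G h u w`: the vertices `u 0, w 0, …, u (h-1), w (h-1)` induce an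
hourglass of height `h` in `G`: consecutive layers are completely cross-linked,
each layer is linked horizontally, and middle-layer vertices have exactly these
three neighbours inside the hourglass (corner vertices have degree at least two
inside, which is implied). -/
def IsHourglass {V : Type*} (G : SimpleGraph V) (h : ℕ) (u w : ℕ → V) : Prop :=
  2 ≤ h ∧
  Set.InjOn u (Set.Iio h) ∧ Set.InjOn w (Set.Iio h) ∧
  (∀ i < h, ∀ j < h, u i ≠ w j) ∧
  (∀ i < h, G.Adj (u i) (w i)) ∧
  (∀ i, i + 1 < h → G.Adj (u i) (w (i + 1)) ∧ G.Adj (u (i + 1)) (w i)) ∧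
  (∀ i, 1 ≤ i → i + 1 < h →
    (∀ j < h, G.Adj (u i) (w j) → j + 1 = i ∨ j = i ∨ j = i + 1) ∧
    (∀ j < h, ¬ G.Adj (u i) (u j)) ∧
    (∀ j < h, G.Adj (w i) (u j) → j + 1 = i ∨ j = i ∨ j = i + 1) ∧
    (∀ j < h, ¬ G.Adj (w i) (w j)))

/-- A maximal hourglass: no strictly larger vertex set induces an hourglass. -/
def IsMaxHourglass {V : Type*} (G : SimpleGraph V) (h : ℕ) (u w : ℕ → V) : Prop :=
  IsHourglass G h u w ∧
    ¬ ∃ (h' : ℕ) (u' w' : ℕ → V), IsHourglass G h' u' w' ∧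
        hgSet h u w ⊂ hgSet h' u' w'

/-!
If `u₁ i` lies in `H₂` but `w₁ i` does not, then `u₁ i` has at most two neighbours in `H₂`
(the degree is at most three), whereas a middle vertex of `H₂` has three; so `u₁ i` is an end
vertex of `H₂`, and after re-indexing `u₁ i = u₂ 0`. Then `u₂ 1` is a second common neighbour
of the two `H₂`-neighbours `w₂ 0, w₂ 1` of `u₁ i`, which are neighbours of `u₁ i` other than
`w₁ i`. In an hourglass of height at least four this is impossible, except when `h₁ = 4` and an
extra edge `u₁ 3 w₁ 0` closes `H₁` into a twisted ring. In that case following `H₂` layer by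
layer shows `V(H₂) ⊆ V(H₁)`, which contradicts the maximality of `H₂`.
-/

theorem eq_or_eq_or_eq_of_eq_or_eq {α : Type*} {x y z a b : α} (hx : x = a ∨ x = b)
    (hy : y = a ∨ y = b) (hz : z = a ∨ z = b) : x = y ∨ x = z ∨ y = z := by
  rcases hx with rfl | rfl <;> rcases hy with rfl | rfl <;> rcases hz with rfl | rfl <;> simp

namespace SimpleGraph

variable {V : Type*} {G : SimpleGraph V}

theorem eq_or_eq_or_eq_of_degree_le_three {v a b c x : V} [Fintype (G.neighborSet v)]
    (hdeg : G.degree v ≤ 3) (ha : G.Adj v a) (hb : G.Adj v b) (hc : G.Adj v c)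
    (hab : a ≠ b) (hac : a ≠ c) (hbc : b ≠ c) (hx : G.Adj v x) :
    x = a ∨ x = b ∨ x = c := by
  classical
  have hsub : ({a, b, c} : Finset V) ⊆ G.neighborFinset v := by
    simp [Finset.insert_subset_iff, ha, hb, hc]
  have hcard : (G.neighborFinset v).card ≤ ({a, b, c} : Finset V).card := by
    rw [card_neighborFinset_eq_degree, Finset.card_eq_three.mpr ⟨a, b, c, hab, hac, hbc, rfl⟩]
    exact hdeg
  have hx' : x ∈ ({a, b, c} : Finset V) := by
    rw [Finset.eq_of_subset_of_card_le hsub hcard]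
    exact (mem_neighborFinset G v x).mpr hx
  simpa using hx'

end SimpleGraph

section Hourglass

variable {V : Type*} {G : SimpleGraph V} {h h' : ℕ} {u w u' w' : ℕ → V}

theorem u_mem_hgSet {i : ℕ} (hi : i < h) : u i ∈ hgSet h u w := ⟨i, hi, .inl rfl⟩

theorem w_mem_hgSet {i : ℕ} (hi : i < h) : w i ∈ hgSet h u w := ⟨i, hi, .inr rfl⟩

theorem hgSet_comm : hgSet h u w = hgSet h w u := by
  ext v
  constructor <;> rintro ⟨i, hi, e | e⟩ <;> exact ⟨i, hi, by tauto⟩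

theorem hgSet_reverse :
    hgSet h (fun k => u (h - 1 - k)) (fun k => w (h - 1 - k)) = hgSet h u w := by
  ext v
  constructor
  · rintro ⟨i, hi, e⟩
    exact ⟨h - 1 - i, by omega, e⟩
  · rintro ⟨i, hi, e⟩
    refine ⟨h - 1 - i, by omega, ?_⟩
    simpa only [show h - 1 - (h - 1 - i) = i by omega] using e

theorem IsMaxHourglass.eq_of_subset (hmax : IsMaxHourglass G h u w) (hg : IsHourglass G h' u' w')
    (hsub : hgSet h u w ⊆ hgSet h' u' w') : hgSet h u w = hgSet h' u' w' :=
  by_contra fun hne => hmax.2 ⟨h', u', w', hg, hsub.ssubset_of_ne hne⟩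

namespace IsHourglass

section

variable (hg : IsHourglass G h u w)
include hg

theorem two_le : 2 ≤ h := hg.1

theorem u_ne {i j : ℕ} (hi : i < h) (hj : j < h) (hij : i ≠ j) : u i ≠ u j :=
  fun e => hij (hg.2.1 hi hj e)

theorem w_ne {i j : ℕ} (hi : i < h) (hj : j < h) (hij : i ≠ j) : w i ≠ w j :=
  fun e => hij (hg.2.2.1 hi hj e)

theorem adj {i : ℕ} (hi : i < h) : G.Adj (u i) (w i) := hg.2.2.2.2.1 i hi

theorem adj_succ {i : ℕ} (hi : i + 1 < h) : G.Adj (u i) (w (i + 1)) :=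
  (hg.2.2.2.2.2.1 i hi).1

theorem succ_adj {i : ℕ} (hi : i + 1 < h) : G.Adj (u (i + 1)) (w i) :=
  (hg.2.2.2.2.2.1 i hi).2

theorem symm : IsHourglass G h w u := by
  obtain ⟨h2, hu, hw, huw, hlay, hcross, hmid⟩ := hg
  refine ⟨h2, hw, hu, fun i hi j hj => (huw j hj i hi).symm, fun i hi => (hlay i hi).symm,
    fun i hi => ⟨(hcross i hi).2.symm, (hcross i hi).1.symm⟩, fun i hi1 hi2 => ?_⟩
  obtain ⟨m1, m2, m3, m4⟩ := hmid i hi1 hi2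
  exact ⟨m3, m4, m1, m2⟩

theorem reverse : IsHourglass G h (fun k => u (h - 1 - k)) (fun k => w (h - 1 - k)) := by
  obtain ⟨h2, hu, hw, huw, hlay, hcross, hmid⟩ := hg
  have hrev : ∀ {f : ℕ → V}, Set.InjOn f (Set.Iio h) →
      Set.InjOn (fun k => f (h - 1 - k)) (Set.Iio h) := fun hf i hi j hj e => by
    simp only [Set.mem_Iio] at hi hj
    have := hf (Set.mem_Iio.mpr (show h - 1 - i < h by omega))
      (Set.mem_Iio.mpr (show h - 1 - j < h by omega)) e
    omega
  refine ⟨h2, hrev hu, hrev hw, fun i hi j hj => huw _ (by omega) _ (by omega),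
    fun i hi => hlay _ (by omega), fun i hi => ?_, fun i hi1 hi2 => ?_⟩
  · have e : h - 1 - i = h - 1 - (i + 1) + 1 := by omega
    simp only [e]
    exact ⟨(hcross _ (by omega)).2, (hcross _ (by omega)).1⟩
  · obtain ⟨m1, m2, m3, m4⟩ := hmid (h - 1 - i) (by omega) (by omega)
    refine ⟨fun j hj hadj => ?_, fun j hj => m2 _ (by omega), fun j hj hadj => ?_,
      fun j hj => m4 _ (by omega)⟩
    · have := m1 (h - 1 - j) (by omega) hadj
      omega
    · have := m3 (h - 1 - j) (by omega) hadj
      omega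

theorem le_add_one_of_adj {j k : ℕ} (hj : j < h) (hk : k < h)
    (hmid : 1 ≤ j ∧ j + 1 < h ∨ 1 ≤ k ∧ k + 1 < h) (hadj : G.Adj (u j) (w k)) :
    j ≤ k + 1 ∧ k ≤ j + 1 := by
  rcases hmid with ⟨hj₁, hj₂⟩ | ⟨hk₁, hk₂⟩
  · have := (hg.2.2.2.2.2.2 j hj₁ hj₂).1 k hk hadj
    omega
  · have := (hg.2.2.2.2.2.2 k hk₁ hk₂).2.2.1 j hj hadj.symm
    omega

theorem u_one_adj_of_w_pair {a b : V} (hab : w 0 = a ∧ w 1 = b ∨ w 0 = b ∧ w 1 = a) :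
    G.Adj (u 1) a ∧ G.Adj (u 1) b := by
  have h0 := hg.succ_adj (i := 0) (by have := hg.two_le; omega)
  have h1 := hg.adj (i := 1) (by have := hg.two_le; omega)
  rcases hab with ⟨e0, e1⟩ | ⟨e0, e1⟩
  · exact ⟨e0 ▸ h0, e1 ▸ h1⟩
  · exact ⟨e1 ▸ h1, e0 ▸ h0⟩

theorem exists_adj_mem_ne {v : V} (hv : v ∈ hgSet h u w) (z : V) :
    ∃ y ∈ hgSet h u w, G.Adj v y ∧ y ≠ z := by
  suffices key : ∀ {u w : ℕ → V}, IsHourglass G h u w → ∀ j < h,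
      ∃ y ∈ hgSet h u w, G.Adj (u j) y ∧ y ≠ z by
    obtain ⟨j, hj, rfl | rfl⟩ := hv
    · exact key hg j hj
    · rw [hgSet_comm]
      exact key hg.symm j hj
  intro u w hg j hj
  obtain ⟨k, hk, hkj, hadj⟩ : ∃ k < h, k ≠ j ∧ G.Adj (u j) (w k) := by
    by_cases hj' : j + 1 < h
    · exact ⟨j + 1, hj', by omega, hg.adj_succ hj'⟩
    · obtain ⟨k, rfl⟩ : ∃ k, j = k + 1 := ⟨j - 1, by have := hg.two_le; omega⟩
      exact ⟨k, by omega, by omega, hg.succ_adj hj⟩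
  by_cases hz : w j = z
  · exact ⟨w k, w_mem_hgSet hk, hadj, hz ▸ hg.w_ne hk hj hkj⟩
  · exact ⟨w j, w_mem_hgSet hj, hg.adj hj, hz⟩

theorem exists_reindex_u_zero {v a b : V} (hv : v ∈ hgSet h u w)
    (hab : ∀ x, G.Adj v x → x ∈ hgSet h u w → x = a ∨ x = b) :
    ∃ u' w', IsHourglass G h u' w' ∧ hgSet h u' w' = hgSet h u w ∧ u' 0 = v := by
  suffices key : ∀ {u w : ℕ → V}, IsHourglass G h u w → ∀ j < h,
      (∀ x, G.Adj (u j) x → x ∈ hgSet h u w → x = a ∨ x = b) →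
      ∃ u' w', IsHourglass G h u' w' ∧ hgSet h u' w' = hgSet h u w ∧ u' 0 = u j by
    obtain ⟨j, hj, rfl | rfl⟩ := hv
    · exact key hg j hj hab
    · rw [hgSet_comm] at hab ⊢
      exact key hg.symm j hj hab
  intro u w hg j hj hab
  rcases Nat.eq_zero_or_pos j with rfl | hj₀
  · exact ⟨u, w, hg, rfl, rfl⟩
  by_cases hjh : j + 1 = h
  · refine ⟨_, _, hg.reverse, hgSet_reverse, ?_⟩
    simp only [show h - 1 - 0 = j by omega]
  obtain ⟨k, rfl⟩ : ∃ k, j = k + 1 := ⟨j - 1, by omega⟩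
  have hk : k + 2 < h := by omega
  rcases eq_or_eq_or_eq_of_eq_or_eq
      (hab _ (hg.succ_adj (by omega)) (w_mem_hgSet (by omega)))
      (hab _ (hg.adj hj) (w_mem_hgSet hj)) (hab _ (hg.adj_succ hk) (w_mem_hgSet hk))
    with e | e | e <;> exact absurd e (hg.w_ne (by omega) (by omega) (by omega))

theorem exists_reindex_corner {v a b : V} (hv : v ∈ hgSet h u w)
    (hab : ∀ x, G.Adj v x → x ∈ hgSet h u w → x = a ∨ x = b) :
    ∃ u' w', IsHourglass G h u' w' ∧ hgSet h u' w' = hgSet h u w ∧ u' 0 = v ∧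
      (w' 0 = a ∧ w' 1 = b ∨ w' 0 = b ∧ w' 1 = a) := by
  obtain ⟨u', w', hg', hS, rfl⟩ := hg.exists_reindex_u_zero hv hab
  refine ⟨u', w', hg', hS, rfl, ?_⟩
  have h2 := hg'.two_le
  have hne : w' 0 ≠ w' 1 := hg'.w_ne (by omega) (by omega) (by omega)
  rcases hab _ (hg'.adj (by omega)) (hS ▸ w_mem_hgSet (by omega)) with h0 | h0 <;>
    rcases hab _ (hg'.adj_succ (by omega)) (hS ▸ w_mem_hgSet (by omega)) with h1 | h1
  · exact absurd (h0.trans h1.symm) hne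
  · exact .inl ⟨h0, h1⟩
  · exact .inr ⟨h0, h1⟩
  · exact absurd (h0.trans h1.symm) hne

end

variable [G.LocallyFinite]

section

variable (hg : IsHourglass G h u w)
include hg

theorem eq_w_of_adj_u {i : ℕ} (hdeg : G.degree (u (i + 1)) ≤ 3)
    (hi : i + 2 < h) {x : V} (hx : G.Adj (u (i + 1)) x) :
    x = w i ∨ x = w (i + 1) ∨ x = w (i + 2) :=
  G.eq_or_eq_or_eq_of_degree_le_three hdeg (hg.succ_adj (by omega)) (hg.adj (by omega))
    (hg.adj_succ hi) (hg.w_ne (by omega) (by omega) (by omega))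
    (hg.w_ne (by omega) (by omega) (by omega)) (hg.w_ne (by omega) (by omega) (by omega)) hx

theorem eq_u_of_adj_w {i : ℕ} (hdeg : G.degree (w (i + 1)) ≤ 3)
    (hi : i + 2 < h) {x : V} (hx : G.Adj (w (i + 1)) x) :
    x = u i ∨ x = u (i + 1) ∨ x = u (i + 2) :=
  hg.symm.eq_w_of_adj_u hdeg hi hx

theorem eq_of_adj_w_of_adj_w (hdeg : ∀ v, G.degree v ≤ 3) {i : ℕ}
    (hi : i + 4 ≤ h) {x : V} (hx₀ : G.Adj x (w i)) (hx₂ : G.Adj x (w (i + 2))) :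
    x = u (i + 1) ∨ i = 0 ∧ h = 4 ∧ x = u 3 := by
  rcases hg.eq_u_of_adj_w (hdeg _) (i := i + 1) (by omega) hx₂.symm with rfl | rfl | rfl
  · exact .inl rfl
  · have := hg.le_add_one_of_adj (by omega) (by omega) (by omega) hx₀
    omega
  · -- `u (i + 3)` and `w i` can only be adjacent if both are end vertices of the hourglass
    have : ¬ (1 ≤ i ∨ 5 ≤ h) := fun hmid => by
      have := hg.le_add_one_of_adj (by omega) (by omega) (by omega) hx₀
      omega
    exact .inr ⟨by omega, by omega, by congr 1; omega⟩

theorem mem_of_adj_u {i : ℕ} (hdeg : G.degree (u (i + 1)) ≤ 3)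
    (hi : i + 2 < h) {x : V} (hx : G.Adj (u (i + 1)) x) : x ∈ hgSet h u w := by
  rcases hg.eq_w_of_adj_u hdeg hi hx with rfl | rfl | rfl <;> exact w_mem_hgSet (by omega)

end

theorem eq_u_of_adj_w_zero_of_twisted (hg : IsHourglass G 4 u w) (hdeg : G.degree (w 0) ≤ 3)
    (htw : G.Adj (u 3) (w 0)) {x : V} (hx : G.Adj (w 0) x) : x = u 0 ∨ x = u 1 ∨ x = u 3 :=
  G.eq_or_eq_or_eq_of_degree_le_three hdeg (hg.adj (by norm_num)).symm
    (hg.succ_adj (i := 0) (by norm_num)).symm htw.symm (hg.u_ne (by norm_num) (by norm_num)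
    (by norm_num)) (hg.u_ne (by norm_num) (by norm_num) (by norm_num))
    (hg.u_ne (by norm_num) (by norm_num) (by norm_num)) hx

theorem eq_w_of_adj_u_three_of_twisted (hg : IsHourglass G 4 u w) (hdeg : G.degree (u 3) ≤ 3)
    (htw : G.Adj (u 3) (w 0)) {x : V} (hx : G.Adj (u 3) x) : x = w 0 ∨ x = w 2 ∨ x = w 3 :=
  G.eq_or_eq_or_eq_of_degree_le_three hdeg htw (hg.succ_adj (i := 2) (by norm_num))
    (hg.adj (by norm_num)) (hg.w_ne (by norm_num) (by norm_num) (by norm_num))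
    (hg.w_ne (by norm_num) (by norm_num) (by norm_num))
    (hg.w_ne (by norm_num) (by norm_num) (by norm_num)) hx

section

variable (hg : IsHourglass G 4 u w) (hdeg : ∀ v, G.degree v ≤ 3) (htw : G.Adj (u 3) (w 0))
  (hg' : IsHourglass G h' u' w') (hw' : w' 0 = w 0 ∧ w' 1 = w 2 ∨ w' 0 = w 2 ∧ w' 1 = w 0)
  (hu' : u' 0 = u 1 ∧ u' 1 = u 3 ∨ u' 0 = u 3 ∧ u' 1 = u 1)
include hg hdeg htw hg' hw' hu'

theorem u_two_of_twisted (h2 : 2 < h') : u' 2 = u 2 ∧ w' 1 = w 2 ∨ u' 2 = u 0 ∧ w' 1 = w 0 := by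
  have hne : u' 2 ≠ u 1 ∧ u' 2 ≠ u 3 := by
    have h20 : u' 2 ≠ u' 0 := hg'.u_ne h2 (by omega) (by omega)
    have h21 : u' 2 ≠ u' 1 := hg'.u_ne h2 (by omega) (by omega)
    rcases hu' with ⟨e0, e1⟩ | ⟨e0, e1⟩
    · exact ⟨e0 ▸ h20, e1 ▸ h21⟩
    · exact ⟨e1 ▸ h21, e0 ▸ h20⟩
  have hadj : G.Adj (w' 1) (u' 2) := (hg'.succ_adj (i := 1) h2).symm
  rcases hw' with ⟨-, e⟩ | ⟨-, e⟩ <;> rw [e] at hadj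
  · rcases hg.eq_u_of_adj_w (i := 1) (hdeg _) (by norm_num) hadj with e' | e' | e'
    exacts [absurd e' hne.1, .inl ⟨e', e⟩, absurd e' hne.2]
  · rcases hg.eq_u_of_adj_w_zero_of_twisted (hdeg _) htw hadj with e' | e' | e'
    exacts [.inr ⟨e', e⟩, absurd e' hne.1, absurd e' hne.2]

theorem w_two_of_twisted (h2 : 2 < h') : w' 2 = w 3 ∧ u' 1 = u 3 ∨ w' 2 = w 1 ∧ u' 1 = u 1 := by
  have hne : w' 2 ≠ w 0 ∧ w' 2 ≠ w 2 := by
    have h20 : w' 2 ≠ w' 0 := hg'.w_ne h2 (by omega) (by omega)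
    have h21 : w' 2 ≠ w' 1 := hg'.w_ne h2 (by omega) (by omega)
    rcases hw' with ⟨e0, e1⟩ | ⟨e0, e1⟩
    · exact ⟨e0 ▸ h20, e1 ▸ h21⟩
    · exact ⟨e1 ▸ h21, e0 ▸ h20⟩
  have hadj : G.Adj (u' 1) (w' 2) := hg'.adj_succ (i := 1) h2
  rcases hu' with ⟨-, e⟩ | ⟨-, e⟩ <;> rw [e] at hadj
  · rcases hg.eq_w_of_adj_u_three_of_twisted (hdeg _) htw hadj with e' | e' | e'
    exacts [absurd e' hne.1, absurd e' hne.2, .inl ⟨e', e⟩]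
  · rcases hg.eq_w_of_adj_u (i := 0) (hdeg _) (by norm_num) hadj with e' | e' | e'
    exacts [absurd e' hne.1, .inr ⟨e', e⟩, absurd e' hne.2]

theorem height_le_three_of_twisted (hm : w 1 ∉ hgSet h' u' w' ∨ w 3 ∉ hgSet h' u' w') :
    h' ≤ 3 := by
  by_contra! hh'
  suffices w 1 ∈ hgSet h' u' w' ∧ w 3 ∈ hgSet h' u' w' by tauto
  have hmid : ∀ x, G.Adj (u' 2) x → x ∈ hgSet h' u' w' :=
    fun x hx => hg'.mem_of_adj_u (i := 1) (hdeg _) (by omega) hx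
  rcases hg.u_two_of_twisted hdeg htw hg' hw' hu' (by omega) with ⟨hu2, -⟩ | ⟨hu2, hw1⟩
  · exact ⟨hmid _ (hu2 ▸ hg.succ_adj (i := 1) (by norm_num)),
      hmid _ (hu2 ▸ hg.adj_succ (i := 2) (by norm_num))⟩
  rcases hg.w_two_of_twisted hdeg htw hg' hw' hu' (by omega) with ⟨hw2, -⟩ | ⟨hw2, hu1⟩
  · exact ⟨hmid _ (hu2 ▸ hg.adj_succ (i := 0) (by norm_num)), hw2 ▸ w_mem_hgSet (by omega)⟩
  -- here `H₂` runs through `u 3, u 1, u 0, u 2`, which forces `w' 3 = w 3`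
  have hw0 : w' 0 = w 2 := by
    rcases hw' with ⟨-, e⟩ | ⟨e, -⟩
    · exact absurd (hw1.symm.trans e) (hg.w_ne (by norm_num) (by norm_num) (by norm_num))
    · exact e
  have hu3 : u' 3 = u 2 := by
    have hne0 : u' 3 ≠ u 0 := hu2 ▸ hg'.u_ne (by omega) (by omega) (by omega)
    have hne1 : u' 3 ≠ u 1 := hu1 ▸ hg'.u_ne (by omega) (by omega) (by omega)
    exact ((hg.eq_u_of_adj_w (i := 0) (hdeg _) (by norm_num)
      (hw2 ▸ (hg'.succ_adj (i := 2) (by omega)).symm)).resolve_left hne0).resolve_left hne1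
  have hw3 : w' 3 = w 3 := by
    have hne1 : w' 3 ≠ w 1 := hw2 ▸ hg'.w_ne (by omega) (by omega) (by omega)
    have hne2 : w' 3 ≠ w 2 := hw0 ▸ hg'.w_ne (by omega) (by omega) (by omega)
    exact ((hg.eq_w_of_adj_u (i := 1) (hdeg _) (by norm_num)
      (hu3 ▸ hg'.adj (i := 3) (by omega))).resolve_left hne1).resolve_left hne2
  exact ⟨hw2 ▸ w_mem_hgSet (by omega), hw3 ▸ w_mem_hgSet (by omega)⟩

theorem hgSet_subset_of_twisted (hm : w 1 ∉ hgSet h' u' w' ∨ w 3 ∉ hgSet h' u' w') :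
    hgSet h' u' w' ⊆ hgSet 4 u w := by
  have hh' := hg.height_le_three_of_twisted hdeg htw hg' hw' hu' hm
  have hu'mem : ∀ j < h', u' j ∈ hgSet 4 u w := fun j hj => by
    have : j < 3 := by omega
    interval_cases j
    · rcases hu' with ⟨e, -⟩ | ⟨e, -⟩ <;> exact e ▸ u_mem_hgSet (by norm_num)
    · rcases hu' with ⟨-, e⟩ | ⟨-, e⟩ <;> exact e ▸ u_mem_hgSet (by norm_num)
    · rcases hg.u_two_of_twisted hdeg htw hg' hw' hu' hj with ⟨e, -⟩ | ⟨e, -⟩ <;>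
        exact e ▸ u_mem_hgSet (by norm_num)
  have hw'mem : ∀ j < h', w' j ∈ hgSet 4 u w := fun j hj => by
    have : j < 3 := by omega
    interval_cases j
    · rcases hw' with ⟨e, -⟩ | ⟨e, -⟩ <;> exact e ▸ w_mem_hgSet (by norm_num)
    · rcases hw' with ⟨-, e⟩ | ⟨-, e⟩ <;> exact e ▸ w_mem_hgSet (by norm_num)
    · rcases hg.w_two_of_twisted hdeg htw hg' hw' hu' hj with ⟨e, -⟩ | ⟨e, -⟩ <;>
        exact e ▸ w_mem_hgSet (by norm_num)
  rintro x ⟨j, hj, rfl | rfl⟩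
  exacts [hu'mem j hj, hw'mem j hj]

end

theorem w_mem_succ_of_u_mem_succ (hg : IsHourglass G h u w) (hdeg : ∀ v, G.degree v ≤ 3)
    (hmax : IsMaxHourglass G h' u' w') (hne : hgSet h u w ≠ hgSet h' u' w') {i : ℕ}
    (hi : i + 4 ≤ h) (hu : u (i + 1) ∈ hgSet h' u' w') : w (i + 1) ∈ hgSet h' u' w' := by
  by_contra hw
  have hnbrs : ∀ x, G.Adj (u (i + 1)) x → x ∈ hgSet h' u' w' → x = w i ∨ x = w (i + 2) :=
    fun x hx hxS => by
      rcases hg.eq_w_of_adj_u (hdeg _) (by omega) hx with e | e | e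
      · exact .inl e
      · exact absurd (e ▸ hxS) hw
      · exact .inr e
  obtain ⟨u'', w'', hg'', hS, hu0, hw01⟩ := hmax.1.exists_reindex_corner hu hnbrs
  have h2 := hg''.two_le
  have hadj := hg''.u_one_adj_of_w_pair hw01
  rcases hg.eq_of_adj_w_of_adj_w hdeg hi hadj.1 hadj.2 with e | ⟨rfl, rfl, e⟩
  · exact hg''.u_ne (by omega) (by omega) (by omega) (e.trans hu0.symm)
  · refine hne (hmax.eq_of_subset hg ?_).symm
    rw [← hS]
    exact hg.hgSet_subset_of_twisted hdeg (e ▸ hadj.1) hg'' hw01 (.inl ⟨hu0, e⟩) (.inl (hS ▸ hw))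

theorem w_mem_zero_of_u_mem_zero (hg : IsHourglass G h u w) (hdeg : ∀ v, G.degree v ≤ 3)
    (hmax : IsMaxHourglass G h' u' w') (hne : hgSet h u w ≠ hgSet h' u' w') (h4 : 4 ≤ h)
    (hu : u 0 ∈ hgSet h' u' w') : w 0 ∈ hgSet h' u' w' := by
  by_contra hw
  obtain ⟨y, hyS, hy, hy1⟩ := hmax.1.exists_adj_mem_ne hu (w 1)
  have hy0 : y ≠ w 0 := fun e => hw (e ▸ hyS)
  have hnbrs : ∀ x, G.Adj (u 0) x → x ∈ hgSet h' u' w' → x = w 1 ∨ x = y :=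
    fun x hx hxS => by
      rcases G.eq_or_eq_or_eq_of_degree_le_three (hdeg _) (hg.adj (i := 0) (by omega))
        (hg.adj_succ (i := 0) (by omega)) hy (hg.w_ne (by omega) (by omega) (by omega))
        hy0.symm hy1.symm hx with e | e | e
      · exact absurd (e ▸ hxS) hw
      · exact .inl e
      · exact .inr e
  obtain ⟨u'', w'', hg'', hS, hu0, hw01⟩ := hmax.1.exists_reindex_corner hu hnbrs
  have h2 := hg''.two_le
  have hadj := hg''.u_one_adj_of_w_pair hw01
  have hy2 : y ≠ w 2 := fun e => by
    have := hg.le_add_one_of_adj (j := 0) (k := 2) (by omega) (by omega) (by omega) (e ▸ hy)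
    omega
  rcases hg.eq_u_of_adj_w (i := 0) (hdeg _) (by omega) hadj.1.symm with e | e | e
  · exact hg''.u_ne (by omega) (by omega) (by omega) (e.trans hu0.symm)
  · rcases hg.eq_w_of_adj_u (i := 0) (hdeg _) (by omega) (e ▸ hadj.2) with e' | e' | e'
    exacts [hy0 e', hy1 e', hy2 e']
  have hy3 : y = w 3 := by
    rcases hg.eq_w_of_adj_u (i := 1) (hdeg _) (by omega) (e ▸ hadj.2) with e' | e' | e'
    exacts [absurd e' hy1, absurd e' hy2, e']
  subst hy3
  -- the extra edge `u 0 – w 3` becomes the twist `u 3 – w 0` of the reversed hourglass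
  obtain rfl : h = 4 := by
    by_contra hh
    have := hg.le_add_one_of_adj (j := 0) (k := 3) (by omega) (by omega) (by omega) hy
    omega
  refine hne (hmax.eq_of_subset hg ?_).symm
  rw [← hS, ← hgSet_reverse (u := u) (w := w)]
  exact hg.reverse.hgSet_subset_of_twisted hdeg hy hg'' hw01.symm (.inr ⟨hu0, e⟩) (.inr (hS ▸ hw))

theorem w_mem_of_u_mem (hg : IsHourglass G h u w) (hdeg : ∀ v, G.degree v ≤ 3)
    (hmax : IsMaxHourglass G h' u' w') (hne : hgSet h u w ≠ hgSet h' u' w') (h4 : 4 ≤ h)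
    {i : ℕ} (hi : i < h) (hu : u i ∈ hgSet h' u' w') : w i ∈ hgSet h' u' w' := by
  suffices key : ∀ {u w : ℕ → V}, IsHourglass G h u w → hgSet h u w ≠ hgSet h' u' w' →
      ∀ i, i + 3 ≤ h → u i ∈ hgSet h' u' w' → w i ∈ hgSet h' u' w' by
    by_cases hi3 : i + 3 ≤ h
    · exact key hg hne i hi3 hu
    · have e : h - 1 - (h - 1 - i) = i := by omega
      have := key hg.reverse (hgSet_reverse.symm ▸ hne) (h - 1 - i) (by omega)
        (by simpa only [e] using hu)
      simpa only [e] using this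
  intro u w hg hne i hi hu
  rcases i with _ | i
  · exact hg.w_mem_zero_of_u_mem_zero hdeg hmax hne h4 hu
  · exact hg.w_mem_succ_of_u_mem_succ hdeg hmax hne (by omega) hu

end IsHourglass

end Hourglass

/-- if `H₁` is a maximal hourglass of height at least four in a
graph of maximum degree three and `H₂` is any other maximal hourglass, then for
each layer `i` of `H₁`, `u₁ i ∈ V(H₂) ↔ w₁ i ∈ V(H₂)`. -/
theorem stmt_14 {V : Type*} [Fintype V] (G : SimpleGraph V) [DecidableRel G.Adj]
    (hdeg : ∀ v : V, G.degree v ≤ 3)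
    (h₁ h₂ : ℕ) (u₁ w₁ u₂ w₂ : ℕ → V)
    (hH₁ : IsMaxHourglass G h₁ u₁ w₁) (hH₂ : IsMaxHourglass G h₂ u₂ w₂)
    (hne : hgSet h₁ u₁ w₁ ≠ hgSet h₂ u₂ w₂)
    (h₁4 : 4 ≤ h₁) :
    ∀ i < h₁, (u₁ i ∈ hgSet h₂ u₂ w₂ ↔ w₁ i ∈ hgSet h₂ u₂ w₂) := by
  intro i hi
  have hne' : hgSet h₁ w₁ u₁ ≠ hgSet h₂ u₂ w₂ := hgSet_comm (u := u₁) ▸ hne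
  exact ⟨hH₁.1.w_mem_of_u_mem hdeg hH₂ hne h₁4 hi,
    hH₁.1.symm.w_mem_of_u_mem hdeg hH₂ hne' h₁4 hi⟩
end

section
/- Two distinct overlapping maximal hourglasses of height two in a graph of maximum degree three intersect in exactly three vertices: if H_1, H_2 are distinct maximal hourglasses with V(H_1) ∩ V(H_2) ≠ ∅ and H_1 has height two, then H_2 has height two and |V(H_1) ∩ V(H_2)| = 3. -/
section

variable {V : Type*}

lemma Set.four_rotate (a b c d : V) : ({a, b, c, d} : Set V) = {b, c, d, a} := by
  ext
  simp only [Set.mem_insert_iff, Set.mem_singleton_iff]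
  tauto

lemma Set.four_reverse (a b c d : V) : ({a, b, c, d} : Set V) = {a, d, c, b} := by
  ext
  simp only [Set.mem_insert_iff, Set.mem_singleton_iff]
  tauto

lemma Set.ncard_pair_le (a b : V) : ({a, b} : Set V).ncard ≤ 2 :=
  (Set.ncard_insert_le a {b}).trans (by rw [Set.ncard_singleton])

lemma Set.inter_nonempty_of_three_le_ncard_inter {A : Set V} {p q r s : V}
    (h : 3 ≤ (A ∩ {p, q, r, s}).ncard) : (A ∩ {r, s}).Nonempty := by
  by_contra hempty
  have hsub : A ∩ {p, q, r, s} ⊆ {p, q} := by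
    rintro x ⟨hxA, hx⟩
    simp only [Set.mem_insert_iff, Set.mem_singleton_iff] at hx ⊢
    rcases hx with rfl | rfl | rfl | rfl
    · exact Or.inl rfl
    · exact Or.inr rfl
    · exact (hempty ⟨x, hxA, by simp⟩).elim
    · exact (hempty ⟨x, hxA, by simp⟩).elim
  have := (Set.ncard_le_ncard hsub).trans (Set.ncard_pair_le p q)
  omega

lemma Set.subset_union_of_inter_subset_pair {A S T : Set V} {a b : V} (hA : A.ncard = 4)
    (hS : 3 ≤ (A ∩ S).ncard) (hT : 3 ≤ (A ∩ T).ncard) (hST : S ∩ T ⊆ {a, b}) :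
    A ⊆ S ∪ T := by
  have hAfin := Set.finite_of_ncard_pos (s := A) (by omega)
  have hcount := Set.ncard_union_add_ncard_inter (A ∩ S) (A ∩ T)
    (hAfin.subset Set.inter_subset_left) (hAfin.subset Set.inter_subset_left)
  have hcap : (A ∩ S ∩ (A ∩ T)).ncard ≤ 2 :=
    (Set.ncard_le_ncard (fun x hx => hST ⟨hx.1.2, hx.2.2⟩)).trans (Set.ncard_pair_le a b)
  have heq := Set.eq_of_subset_of_ncard_le
    (Set.union_subset (Set.inter_subset_left : A ∩ S ⊆ A) (Set.inter_subset_left : A ∩ T ⊆ A))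
    (by omega) hAfin
  rw [← heq, ← Set.inter_union_distrib_left]
  exact Set.inter_subset_right

namespace SimpleGraph

variable {G : SimpleGraph V}

lemma eq_or_eq_or_eq_of_degree_le_three_s15 {v x y z : V} [Fintype (G.neighborSet v)]
    (hv : G.degree v ≤ 3) (hxy : x ≠ y) (hxz : x ≠ z) (hyz : y ≠ z)
    (hx : G.Adj v x) (hy : G.Adj v y) (hz : G.Adj v z) ⦃t : V⦄ (ht : G.Adj v t) :
    t = x ∨ t = y ∨ t = z := by
  classical
  by_contra! htxyz
  obtain ⟨htx, hty, htz⟩ := htxyz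
  have hsub : ({t, x, y, z} : Finset V) ⊆ G.neighborFinset v := by
    intro a ha
    simp only [Finset.mem_insert, Finset.mem_singleton] at ha
    rcases ha with rfl | rfl | rfl | rfl <;> simpa
  have hcard := Finset.card_le_card hsub
  rw [card_neighborFinset_eq_degree, Finset.card_insert_of_notMem (by simp [htx, hty, htz]),
    Finset.card_insert_of_notMem (by simp [hxy, hxz]), Finset.card_pair hyz] at hcard
  omega

/-- The cycle `a - b - c - d - a`; the chords `ac`, `bd` may or may not be present. -/
structure IsFourCycle (G : SimpleGraph V) (a b c d : V) : Prop where
  adj_ab : G.Adj a b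
  adj_bc : G.Adj b c
  adj_cd : G.Adj c d
  adj_da : G.Adj d a
  ne_ac : a ≠ c
  ne_bd : b ≠ d

namespace IsFourCycle

variable {a b c d : V}

lemma rotate (h : G.IsFourCycle a b c d) : G.IsFourCycle b c d a :=
  ⟨h.adj_bc, h.adj_cd, h.adj_da, h.adj_ab, h.ne_bd, h.ne_ac.symm⟩

lemma reverse (h : G.IsFourCycle a b c d) : G.IsFourCycle a d c b :=
  ⟨h.adj_da.symm, h.adj_cd.symm, h.adj_bc.symm, h.adj_ab.symm, h.ne_ac, h.ne_bd.symm⟩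

lemma ncard_eq (h : G.IsFourCycle a b c d) : ({a, b, c, d} : Set V).ncard = 4 := by
  rw [Set.ncard_insert_of_notMem (by simp [h.adj_ab.ne, h.ne_ac, h.adj_da.ne.symm]),
    Set.ncard_insert_of_notMem (by simp [h.adj_bc.ne, h.ne_bd]), Set.ncard_pair h.adj_cd.ne]

lemma exists_of_mem (h : G.IsFourCycle a b c d) {x : V} (hx : x ∈ ({a, b, c, d} : Set V)) :
    ∃ b' c' d', G.IsFourCycle x b' c' d' ∧ ({a, b, c, d} : Set V) = {x, b', c', d'} := by
  simp only [Set.mem_insert_iff, Set.mem_singleton_iff] at hx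
  rcases hx with rfl | rfl | rfl | rfl
  · exact ⟨b, c, d, h, rfl⟩
  · exact ⟨c, d, a, h.rotate, Set.four_rotate ..⟩
  · exact ⟨d, a, b, h.rotate.rotate, (Set.four_rotate ..).trans (Set.four_rotate ..)⟩
  · exact ⟨a, b, c, h.rotate.rotate.rotate,
      ((Set.four_rotate ..).trans (Set.four_rotate ..)).trans (Set.four_rotate ..)⟩

lemma exists_of_eq_or_eq (h : G.IsFourCycle a b c d) {y : V} (hy : y = b ∨ y = d) :
    ∃ d', G.IsFourCycle a y c d' ∧ ({a, b, c, d} : Set V) = {a, y, c, d'} := by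
  rcases hy with rfl | rfl
  · exact ⟨d, h, rfl⟩
  · exact ⟨b, h.reverse, Set.four_reverse ..⟩

end IsFourCycle

end SimpleGraph

open SimpleGraph

section Hourglass

variable {G : SimpleGraph V} {h h' : ℕ} {u w u' w' : ℕ → V}

lemma hgSet_two (u w : ℕ → V) : hgSet 2 u w = {u 0, w 0, u 1, w 1} := by
  ext v
  simp only [hgSet, Set.mem_ofPred_eq, Set.mem_insert_iff, Set.mem_singleton_iff]
  constructor
  · rintro ⟨i, hi, hv⟩
    interval_cases i <;> tauto
  · rintro (rfl | rfl | rfl | rfl)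
    exacts [⟨0, two_pos, Or.inl rfl⟩, ⟨0, two_pos, Or.inr rfl⟩,
      ⟨1, one_lt_two, Or.inl rfl⟩, ⟨1, one_lt_two, Or.inr rfl⟩]

lemma pair_subset_hgSet {i : ℕ} (hi : i < h) : ({u i, w i} : Set V) ⊆ hgSet h u w := by
  rintro v (rfl | rfl)
  exacts [⟨i, hi, Or.inl rfl⟩, ⟨i, hi, Or.inr rfl⟩]

lemma four_subset_hgSet {i : ℕ} (hi : i + 1 < h) :
    ({u i, w i, u (i + 1), w (i + 1)} : Set V) ⊆ hgSet h u w := by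
  rw [Set.insert_subset_iff, Set.insert_subset_iff]
  exact ⟨⟨i, by omega, Or.inl rfl⟩, ⟨i, by omega, Or.inr rfl⟩, pair_subset_hgSet hi⟩

lemma isHourglass_three_of_isFourCycle {x₀ y₀ x₁ y₁ x₂ y₂ : V}
    (h₀ : G.IsFourCycle x₀ y₀ x₁ y₁) (h₁ : G.IsFourCycle x₁ y₁ x₂ y₂)
    (hx₀x₂ : x₀ ≠ x₂) (hx₀y₂ : x₀ ≠ y₂) (hy₀x₂ : y₀ ≠ x₂) (hy₀y₂ : y₀ ≠ y₂)
    (hx₁x₀ : ¬ G.Adj x₁ x₀) (hx₁x₂ : ¬ G.Adj x₁ x₂)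
    (hy₁y₀ : ¬ G.Adj y₁ y₀) (hy₁y₂ : ¬ G.Adj y₁ y₂) :
    IsHourglass G 3 (fun i => if i = 0 then x₀ else if i = 1 then x₁ else x₂)
      (fun i => if i = 0 then y₀ else if i = 1 then y₁ else y₂) := by
  have := h₀.adj_ab; have := h₀.adj_bc; have := h₀.adj_cd; have := h₀.adj_da
  have := h₁.adj_bc; have := h₁.adj_cd; have := h₁.adj_da
  have := h₀.ne_ac; have := h₀.ne_bd; have := h₁.ne_ac; have := h₁.ne_bd
  refine ⟨by norm_num, ?_, ?_, ?_, ?_, ?_, ?_⟩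
  · intro i hi j hj e
    simp only [Set.mem_Iio] at hi hj
    interval_cases i <;> interval_cases j <;> grind [Adj.ne]
  · intro i hi j hj e
    simp only [Set.mem_Iio] at hi hj
    interval_cases i <;> interval_cases j <;> grind [Adj.ne]
  · intro i hi j hj
    interval_cases i <;> interval_cases j <;> grind [Adj.ne]
  · intro i hi
    interval_cases i <;> grind
  · intro i hi
    have : i < 2 := by omega
    interval_cases i <;> grind [Adj.symm]
  · intro i hi₁ hi₂
    obtain rfl : i = 1 := by omega
    refine ⟨fun j _ _ => by omega, fun j hj => ?_, fun j _ _ => by omega, fun j hj => ?_⟩ <;>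
      interval_cases j <;> grind [Adj.symm, SimpleGraph.irrefl]

namespace IsHourglass

lemma isFourCycle (hH : IsHourglass G h u w) {i : ℕ} (hi : i + 1 < h) :
    G.IsFourCycle (u i) (w i) (u (i + 1)) (w (i + 1)) := by
  obtain ⟨-, hu, hw, -, hlayer, hcross, -⟩ := hH
  exact ⟨hlayer i (by omega), (hcross i hi).2.symm, hlayer (i + 1) hi, (hcross i hi).1.symm,
    fun e => by have := hu (by simp; omega) (by simp; omega) e; omega,
    fun e => by have := hw (by simp; omega) (by simp; omega) e; omega⟩

lemma disjoint_layers (hH : IsHourglass G h u w) {i j : ℕ} (hi : i < h) (hj : j < h)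
    (hij : i ≠ j) : Disjoint ({u i, w i} : Set V) {u j, w j} := by
  obtain ⟨-, hu, hw, hcross, -⟩ := hH
  have huu : u i ≠ u j := fun e => hij (hu hi hj e)
  have hww : w i ≠ w j := fun e => hij (hw hi hj e)
  simp [huu.symm, hww.symm, hcross j hj i hi, (hcross i hi j hj).symm]

lemma inter_subset_layer (hH : IsHourglass G h u w) {j : ℕ} (hj : j + 2 < h) :
    ({u j, w j, u (j + 1), w (j + 1)} : Set V) ∩ {u (j + 1), w (j + 1), u (j + 2), w (j + 2)} ⊆
      {u (j + 1), w (j + 1)} := by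
  rintro y ⟨hy₀, hy₂⟩
  by_contra hy
  have hdisj := hH.disjoint_layers (i := j) (j := j + 2) (by omega) hj (by omega)
  simp only [Set.mem_insert_iff, Set.mem_singleton_iff] at hy hy₀ hy₂
  exact Set.disjoint_left.mp hdisj (by simp; tauto) (by simp; tauto)

end IsHourglass

namespace IsMaxHourglass

lemma not_subset (hH : IsMaxHourglass G h u w) (hH' : IsHourglass G h' u' w')
    (hne : hgSet h u w ≠ hgSet h' u' w') : ¬ hgSet h u w ⊆ hgSet h' u' w' :=
  fun hsub => hH.2 ⟨h', u', w', hH', Set.ssubset_iff_subset_ne.mpr ⟨hsub, hne⟩⟩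

lemma ncard_hgSet (hH : IsMaxHourglass G 2 u w) : (hgSet 2 u w).ncard = 4 := by
  rw [hgSet_two]
  exact (hH.1.isFourCycle (i := 0) one_lt_two).ncard_eq

lemma ncard_inter_le_three (hH : IsMaxHourglass G 2 u w) (hH' : IsHourglass G h' u' w')
    (hne : hgSet 2 u w ≠ hgSet h' u' w') : (hgSet 2 u w ∩ hgSet h' u' w').ncard ≤ 3 := by
  by_contra! h4
  have hA := hH.ncard_hgSet
  have heq := Set.eq_of_subset_of_ncard_le
    (Set.inter_subset_left : hgSet 2 u w ∩ hgSet h' u' w' ⊆ _) (by omega)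
    (Set.finite_of_ncard_pos (by omega))
  exact hH.not_subset hH' hne (Set.inter_eq_left.mp heq)

variable [G.LocallyFinite]

lemma false_of_isFourCycle_of_notMem (hdeg : ∀ v, G.degree v ≤ 3)
    (hH : IsMaxHourglass G 2 u w) {a b c d r s : V} (hA : G.IsFourCycle a b c d)
    (hset : hgSet 2 u w = {a, b, c, d}) (hB : G.IsFourCycle a b r s)
    (hr : r ∉ hgSet 2 u w) (hs : s ∉ hgSet 2 u w) : False := by
  rw [hset] at hr hs
  simp only [Set.mem_insert_iff, Set.mem_singleton_iff, not_or] at hr hs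
  obtain ⟨hra, hrb, hrc, hrd⟩ := hr
  obtain ⟨hsa, hsb, hsc, hsd⟩ := hs
  have hNa := eq_or_eq_or_eq_of_degree_le_three_s15 (hdeg a) hA.ne_bd (Ne.symm hsb) (Ne.symm hsd)
    hA.adj_ab hA.adj_da.symm hB.adj_da.symm
  have hNb := eq_or_eq_or_eq_of_degree_le_three_s15 (hdeg b) hA.ne_ac (Ne.symm hra) (Ne.symm hrc)
    hA.adj_ab.symm hA.adj_bc hB.adj_bc
  -- The two 4-cycles glue to the hourglass with layers `(c, d), (a, b), (r, s)`; it is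
  -- induced because `a` and `b` have no neighbours besides those on the 4-cycles.
  have hac : ¬ G.Adj a c := fun hac => by
    rcases hNa hac with e | e | e
    exacts [hA.adj_bc.ne e.symm, hA.adj_cd.ne e, hsc e.symm]
  have har : ¬ G.Adj a r := fun har => by
    rcases hNa har with e | e | e
    exacts [hB.adj_bc.ne e.symm, hrd e, hB.adj_cd.ne e]
  have hbd : ¬ G.Adj b d := fun hbd => by
    rcases hNb hbd with e | e | e
    exacts [hA.adj_da.ne e, hA.adj_cd.ne e.symm, hrd e.symm]
  have hbs : ¬ G.Adj b s := fun hbs => by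
    rcases hNb hbs with e | e | e
    exacts [hsa e, hsc e, hB.adj_cd.ne e.symm]
  have hH₃ := isHourglass_three_of_isFourCycle hA.rotate.rotate hB (Ne.symm hrc) (Ne.symm hsc)
    (Ne.symm hrd) (Ne.symm hsd) hac har hbd hbs
  refine hH.2 ⟨3, _, _, hH₃, (Set.ssubset_iff_of_subset ?_).mpr ⟨r, ⟨2, by norm_num, by simp⟩, ?_⟩⟩
  · rw [hset]
    rintro v (rfl | rfl | rfl | rfl)
    exacts [⟨1, by norm_num, by simp⟩, ⟨1, by norm_num, by simp⟩, ⟨0, by norm_num, by simp⟩,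
      ⟨0, by norm_num, by simp⟩]
  · simp [hset, hra, hrb, hrc, hrd]

lemma three_le_ncard_inter_of_adj (hdeg : ∀ v, G.degree v ≤ 3)
    (hH : IsMaxHourglass G 2 u w) {a b c d r s : V} (hA : G.IsFourCycle a b c d)
    (hset : hgSet 2 u w = {a, b, c, d}) (hB : G.IsFourCycle a b r s) :
    3 ≤ (hgSet 2 u w ∩ {a, b, r, s}).ncard := by
  by_contra! h3
  have hmem (x : V) (hx : x ∈ ({a, b, r, s} : Set V)) (hxa : x ≠ a) (hxb : x ≠ b) :
      x ∉ hgSet 2 u w := fun hxA => by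
    have := (Set.two_lt_ncard_iff (s := hgSet 2 u w ∩ {a, b, r, s}) (Set.toFinite _)).mpr
      ⟨a, b, x, ⟨by simp [hset], by simp⟩, ⟨by simp [hset], by simp⟩, ⟨hxA, hx⟩,
        hA.adj_ab.ne, hxa.symm, hxb.symm⟩
    omega
  exact hH.false_of_isFourCycle_of_notMem hdeg hA hset hB
    (hmem r (by simp) hB.ne_ac.symm hB.adj_bc.ne.symm)
    (hmem s (by simp) hB.adj_da.ne hB.ne_bd.symm)

lemma three_le_ncard_inter_of_mem (hdeg : ∀ v, G.degree v ≤ 3)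
    (hH : IsMaxHourglass G 2 u w) {a b c d q r s : V} (hA : G.IsFourCycle a b c d)
    (hset : hgSet 2 u w = {a, b, c, d}) (hB : G.IsFourCycle a q r s) :
    3 ≤ (hgSet 2 u w ∩ {a, q, r, s}).ncard := by
  obtain ⟨y, hyB, hyA⟩ : ∃ y, (y = q ∨ y = s) ∧ (y = b ∨ y = d) := by
    by_cases hq : q = b ∨ q = d
    · exact ⟨q, Or.inl rfl, hq⟩
    rw [not_or] at hq
    rcases eq_or_eq_or_eq_of_degree_le_three_s15 (hdeg a) hA.ne_bd (Ne.symm hq.1) (Ne.symm hq.2)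
      hA.adj_ab hA.adj_da.symm hB.adj_ab hB.adj_da.symm with e | e | e
    exacts [⟨s, Or.inr rfl, Or.inl e⟩, ⟨s, Or.inr rfl, Or.inr e⟩, (hB.ne_bd e.symm).elim]
  obtain ⟨d', hA', hsetA⟩ := hA.exists_of_eq_or_eq hyA
  obtain ⟨s', hB', hsetB⟩ := hB.exists_of_eq_or_eq hyB
  rw [hsetB]
  exact hH.three_le_ncard_inter_of_adj hdeg hA' (hset.trans hsetA) hB'

lemma three_le_ncard_inter (hdeg : ∀ v, G.degree v ≤ 3)
    (hH : IsMaxHourglass G 2 u w) {p q r s : V} (hB : G.IsFourCycle p q r s)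
    (hmeet : (hgSet 2 u w ∩ {p, q, r, s}).Nonempty) :
    3 ≤ (hgSet 2 u w ∩ {p, q, r, s}).ncard := by
  obtain ⟨x, hxA, hxB⟩ := hmeet
  have hA : G.IsFourCycle (u 0) (w 0) (u 1) (w 1) := hH.1.isFourCycle (i := 0) one_lt_two
  rw [hgSet_two] at hxA
  obtain ⟨b, c, d, hA', hsetA⟩ := hA.exists_of_mem hxA
  obtain ⟨q', r', s', hB', hsetB⟩ := hB.exists_of_mem hxB
  rw [hsetB]
  exact hH.three_le_ncard_inter_of_mem hdeg hA' ((hgSet_two u w).trans hsetA) hB'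

lemma subset_of_mem_middle (hdeg : ∀ v, G.degree v ≤ 3) (hH : IsMaxHourglass G 2 u w)
    (hH' : IsHourglass G h u' w') {j : ℕ} (hj : j + 2 < h) {x : V} (hxA : x ∈ hgSet 2 u w)
    (hx : x ∈ ({u' (j + 1), w' (j + 1)} : Set V)) : hgSet 2 u w ⊆ hgSet h u' w' := by
  have h₀ := hH.three_le_ncard_inter hdeg (hH'.isFourCycle (i := j) (by omega))
    ⟨x, hxA, by rcases hx with rfl | rfl <;> simp⟩
  have h₁ := hH.three_le_ncard_inter hdeg (hH'.isFourCycle (i := j + 1) (by omega))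
    ⟨x, hxA, by rcases hx with rfl | rfl <;> simp⟩
  have hsub := Set.subset_union_of_inter_subset_pair hH.ncard_hgSet h₀ h₁
    (hH'.inter_subset_layer hj)
  exact hsub.trans (Set.union_subset (four_subset_hgSet (by omega)) (four_subset_hgSet (by omega)))

lemma eq_two_of_inter_nonempty (hdeg : ∀ v, G.degree v ≤ 3) (hH : IsMaxHourglass G 2 u w)
    (hH' : IsHourglass G h u' w') (hne : hgSet 2 u w ≠ hgSet h u' w')
    (hmeet : (hgSet 2 u w ∩ hgSet h u' w').Nonempty) : h = 2 := by
  by_contra hh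
  obtain ⟨k, rfl⟩ : ∃ k, h = k + 3 := ⟨h - 3, by have := hH'.1; omega⟩
  obtain ⟨x, hxA, i, hi, hx⟩ := hmeet
  obtain ⟨j, hj, y, hyA, hy⟩ :
      ∃ j, j + 2 < k + 3 ∧ ∃ y ∈ hgSet 2 u w, y ∈ ({u' (j + 1), w' (j + 1)} : Set V) := by
    cases i with
    | zero =>
      obtain ⟨y, hyA, hy⟩ := Set.inter_nonempty_of_three_le_ncard_inter
        (hH.three_le_ncard_inter hdeg (hH'.isFourCycle (i := 0) (by omega))
          ⟨x, hxA, by rcases hx with rfl | rfl <;> simp⟩)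
      exact ⟨0, by omega, y, hyA, hy⟩
    | succ j =>
      by_cases hjk : j = k + 1
      · subst hjk
        have h₃ := hH.three_le_ncard_inter hdeg (hH'.isFourCycle (i := k + 1) (by omega))
          ⟨x, hxA, by rcases hx with rfl | rfl <;> simp⟩
        rw [Set.four_rotate, Set.four_rotate] at h₃
        obtain ⟨y, hyA, hy⟩ := Set.inter_nonempty_of_three_le_ncard_inter h₃
        exact ⟨k, by omega, y, hyA, hy⟩
      · exact ⟨j, by omega, x, hxA, hx⟩
  exact hH.not_subset hH' hne (hH.subset_of_mem_middle hdeg hH' hj hyA hy)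

end IsMaxHourglass

end Hourglass

end

/-- two distinct overlapping maximal hourglasses, one of which has
height two, in a graph of maximum degree three, both have height two and
intersect in exactly three vertices. -/
theorem stmt_15 {V : Type*} [Fintype V] (G : SimpleGraph V) [DecidableRel G.Adj]
    (hdeg : ∀ v : V, G.degree v ≤ 3)
    (h₂ : ℕ) (u₁ w₁ u₂ w₂ : ℕ → V)
    (hH₁ : IsMaxHourglass G 2 u₁ w₁) (hH₂ : IsMaxHourglass G h₂ u₂ w₂)
    (hne : hgSet 2 u₁ w₁ ≠ hgSet h₂ u₂ w₂)
    (hInter : (hgSet 2 u₁ w₁ ∩ hgSet h₂ u₂ w₂).Nonempty) :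
    h₂ = 2 ∧ (hgSet 2 u₁ w₁ ∩ hgSet h₂ u₂ w₂).ncard = 3 := by
  have hh₂ : h₂ = 2 := hH₁.eq_two_of_inter_nonempty hdeg hH₂.1 hne hInter
  subst hh₂
  refine ⟨rfl, le_antisymm (hH₁.ncard_inter_le_three hH₂.1 hne) ?_⟩
  rw [hgSet_two u₂ w₂] at hInter ⊢
  exact hH₁.three_le_ncard_inter hdeg (hH₂.1.isFourCycle (i := 0) one_lt_two) hInter
end

section
/- Two distinct overlapping maximal hourglasses of height three in a graph of maximum degree three intersect in exactly five vertices: if H_1, H_2 are distinct maximal hourglasses with V(H_1) ∩ V(H_2) ≠ ∅ and H_1 has height three, then H_2 has height three and |V(H_1) ∩ V(H_2)| = 5. -/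
namespace HGaux
set_option linter.unusedSectionVars false

variable {V : Type*} [Fintype V] {G : SimpleGraph V} [DecidableRel G.Adj]

lemma mem_hg {h : ℕ} {u w : ℕ → V} {v : V} :
    v ∈ hgSet h u w ↔ ∃ i, i < h ∧ (v = u i ∨ v = w i) := Iff.rfl

lemma memc {h : ℕ} {u w : ℕ → V} {i : ℕ} (hi : i < h) : u i ∈ hgSet h u w :=
  ⟨i, hi, Or.inl rfl⟩

lemma memw {h : ℕ} {u w : ℕ → V} {i : ℕ} (hi : i < h) : w i ∈ hgSet h u w :=
  ⟨i, hi, Or.inr rfl⟩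

/-- a vertex with three distinct neighbours has no others (max degree 3) -/
lemma adj_out (hdeg : ∀ v : V, G.degree v ≤ 3) {v x y z t : V}
    (hxy : x ≠ y) (hxz : x ≠ z) (hyz : y ≠ z)
    (hx : G.Adj v x) (hy : G.Adj v y) (hz : G.Adj v z) (ht : G.Adj v t) :
    t = x ∨ t = y ∨ t = z := by
  classical
  by_contra hc
  push_neg at hc
  obtain ⟨htx, hty, htz⟩ := hc
  have hsub : ({x, y, z, t} : Finset V) ⊆ G.neighborFinset v := by
    intro s hs
    simp only [Finset.mem_insert, Finset.mem_singleton] at hs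
    rw [SimpleGraph.mem_neighborFinset]
    rcases hs with rfl | rfl | rfl | rfl <;> assumption
  have hcard : ({x, y, z, t} : Finset V).card = 4 := by
    rw [Finset.card_insert_of_notMem (by simp [hxy, hxz, Ne.symm htx]),
      Finset.card_insert_of_notMem (by simp [hyz, Ne.symm hty]),
      Finset.card_insert_of_notMem (by simp [Ne.symm htz]),
      Finset.card_singleton]
  have h4 := Finset.card_le_card hsub
  rw [hcard, SimpleGraph.card_neighborFinset_eq_degree] at h4
  have := hdeg v
  omega

/-- a vertex with two distinct neighbours has at most one further neighbour -/
lemma adj_two (hdeg : ∀ v : V, G.degree v ≤ 3) {v x y s t : V}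
    (hxy : x ≠ y) (hx : G.Adj v x) (hy : G.Adj v y) (hs : G.Adj v s) (ht : G.Adj v t)
    (hsx : s ≠ x) (hsy : s ≠ y) (htx : t ≠ x) (hty : t ≠ y) : s = t := by
  rcases adj_out hdeg hxy (Ne.symm hsx) (Ne.symm hsy) hx hy hs ht with hh | hh | hh
  · exact absurd hh htx
  · exact absurd hh hty
  · exact hh.symm

section basic

variable {h : ℕ} {c d : ℕ → V}

lemma hglay (hg : IsHourglass G h c d) {i : ℕ} (hi : i < h) : G.Adj (c i) (d i) :=
  hg.2.2.2.2.1 i hi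

lemma hgcr1 (hg : IsHourglass G h c d) {i : ℕ} (hi : i + 1 < h) : G.Adj (c i) (d (i + 1)) :=
  (hg.2.2.2.2.2.1 i hi).1

lemma hgcr2 (hg : IsHourglass G h c d) {i : ℕ} (hi : i + 1 < h) : G.Adj (c (i + 1)) (d i) :=
  (hg.2.2.2.2.2.1 i hi).2

lemma hgcc (hg : IsHourglass G h c d) {i j : ℕ} (hi : i < h) (hj : j < h) (hij : i ≠ j) :
    c i ≠ c j := fun e => hij (hg.2.1 (Set.mem_Iio.mpr hi) (Set.mem_Iio.mpr hj) e)

lemma hgdd (hg : IsHourglass G h c d) {i j : ℕ} (hi : i < h) (hj : j < h) (hij : i ≠ j) :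
    d i ≠ d j := fun e => hij (hg.2.2.1 (Set.mem_Iio.mpr hi) (Set.mem_Iio.mpr hj) e)

lemma hgcd (hg : IsHourglass G h c d) {i j : ℕ} (hi : i < h) (hj : j < h) : c i ≠ d j :=
  hg.2.2.2.1 i hi j hj

lemma hg_swap (hg : IsHourglass G h c d) : IsHourglass G h d c := by
  obtain ⟨h2, injc, injd, hcd, hlay, hcr, hmid⟩ := hg
  refine ⟨h2, injd, injc, fun i hi j hj e => (hcd j hj i hi) e.symm,
    fun i hi => (hlay i hi).symm,
    fun i hi => ⟨((hcr i hi).2).symm, ((hcr i hi).1).symm⟩, fun i h1 h2 => ?_⟩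
  obtain ⟨m1, m2, m3, m4⟩ := hmid i h1 h2
  exact ⟨m3, m4, m1, m2⟩

lemma hgSet_swap {h : ℕ} {c d : ℕ → V} : hgSet h d c = hgSet h c d := by
  ext x
  constructor <;> rintro ⟨i, hi, hx | hx⟩
  · exact ⟨i, hi, Or.inr hx⟩
  · exact ⟨i, hi, Or.inl hx⟩
  · exact ⟨i, hi, Or.inr hx⟩
  · exact ⟨i, hi, Or.inl hx⟩

/-- build an hourglass from edges and distinctness alone (max degree 3) -/
lemma hg_mk (hdeg : ∀ v : V, G.degree v ≤ 3) (h2 : 2 ≤ h)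
    (injc : Set.InjOn c (Set.Iio h)) (injd : Set.InjOn d (Set.Iio h))
    (hcd : ∀ i < h, ∀ j < h, c i ≠ d j)
    (hlay : ∀ i < h, G.Adj (c i) (d i))
    (hcr : ∀ i, i + 1 < h → G.Adj (c i) (d (i + 1)) ∧ G.Adj (c (i + 1)) (d i)) :
    IsHourglass G h c d := by
  refine ⟨h2, injc, injd, hcd, hlay, hcr, ?_⟩
  intro i hi1 hi2
  have hii : i < h := by omega
  have him : i - 1 < h := by omega
  have hip : i + 1 < h := hi2
  have e1 : G.Adj (c i) (d (i - 1)) := by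
    have := (hcr (i - 1) (by omega)).2
    rwa [show i - 1 + 1 = i from by omega] at this
  have e2 : G.Adj (c i) (d i) := hlay i hii
  have e3 : G.Adj (c i) (d (i + 1)) := hcr i hi2 |>.1
  have f1 : G.Adj (d i) (c (i - 1)) := by
    have := (hcr (i - 1) (by omega)).1
    rw [show i - 1 + 1 = i from by omega] at this
    exact this.symm
  have f2 : G.Adj (d i) (c i) := (hlay i hii).symm
  have f3 : G.Adj (d i) (c (i + 1)) := (hcr i hi2).2.symm
  have dmm : d (i - 1) ≠ d i := fun e => by
    have := injd (Set.mem_Iio.mpr him) (Set.mem_Iio.mpr hii) e; omega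
  have dmp : d (i - 1) ≠ d (i + 1) := fun e => by
    have := injd (Set.mem_Iio.mpr him) (Set.mem_Iio.mpr hip) e; omega
  have dpp : d i ≠ d (i + 1) := fun e => by
    have := injd (Set.mem_Iio.mpr hii) (Set.mem_Iio.mpr hip) e; omega
  have cmm : c (i - 1) ≠ c i := fun e => by
    have := injc (Set.mem_Iio.mpr him) (Set.mem_Iio.mpr hii) e; omega
  have cmp : c (i - 1) ≠ c (i + 1) := fun e => by
    have := injc (Set.mem_Iio.mpr him) (Set.mem_Iio.mpr hip) e; omega
  have cpp : c i ≠ c (i + 1) := fun e => by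
    have := injc (Set.mem_Iio.mpr hii) (Set.mem_Iio.mpr hip) e; omega
  have nd : ∀ t, G.Adj (c i) t → t = d (i - 1) ∨ t = d i ∨ t = d (i + 1) :=
    fun t ht => adj_out hdeg dmm dmp dpp e1 e2 e3 ht
  have nc : ∀ t, G.Adj (d i) t → t = c (i - 1) ∨ t = c i ∨ t = c (i + 1) :=
    fun t ht => adj_out hdeg cmm cmp cpp f1 f2 f3 ht
  refine ⟨?_, ?_, ?_, ?_⟩
  · intro j hj hadj
    rcases nd _ hadj with hh | hh | hh
    · left
      have := injd (Set.mem_Iio.mpr hj) (Set.mem_Iio.mpr him) hh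
      omega
    · right; left
      exact injd (Set.mem_Iio.mpr hj) (Set.mem_Iio.mpr hii) hh
    · right; right
      exact injd (Set.mem_Iio.mpr hj) (Set.mem_Iio.mpr hip) hh
  · intro j hj hadj
    rcases nd _ hadj with hh | hh | hh
    · exact hcd j hj (i - 1) him hh
    · exact hcd j hj i hii hh
    · exact hcd j hj (i + 1) hip hh
  · intro j hj hadj
    rcases nc _ hadj with hh | hh | hh
    · left
      have := injc (Set.mem_Iio.mpr hj) (Set.mem_Iio.mpr him) hh
      omega
    · right; left
      exact injc (Set.mem_Iio.mpr hj) (Set.mem_Iio.mpr hii) hh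
    · right; right
      exact injc (Set.mem_Iio.mpr hj) (Set.mem_Iio.mpr hip) hh
  · intro j hj hadj
    rcases nc _ hadj with hh | hh | hh
    · exact hcd (i - 1) him j hj hh.symm
    · exact hcd i hii j hj hh.symm
    · exact hcd (i + 1) hip j hj hh.symm

lemma hg_rev (hdeg : ∀ v : V, G.degree v ≤ 3) (hg : IsHourglass G h c d) :
    IsHourglass G h (fun i => c (h - 1 - i)) (fun i => d (h - 1 - i)) := by
  obtain ⟨h2, injc, injd, hcd, hlay, hcr, -⟩ := hg
  refine hg_mk hdeg h2 ?_ ?_ ?_ ?_ ?_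
  · intro i hi j hj e
    have := injc (Set.mem_Iio.mpr (show h - 1 - i < h by simp at hi ⊢; omega))
      (Set.mem_Iio.mpr (show h - 1 - j < h by simp at hj ⊢; omega)) e
    simp at hi hj; omega
  · intro i hi j hj e
    have := injd (Set.mem_Iio.mpr (show h - 1 - i < h by simp at hi ⊢; omega))
      (Set.mem_Iio.mpr (show h - 1 - j < h by simp at hj ⊢; omega)) e
    simp at hi hj; omega
  · intro i hi j hj
    exact hcd _ (by omega) _ (by omega)
  · intro i hi
    exact hlay _ (by omega)
  · intro i hi
    have e1 : h - 1 - (i + 1) + 1 = h - 1 - i := by omega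
    constructor
    · have := (hcr (h - 1 - (i + 1)) (by omega)).2
      rwa [e1] at this
    · have := (hcr (h - 1 - (i + 1)) (by omega)).1
      rwa [e1] at this

lemma hgSet_rev {h : ℕ} {c d : ℕ → V} (hh : 1 ≤ h) :
    hgSet h (fun i => c (h - 1 - i)) (fun i => d (h - 1 - i)) = hgSet h c d := by
  ext x
  constructor <;> rintro ⟨i, hi, hx | hx⟩
  · exact ⟨h - 1 - i, by omega, Or.inl hx⟩
  · exact ⟨h - 1 - i, by omega, Or.inr hx⟩
  · exact ⟨h - 1 - i, by omega, Or.inl (by simp only []; rw [show h - 1 - (h - 1 - i) = i from by omega]; exact hx)⟩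
  · exact ⟨h - 1 - i, by omega, Or.inr (by simp only []; rw [show h - 1 - (h - 1 - i) = i from by omega]; exact hx)⟩

lemma max_congr {h : ℕ} {c d c' d' : ℕ → V} (hg' : IsHourglass G h c' d')
    (hset : hgSet h c' d' = hgSet h c d) (hmax : IsMaxHourglass G h c d) :
    IsMaxHourglass G h c' d' := by
  refine ⟨hg', fun ⟨h', u', w', hgu, hsub⟩ => hmax.2 ⟨h', u', w', hgu, hset ▸ hsub⟩⟩

/-- maximality contradiction -/
lemma max_absurd {n m : ℕ} {p q s t : ℕ → V} (hmax : IsMaxHourglass G n p q)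
    (hg' : IsHourglass G m s t) (hsub : hgSet n p q ⊆ hgSet m s t)
    (hne : hgSet n p q ≠ hgSet m s t) : False :=
  hmax.2 ⟨m, s, t, hg', Set.ssubset_iff_subset_ne.mpr ⟨hsub, hne⟩⟩

end basic

end HGaux

namespace HGaux

set_option linter.unusedSectionVars false
set_option linter.unusedVariables false

variable {V : Type*} [Fintype V] {G : SimpleGraph V} [DecidableRel G.Adj]

section mids

variable {h : ℕ} {c d : ℕ → V}

/-- the exact neighbourhood of a middle `c`-vertex -/
lemma mid_c (hdeg : ∀ v : V, G.degree v ≤ 3) (hg : IsHourglass G h c d) {i : ℕ}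
    (h1 : 1 ≤ i) (h2 : i + 1 < h) :
    ∀ t, G.Adj (c i) t → t = d (i - 1) ∨ t = d i ∨ t = d (i + 1) := by
  intro t ht
  have e1 : G.Adj (c i) (d (i - 1)) := by
    have := hgcr2 hg (show i - 1 + 1 < h by omega)
    rwa [show i - 1 + 1 = i from by omega] at this
  have e2 : G.Adj (c i) (d i) := hglay hg (by omega)
  have e3 : G.Adj (c i) (d (i + 1)) := hgcr1 hg h2
  exact adj_out hdeg (hgdd hg (by omega) (by omega) (by omega))
    (hgdd hg (by omega) (by omega) (by omega)) (hgdd hg (by omega) (by omega) (by omega))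
    e1 e2 e3 ht

lemma mid_d (hdeg : ∀ v : V, G.degree v ≤ 3) (hg : IsHourglass G h c d) {i : ℕ}
    (h1 : 1 ≤ i) (h2 : i + 1 < h) :
    ∀ t, G.Adj (d i) t → t = c (i - 1) ∨ t = c i ∨ t = c (i + 1) := by
  have := mid_c hdeg (hg_swap hg) h1 h2
  intro t ht
  exact this t ht

/-- every hourglass vertex has two distinct neighbours inside the hourglass -/
lemma two_nbrs (hg : IsHourglass G h c d) {x : V} (hx : x ∈ hgSet h c d) :
    ∃ p q, p ≠ q ∧ p ∈ hgSet h c d ∧ q ∈ hgSet h c d ∧ G.Adj x p ∧ G.Adj x q := by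
  have h2 := hg.1
  obtain ⟨i, hi, hx | hx⟩ := hx
  · by_cases hip : i + 1 < h
    · exact ⟨d i, d (i + 1), hgdd hg (by omega) (by omega) (by omega), memw (by omega),
        memw (by omega), hx ▸ hglay hg hi, hx ▸ hgcr1 hg hip⟩
    · have hi1 : 1 ≤ i := by omega
      have e : G.Adj (c i) (d (i - 1)) := by
        have := hgcr2 hg (show i - 1 + 1 < h by omega)
        rwa [show i - 1 + 1 = i from by omega] at this
      exact ⟨d (i - 1), d i, hgdd hg (by omega) (by omega) (by omega), memw (by omega),
        memw (by omega), hx ▸ e, hx ▸ hglay hg hi⟩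
  · by_cases hip : i + 1 < h
    · exact ⟨c i, c (i + 1), hgcc hg (by omega) (by omega) (by omega), memc (by omega),
        memc (by omega), hx ▸ (hglay hg hi).symm, hx ▸ (hgcr2 hg hip).symm⟩
    · have hi1 : 1 ≤ i := by omega
      have e : G.Adj (d i) (c (i - 1)) := by
        have := hgcr1 hg (show i - 1 + 1 < h by omega)
        rw [show i - 1 + 1 = i from by omega] at this
        exact this.symm
      exact ⟨c (i - 1), c i, hgcc hg (by omega) (by omega) (by omega), memc (by omega),
        memc (by omega), hx ▸ e, hx ▸ (hglay hg hi).symm⟩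

/-- adding a new layer in front contradicts maximality -/
lemma prepend_absurd (hdeg : ∀ v : V, G.degree v ≤ 3) (hmax : IsMaxHourglass G h c d)
    {e f : V} (hef : G.Adj e f) (hed : G.Adj e (d 0)) (hcf : G.Adj (c 0) f)
    (he : e ∉ hgSet h c d) (hf : f ∉ hgSet h c d) : False := by
  obtain ⟨hg, hmax2⟩ := hmax
  have h2 := hg.1
  set c' : ℕ → V := fun i => if i = 0 then e else c (i - 1) with hc'
  set d' : ℕ → V := fun i => if i = 0 then f else d (i - 1) with hd'
  have hc'0 : c' 0 = e := rfl
  have hd'0 : d' 0 = f := rfl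
  have hc's : ∀ i, c' (i + 1) = c i := fun i => by simp [hc']
  have hd's : ∀ i, d' (i + 1) = d i := fun i => by simp [hd']
  have hg' : IsHourglass G (h + 1) c' d' := by
    apply hg_mk hdeg (by omega)
    · intro i hi j hj heq
      simp only [Set.mem_Iio] at hi hj
      rcases Nat.eq_zero_or_pos i with rfl | hi0 <;> rcases Nat.eq_zero_or_pos j with rfl | hj0
      · rfl
      · rw [hc'0, show j = (j-1)+1 by omega, hc's] at heq
        exact absurd (heq ▸ memc (show j - 1 < h by omega)) he
      · rw [hc'0, show i = (i-1)+1 by omega, hc's] at heq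
        exact absurd (heq.symm ▸ memc (show i - 1 < h by omega)) he
      · rw [show i = (i-1)+1 by omega, hc's, show j = (j-1)+1 by omega, hc's] at heq
        have := hg.2.1 (Set.mem_Iio.mpr (show i - 1 < h by omega))
          (Set.mem_Iio.mpr (show j - 1 < h by omega)) heq
        omega
    · intro i hi j hj heq
      simp only [Set.mem_Iio] at hi hj
      rcases Nat.eq_zero_or_pos i with rfl | hi0 <;> rcases Nat.eq_zero_or_pos j with rfl | hj0
      · rfl
      · rw [hd'0, show j = (j-1)+1 by omega, hd's] at heq
        exact absurd (heq ▸ memw (show j - 1 < h by omega)) hf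
      · rw [hd'0, show i = (i-1)+1 by omega, hd's] at heq
        exact absurd (heq.symm ▸ memw (show i - 1 < h by omega)) hf
      · rw [show i = (i-1)+1 by omega, hd's, show j = (j-1)+1 by omega, hd's] at heq
        have := hg.2.2.1 (Set.mem_Iio.mpr (show i - 1 < h by omega))
          (Set.mem_Iio.mpr (show j - 1 < h by omega)) heq
        omega
    · intro i hi j hj
      rcases Nat.eq_zero_or_pos i with rfl | hi0 <;> rcases Nat.eq_zero_or_pos j with rfl | hj0
      · rw [hc'0, hd'0]; exact hef.ne
      · rw [hc'0, show j = (j-1)+1 by omega, hd's]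
        exact fun heq => he (heq ▸ memw (show j - 1 < h by omega))
      · rw [hd'0, show i = (i-1)+1 by omega, hc's]
        exact fun heq => hf (heq ▸ memc (show i - 1 < h by omega))
      · rw [show i = (i-1)+1 by omega, hc's, show j = (j-1)+1 by omega, hd's]
        exact hgcd hg (by omega) (by omega)
    · intro i hi
      rcases Nat.eq_zero_or_pos i with rfl | hi0
      · exact hef
      · rw [show i = (i-1)+1 by omega, hc's, hd's]
        exact hglay hg (by omega)
    · intro i hi
      rcases Nat.eq_zero_or_pos i with rfl | hi0
      · rw [hc'0, hd'0, show (0:ℕ)+1 = 0+1 from rfl, hc's, hd's]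
        exact ⟨hed, hcf⟩
      · rw [show i = (i-1)+1 by omega, hc's, hd's, hc's, hd's]
        exact ⟨hgcr1 hg (by omega), hgcr2 hg (by omega)⟩
  apply hmax2
  refine ⟨h + 1, c', d', hg', ?_⟩
  rw [Set.ssubset_iff_subset_ne]
  constructor
  · rintro x ⟨i, hi, hx | hx⟩
    · exact ⟨i + 1, by omega, Or.inl (by rw [hc's]; exact hx)⟩
    · exact ⟨i + 1, by omega, Or.inr (by rw [hd's]; exact hx)⟩
  · intro heq
    exact he (heq ▸ (⟨0, by omega, Or.inl rfl⟩ : e ∈ hgSet (h+1) c' d'))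

lemma append_absurd (hdeg : ∀ v : V, G.degree v ≤ 3) (hmax : IsMaxHourglass G h c d)
    {e f : V} (hef : G.Adj e f) (hed : G.Adj e (d (h - 1))) (hcf : G.Adj (c (h - 1)) f)
    (he : e ∉ hgSet h c d) (hf : f ∉ hgSet h c d) : False := by
  have h2 := hmax.1.1
  have hset := hgSet_rev (c := c) (d := d) (show 1 ≤ h by omega)
  have hmax' : IsMaxHourglass G h (fun i => c (h - 1 - i)) (fun i => d (h - 1 - i)) :=
    max_congr (hg_rev hdeg hmax.1) hset hmax
  apply prepend_absurd hdeg hmax' hef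
    (by simpa using hed) (by simpa using hcf)
    (by rw [hset]; exact he) (by rw [hset]; exact hf)

/-- move a corner vertex to position `c' 0` -/
lemma anchor_c0 (hdeg : ∀ v : V, G.degree v ≤ 3) (hmax : IsMaxHourglass G h c d)
    {x : V} {i : ℕ} (hi : i < h) (hcorner : i = 0 ∨ i = h - 1) (hx : x = c i ∨ x = d i) :
    ∃ c' d' : ℕ → V, IsMaxHourglass G h c' d' ∧ hgSet h c' d' = hgSet h c d ∧ c' 0 = x := by
  have h2 := hmax.1.1
  have hset := hgSet_rev (c := c) (d := d) (show 1 ≤ h by omega)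
  have hsetw := hgSet_swap (h := h) (c := c) (d := d)
  have hmaxsw : IsMaxHourglass G h d c := max_congr (hg_swap hmax.1) hsetw hmax
  have hsetsw := hgSet_rev (c := d) (d := c) (show 1 ≤ h by omega)
  rcases hx with hx | hx
  · rcases hcorner with h0 | h0
    · exact ⟨c, d, hmax, rfl, by rw [h0] at hx; exact hx.symm⟩
    · refine ⟨fun j => c (h - 1 - j), fun j => d (h - 1 - j),
        max_congr (hg_rev hdeg hmax.1) hset hmax, hset, ?_⟩
      rw [h0] at hx
      simpa using hx.symm
  · rcases hcorner with h0 | h0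
    · exact ⟨d, c, hmaxsw, hsetw, by rw [h0] at hx; exact hx.symm⟩
    · refine ⟨fun j => d (h - 1 - j), fun j => c (h - 1 - j),
        max_congr (hg_rev hdeg hmaxsw.1) hsetsw hmaxsw, hsetsw.trans hsetw, ?_⟩
      rw [h0] at hx
      simpa using hx.symm

end mids

section sets

lemma subsetA {a b : ℕ → V} {S : Set V} (m0 : a 0 ∈ S) (m1 : a 1 ∈ S) (m2 : a 2 ∈ S)
    (n0 : b 0 ∈ S) (n1 : b 1 ∈ S) (n2 : b 2 ∈ S) : hgSet 3 a b ⊆ S := by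
  rintro x ⟨i, hi, hx | hx⟩ <;>
    (have hi3 : i = 0 ∨ i = 1 ∨ i = 2 := by omega) <;>
    rcases hi3 with rfl | rfl | rfl <;> rw [hx] <;> assumption

lemma hg3_eq {a b : ℕ → V} :
    hgSet 3 a b = {a 0, a 1, a 2, b 0, b 1, b 2} := by
  ext x
  simp only [Set.mem_insert_iff, Set.mem_singleton_iff]
  constructor
  · rintro ⟨i, hi, hx | hx⟩ <;>
      (have hi3 : i = 0 ∨ i = 1 ∨ i = 2 := by omega) <;>
      rcases hi3 with rfl | rfl | rfl <;> tauto
  · rintro (rfl | rfl | rfl | rfl | rfl | rfl)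
    exacts [⟨0, by omega, Or.inl rfl⟩, ⟨1, by omega, Or.inl rfl⟩, ⟨2, by omega, Or.inl rfl⟩,
      ⟨0, by omega, Or.inr rfl⟩, ⟨1, by omega, Or.inr rfl⟩, ⟨2, by omega, Or.inr rfl⟩]

lemma hg4_eq {a b : ℕ → V} :
    hgSet 4 a b = {a 0, a 1, a 2, a 3, b 0, b 1, b 2, b 3} := by
  ext x
  simp only [Set.mem_insert_iff, Set.mem_singleton_iff]
  constructor
  · rintro ⟨i, hi, hx | hx⟩ <;>
      (have hi4 : i = 0 ∨ i = 1 ∨ i = 2 ∨ i = 3 := by omega) <;>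
      rcases hi4 with rfl | rfl | rfl | rfl <;> tauto
  · rintro (rfl | rfl | rfl | rfl | rfl | rfl | rfl | rfl)
    exacts [⟨0, by omega, Or.inl rfl⟩, ⟨1, by omega, Or.inl rfl⟩, ⟨2, by omega, Or.inl rfl⟩,
      ⟨3, by omega, Or.inl rfl⟩, ⟨0, by omega, Or.inr rfl⟩, ⟨1, by omega, Or.inr rfl⟩,
      ⟨2, by omega, Or.inr rfl⟩, ⟨3, by omega, Or.inr rfl⟩]

lemma notin3 {a b : ℕ → V} {x : V} (h0 : x ≠ a 0) (h1 : x ≠ a 1) (h2 : x ≠ a 2)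
    (k0 : x ≠ b 0) (k1 : x ≠ b 1) (k2 : x ≠ b 2) : x ∉ hgSet 3 a b := by
  rintro ⟨i, hi, hx | hx⟩ <;>
    (have hi3 : i = 0 ∨ i = 1 ∨ i = 2 := by omega) <;>
    rcases hi3 with rfl | rfl | rfl <;> simp_all

lemma notin2 {c d : ℕ → V} {x : V} (h0 : x ≠ c 0) (h1 : x ≠ c 1)
    (k0 : x ≠ d 0) (k1 : x ≠ d 1) : x ∉ hgSet 2 c d := by
  rintro ⟨i, hi, hx | hx⟩ <;>
    (have hi2 : i = 0 ∨ i = 1 := by omega) <;>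
    rcases hi2 with rfl | rfl <;> simp_all

lemma inter_insert {X : Set V} {s t : V} (hs : s ∉ insert t X) (ht : t ∉ insert s X) :
    (insert s X) ∩ (insert t X) = X := by
  simp only [Set.mem_insert_iff, not_or] at hs ht
  ext x
  simp only [Set.mem_inter_iff, Set.mem_insert_iff]
  constructor
  · rintro ⟨h1 | h1, h2 | h2⟩
    · exact absurd (h1 ▸ h2 : s = t) hs.1
    · exact absurd (h1 ▸ h2) hs.2
    · exact absurd (h2 ▸ h1) ht.2
    · exact h1
  · exact fun hx => ⟨Or.inr hx, Or.inr hx⟩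

lemma ncard5 {x1 x2 x3 x4 x5 : V} (h12 : x1 ≠ x2) (h13 : x1 ≠ x3) (h14 : x1 ≠ x4)
    (h15 : x1 ≠ x5) (h23 : x2 ≠ x3) (h24 : x2 ≠ x4) (h25 : x2 ≠ x5) (h34 : x3 ≠ x4)
    (h35 : x3 ≠ x5) (h45 : x4 ≠ x5) : ({x1, x2, x3, x4, x5} : Set V).ncard = 5 := by
  classical
  rw [show ({x1, x2, x3, x4, x5} : Set V) = (↑({x1, x2, x3, x4, x5} : Finset V)) by simp,
    Set.ncard_coe_finset]
  rw [Finset.card_insert_of_notMem (by simp [h12, h13, h14, h15]),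
    Finset.card_insert_of_notMem (by simp [h23, h24, h25]),
    Finset.card_insert_of_notMem (by simp [h34, h35]),
    Finset.card_insert_of_notMem (by simp [h45]), Finset.card_singleton]

end sets

end HGaux

namespace HGaux

set_option linter.unusedSectionVars false
set_option linter.unusedVariables false

variable {V : Type*} [Fintype V] {G : SimpleGraph V} [DecidableRel G.Adj]

lemma mk3_ex (hdeg : ∀ v : V, G.degree v ≤ 3) {p0 p1 p2 q0 q1 q2 : V}
    (dp1 : p0 ≠ p1) (dp2 : p0 ≠ p2) (dp3 : p1 ≠ p2)
    (dq1 : q0 ≠ q1) (dq2 : q0 ≠ q2) (dq3 : q1 ≠ q2)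
    (d00 : p0 ≠ q0) (d01 : p0 ≠ q1) (d02 : p0 ≠ q2)
    (d10 : p1 ≠ q0) (d11 : p1 ≠ q1) (d12 : p1 ≠ q2)
    (d20 : p2 ≠ q0) (d21 : p2 ≠ q1) (d22 : p2 ≠ q2)
    (e00 : G.Adj p0 q0) (e11 : G.Adj p1 q1) (e22 : G.Adj p2 q2)
    (e01 : G.Adj p0 q1) (e10 : G.Adj p1 q0) (e12 : G.Adj p1 q2) (e21 : G.Adj p2 q1) :
    ∃ u' w' : ℕ → V, IsHourglass G 3 u' w' ∧
      hgSet 3 u' w' = {p0, p1, p2, q0, q1, q2} := by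
  refine ⟨fun i => match i with | 0 => p0 | 1 => p1 | _ => p2,
          fun i => match i with | 0 => q0 | 1 => q1 | _ => q2, ?_, ?_⟩
  · apply hg_mk hdeg (by omega)
    · intro i hi j hj heq
      simp only [Set.mem_Iio] at hi hj
      interval_cases i <;> interval_cases j <;>
        first
          | rfl
          | exact absurd heq (by assumption)
          | exact absurd heq.symm (by assumption)
    · intro i hi j hj heq
      simp only [Set.mem_Iio] at hi hj
      interval_cases i <;> interval_cases j <;>
        first
          | rfl
          | exact absurd heq (by assumption)
          | exact absurd heq.symm (by assumption)
    · intro i hi j hj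
      interval_cases i <;> interval_cases j <;> assumption
    · intro i hi
      interval_cases i
      exacts [e00, e11, e22]
    · intro i hi
      have : i = 0 ∨ i = 1 := by omega
      rcases this with rfl | rfl
      exacts [⟨e01, e10⟩, ⟨e12, e21⟩]
  · rw [hg3_eq]; rfl

lemma mk4_ex (hdeg : ∀ v : V, G.degree v ≤ 3) {p0 p1 p2 p3 q0 q1 q2 q3 : V}
    (dp1 : p0 ≠ p1) (dp2 : p0 ≠ p2) (dp3 : p0 ≠ p3) (dp4 : p1 ≠ p2) (dp5 : p1 ≠ p3)
    (dp6 : p2 ≠ p3)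
    (dq1 : q0 ≠ q1) (dq2 : q0 ≠ q2) (dq3 : q0 ≠ q3) (dq4 : q1 ≠ q2) (dq5 : q1 ≠ q3)
    (dq6 : q2 ≠ q3)
    (d00 : p0 ≠ q0) (d01 : p0 ≠ q1) (d02 : p0 ≠ q2) (d03 : p0 ≠ q3)
    (d10 : p1 ≠ q0) (d11 : p1 ≠ q1) (d12 : p1 ≠ q2) (d13 : p1 ≠ q3)
    (d20 : p2 ≠ q0) (d21 : p2 ≠ q1) (d22 : p2 ≠ q2) (d23 : p2 ≠ q3)
    (d30 : p3 ≠ q0) (d31 : p3 ≠ q1) (d32 : p3 ≠ q2) (d33 : p3 ≠ q3)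
    (e00 : G.Adj p0 q0) (e11 : G.Adj p1 q1) (e22 : G.Adj p2 q2) (e33 : G.Adj p3 q3)
    (e01 : G.Adj p0 q1) (e10 : G.Adj p1 q0) (e12 : G.Adj p1 q2) (e21 : G.Adj p2 q1)
    (e23 : G.Adj p2 q3) (e32 : G.Adj p3 q2) :
    ∃ u' w' : ℕ → V, IsHourglass G 4 u' w' ∧
      hgSet 4 u' w' = {p0, p1, p2, p3, q0, q1, q2, q3} := by
  refine ⟨fun i => match i with | 0 => p0 | 1 => p1 | 2 => p2 | _ => p3,
          fun i => match i with | 0 => q0 | 1 => q1 | 2 => q2 | _ => q3, ?_, ?_⟩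
  · apply hg_mk hdeg (by omega)
    · intro i hi j hj heq
      simp only [Set.mem_Iio] at hi hj
      interval_cases i <;> interval_cases j <;>
        first
          | rfl
          | exact absurd heq (by assumption)
          | exact absurd heq.symm (by assumption)
    · intro i hi j hj heq
      simp only [Set.mem_Iio] at hi hj
      interval_cases i <;> interval_cases j <;>
        first
          | rfl
          | exact absurd heq (by assumption)
          | exact absurd heq.symm (by assumption)
    · intro i hi j hj
      interval_cases i <;> interval_cases j <;> assumption
    · intro i hi
      interval_cases i
      exacts [e00, e11, e22, e33]
    · intro i hi
      have : i = 0 ∨ i = 1 ∨ i = 2 := by omega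
      rcases this with rfl | rfl | rfl
      exacts [⟨e01, e10⟩, ⟨e12, e21⟩, ⟨e23, e32⟩]
  · rw [hg4_eq]; rfl

end HGaux

namespace HGaux

set_option linter.unusedSectionVars false
set_option linter.unusedVariables false
set_option maxHeartbeats 1000000

variable {V : Type*} [Fintype V] {G : SimpleGraph V} [DecidableRel G.Adj]

lemma P1a (hdeg : ∀ v : V, G.degree v ≤ 3) {a b : ℕ → V} {h : ℕ} {c d : ℕ → V}
    (hmax1 : IsMaxHourglass G 3 a b) (hmax2 : IsMaxHourglass G h c d)
    (hb1 : b 1 ∉ hgSet h c d)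
    (h1 : c 0 = a 1) (h2 : d 0 = b 0) (h3 : d 1 = b 2) : False := by
  have hg1 := hmax1.1
  have hg2 := hmax2.1
  have hh2 := hg2.1
  have eA0B0 : G.Adj (a 0) (b 0) := hglay hg1 (by omega)
  have eA1B1 : G.Adj (a 1) (b 1) := hglay hg1 (by omega)
  have eA2B2 : G.Adj (a 2) (b 2) := hglay hg1 (by omega)
  have eA0B1 : G.Adj (a 0) (b 1) := hgcr1 hg1 (by omega)
  have eA1B0 : G.Adj (a 1) (b 0) := hgcr2 hg1 (by omega)
  have eA1B2 : G.Adj (a 1) (b 2) := hgcr1 hg1 (by omega)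
  have eA2B1 : G.Adj (a 2) (b 1) := hgcr2 hg1 (by omega)
  have nA01 : a 0 ≠ a 1 := hgcc hg1 (by omega) (by omega) (by omega)
  have nB01 : b 0 ≠ b 1 := hgdd hg1 (by omega) (by omega) (by omega)
  have nA02 : a 0 ≠ a 2 := hgcc hg1 (by omega) (by omega) (by omega)
  have nB02 : b 0 ≠ b 2 := hgdd hg1 (by omega) (by omega) (by omega)
  have nA12 : a 1 ≠ a 2 := hgcc hg1 (by omega) (by omega) (by omega)
  have nB12 : b 1 ≠ b 2 := hgdd hg1 (by omega) (by omega) (by omega)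
  have nAB00 : a 0 ≠ b 0 := hgcd hg1 (by omega) (by omega)
  have nAB01 : a 0 ≠ b 1 := hgcd hg1 (by omega) (by omega)
  have nAB02 : a 0 ≠ b 2 := hgcd hg1 (by omega) (by omega)
  have nAB10 : a 1 ≠ b 0 := hgcd hg1 (by omega) (by omega)
  have nAB11 : a 1 ≠ b 1 := hgcd hg1 (by omega) (by omega)
  have nAB12 : a 1 ≠ b 2 := hgcd hg1 (by omega) (by omega)
  have nAB20 : a 2 ≠ b 0 := hgcd hg1 (by omega) (by omega)
  have nAB21 : a 2 ≠ b 1 := hgcd hg1 (by omega) (by omega)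
  have nAB22 : a 2 ≠ b 2 := hgcd hg1 (by omega) (by omega)
  have na1 : ∀ t, G.Adj (a 1) t → t = b 0 ∨ t = b 1 ∨ t = b 2 := by
    intro t ht
    have := mid_c hdeg hg1 (i := 1) (by omega) (by omega) t ht
    simpa using this
  have nb1 : ∀ t, G.Adj (b 1) t → t = a 0 ∨ t = a 1 ∨ t = a 2 := by
    intro t ht
    have := mid_d hdeg hg1 (i := 1) (by omega) (by omega) t ht
    simpa using this
  by_cases hh3 : 3 ≤ h
  · -- h ≥ 3 : position 1 is a middle layer
    have hA2 : G.Adj (d 1) (a 2) := by rw [h3]; exact eA2B2.symm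
    have hmd1 := mid_d hdeg hg2 (i := 1) (by omega) (by omega) (a 2) hA2
    rw [show (1:ℕ) - 1 = 0 from rfl, show (1:ℕ) + 1 = 2 from rfl] at hmd1
    rcases hmd1 with hc0 | hc1 | hc2
    · rw [h1] at hc0
      exact nA12 hc0.symm
    · -- c 1 = a 2 is a middle vertex, so b 1 ∈ B
      have hadj : G.Adj (c 1) (b 1) := by rw [← hc1]; exact eA2B1
      have := mid_c hdeg hg2 (i := 1) (by omega) (by omega) (b 1) hadj
      rw [show (1:ℕ) - 1 = 0 from rfl, show (1:ℕ) + 1 = 2 from rfl] at this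
      rcases this with hh | hh | hh <;> exact hb1 (hh ▸ memw (by omega))
    · -- c 2 = a 2
      by_cases hh4 : 4 ≤ h
      · have hadj : G.Adj (c 2) (b 1) := by rw [← hc2]; exact eA2B1
        have := mid_c hdeg hg2 (i := 2) (by omega) (by omega) (b 1) hadj
        rw [show (2:ℕ) - 1 = 1 from rfl, show (2:ℕ) + 1 = 3 from rfl] at this
        rcases this with hh | hh | hh <;> exact hb1 (hh ▸ memw (by omega))
      · have hh' : h = 3 := by omega
        subst hh'
        -- y = c 1, γ = d 2
        have eyb0 : G.Adj (c 1) (b 0) := by rw [← h2]; exact hgcr2 hg2 (by omega)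
        have eyb2 : G.Adj (c 1) (b 2) := by rw [← h3]; exact hglay hg2 (by omega)
        have hnyb1 : ¬ G.Adj (c 1) (b 1) := by
          intro hadj
          have := mid_c hdeg hg2 (i := 1) (by omega) (by omega) (b 1) hadj
          rw [show (1:ℕ) - 1 = 0 from rfl, show (1:ℕ) + 1 = 2 from rfl] at this
          rcases this with hh | hh | hh <;> exact hb1 (hh ▸ memw (by omega))
        have hya0 : c 1 ≠ a 0 := fun he => hnyb1 (he ▸ eA0B1)
        have hya1 : c 1 ≠ a 1 := by rw [← h1]; exact hgcc hg2 (by omega) (by omega) (by omega)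
        have hya2 : c 1 ≠ a 2 := fun he =>
          (hgcc hg2 (by omega) (by omega) (show (1:ℕ) ≠ 2 by omega)) (he.trans hc2)
        have hyb0 : c 1 ≠ b 0 := h2 ▸ hgcd hg2 (by omega) (by omega)
        have hyb2 : c 1 ≠ b 2 := h3 ▸ hgcd hg2 (by omega) (by omega)
        have hyb1 : c 1 ≠ b 1 := fun he => hb1 (he ▸ memc (by omega))
        have eA2G : G.Adj (a 2) (d 2) := by rw [hc2]; exact hglay hg2 (by omega)
        have eyG : G.Adj (c 1) (d 2) := hgcr1 hg2 (by omega)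
        have hgb0 : d 2 ≠ b 0 := by rw [← h2]; exact hgdd hg2 (by omega) (by omega) (by omega)
        have hgb2 : d 2 ≠ b 2 := by rw [← h3]; exact hgdd hg2 (by omega) (by omega) (by omega)
        have hgb1 : d 2 ≠ b 1 := fun he => hb1 (he ▸ memw (by omega))
        have hga0 : d 2 ≠ a 0 := by
          intro he
          have t1 : G.Adj (a 0) (a 2) := (he ▸ eA2G).symm
          have t2 : G.Adj (a 0) (c 1) := (he ▸ eyG).symm
          have := adj_two hdeg nB01 eA0B0 eA0B1 t1 t2 nAB20 nAB21 hyb0 hyb1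
          exact hya2 this.symm
        have hga1 : d 2 ≠ a 1 := by
          intro he
          rcases na1 (a 2) (he ▸ eA2G).symm with hh | hh | hh
          exacts [nAB20 hh, nAB21 hh, nAB22 hh]
        have hga2 : d 2 ≠ a 2 := fun he => (G.ne_of_adj eA2G) he.symm
        have hgy : d 2 ≠ c 1 := (hgcd hg2 (by omega) (by omega)).symm
        obtain ⟨u', w', hg', hset'⟩ := mk4_ex hdeg
          (p0 := a 0) (p1 := a 1) (p2 := a 2) (p3 := c 1)
          (q0 := b 0) (q1 := b 1) (q2 := b 2) (q3 := d 2)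
          nA01 nA02 (Ne.symm hya0) nA12 (Ne.symm hya1) (Ne.symm hya2)
          nB01 nB02 (Ne.symm hgb0) nB12 (Ne.symm hgb1) (Ne.symm hgb2)
          nAB00 nAB01 nAB02 (Ne.symm hga0)
          nAB10 nAB11 nAB12 (Ne.symm hga1)
          nAB20 nAB21 nAB22 (Ne.symm hga2)
          hyb0 hyb1 hyb2 (Ne.symm hgy)
          eA0B0 eA1B1 eA2B2 eyG eA0B1 eA1B0 eA1B2 eA2B1 eA2G eyb2
        apply max_absurd hmax1 hg' ?_ ?_
        · rw [hset']
          apply subsetA <;> simp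
        · intro heq
          have hyA : c 1 ∈ hgSet 3 a b := by
            rw [heq, hset']
            simp
          exact notin3 hya0 hya1 hya2 hyb0 hyb1 hyb2 hyA
  · -- h = 2
    have hh' : h = 2 := by omega
    subst hh'
    have eyb0 : G.Adj (c 1) (b 0) := by rw [← h2]; exact hgcr2 hg2 (by omega)
    have eyb2 : G.Adj (c 1) (b 2) := by rw [← h3]; exact hglay hg2 (by omega)
    by_cases hca0 : c 1 = a 0
    · apply append_absurd hdeg hmax2 (e := a 2) (f := b 1) eA2B1
        (by rw [show (2:ℕ) - 1 = 1 from rfl, h3]; exact eA2B2)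
        (by rw [show (2:ℕ) - 1 = 1 from rfl, hca0]; exact eA0B1)
        (notin2 (by rw [h1]; exact Ne.symm nA12) (fun he => nA02 (he.trans hca0).symm)
          (by rw [h2]; exact nAB20) (by rw [h3]; exact nAB22))
        hb1
    · by_cases hca2 : c 1 = a 2
      · apply prepend_absurd hdeg hmax2 (e := a 0) (f := b 1) eA0B1
          (by rw [h2]; exact eA0B0)
          (by rw [h1]; exact eA1B1)
          (notin2 (by rw [h1]; exact nA01) (fun he => hca0 he.symm)
            (by rw [h2]; exact nAB00) (by rw [h3]; exact nAB02))
          hb1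
      · -- c 1 external
        have hya1 : c 1 ≠ a 1 := by rw [← h1]; exact hgcc hg2 (by omega) (by omega) (by omega)
        have hyb0 : c 1 ≠ b 0 := h2 ▸ hgcd hg2 (by omega) (by omega)
        have hyb2 : c 1 ≠ b 2 := h3 ▸ hgcd hg2 (by omega) (by omega)
        have hyb1 : c 1 ≠ b 1 := fun he => hb1 (he ▸ memc (by omega))
        obtain ⟨u', w', hg', hset'⟩ := mk3_ex hdeg
          (p0 := c 1) (p1 := a 1) (p2 := a 2)
          (q0 := b 0) (q1 := b 2) (q2 := b 1)
          hya1 hca2 nA12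
          nB02 nB01 (Ne.symm nB12)
          hyb0 hyb2 hyb1
          nAB10 nAB12 nAB11
          nAB20 nAB22 nAB21
          eyb0 eA1B2 eA2B1 eyb2 eA1B0 eA1B1 eA2B2
        apply max_absurd hmax2 hg' ?_ ?_
        · intro x hx
          rw [hset']
          rcases hx with ⟨i, hi, hx | hx⟩ <;>
            (have hi2 : i = 0 ∨ i = 1 := by omega) <;>
            rcases hi2 with rfl | rfl <;> rw [hx]
          · rw [h1]; simp
          · simp
          · rw [h2]; simp
          · rw [h3]; simp
        · intro heq
          exact hb1 (by rw [heq, hset']; simp)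

end HGaux

namespace HGaux

set_option linter.unusedSectionVars false
set_option linter.unusedVariables false
set_option maxHeartbeats 1000000

variable {V : Type*} [Fintype V] {G : SimpleGraph V} [DecidableRel G.Adj]

lemma P1b (hdeg : ∀ v : V, G.degree v ≤ 3) {a b : ℕ → V} {h : ℕ} {c d : ℕ → V}
    (hmax1 : IsMaxHourglass G 3 a b) (hmax2 : IsMaxHourglass G h c d)
    (hb1 : b 1 ∉ hgSet h c d) (ha1 : a 1 ∉ hgSet h c d)
    (hc0 : c 0 = a 0) : False := by
  have hg1 := hmax1.1
  have hg2 := hmax2.1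
  have hh2 := hg2.1
  have eA0B0 : G.Adj (a 0) (b 0) := hglay hg1 (by omega)
  have eA1B1 : G.Adj (a 1) (b 1) := hglay hg1 (by omega)
  have eA2B2 : G.Adj (a 2) (b 2) := hglay hg1 (by omega)
  have eA0B1 : G.Adj (a 0) (b 1) := hgcr1 hg1 (by omega)
  have eA1B0 : G.Adj (a 1) (b 0) := hgcr2 hg1 (by omega)
  have eA1B2 : G.Adj (a 1) (b 2) := hgcr1 hg1 (by omega)
  have eA2B1 : G.Adj (a 2) (b 1) := hgcr2 hg1 (by omega)
  have nA01 : a 0 ≠ a 1 := hgcc hg1 (by omega) (by omega) (by omega)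
  have nB01 : b 0 ≠ b 1 := hgdd hg1 (by omega) (by omega) (by omega)
  have nA02 : a 0 ≠ a 2 := hgcc hg1 (by omega) (by omega) (by omega)
  have nB02 : b 0 ≠ b 2 := hgdd hg1 (by omega) (by omega) (by omega)
  have nA12 : a 1 ≠ a 2 := hgcc hg1 (by omega) (by omega) (by omega)
  have nB12 : b 1 ≠ b 2 := hgdd hg1 (by omega) (by omega) (by omega)
  have nAB00 : a 0 ≠ b 0 := hgcd hg1 (by omega) (by omega)
  have nAB01 : a 0 ≠ b 1 := hgcd hg1 (by omega) (by omega)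
  have nAB02 : a 0 ≠ b 2 := hgcd hg1 (by omega) (by omega)
  have nAB10 : a 1 ≠ b 0 := hgcd hg1 (by omega) (by omega)
  have nAB11 : a 1 ≠ b 1 := hgcd hg1 (by omega) (by omega)
  have nAB12 : a 1 ≠ b 2 := hgcd hg1 (by omega) (by omega)
  have nAB20 : a 2 ≠ b 0 := hgcd hg1 (by omega) (by omega)
  have nAB21 : a 2 ≠ b 1 := hgcd hg1 (by omega) (by omega)
  have nAB22 : a 2 ≠ b 2 := hgcd hg1 (by omega) (by omega)
  have na1 : ∀ t, G.Adj (a 1) t → t = b 0 ∨ t = b 1 ∨ t = b 2 := by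
    intro t ht
    have := mid_c hdeg hg1 (i := 1) (by omega) (by omega) t ht
    simpa using this
  have nb1 : ∀ t, G.Adj (b 1) t → t = a 0 ∨ t = a 1 ∨ t = a 2 := by
    intro t ht
    have := mid_d hdeg hg1 (i := 1) (by omega) (by omega) t ht
    simpa using this
  have ed0 : G.Adj (a 0) (d 0) := by rw [← hc0]; exact hglay hg2 (by omega)
  have ed1 : G.Adj (a 0) (d 1) := by rw [← hc0]; exact hgcr1 hg2 (by omega)
  have hd01 : d 0 ≠ d 1 := hgdd hg2 (by omega) (by omega) (by omega)
  have hd0b1 : d 0 ≠ b 1 := fun he => hb1 (by rw [← he]; exact memw (by omega))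
  have hd1b1 : d 1 ≠ b 1 := fun he => hb1 (by rw [← he]; exact memw (by omega))
  by_cases hb0d0 : d 0 = b 0
  · exact prepend_absurd hdeg hmax2 eA1B1
      (by rw [hb0d0]; exact eA1B0) (by rw [hc0]; exact eA0B1) ha1 hb1
  · have hb0d1 : d 1 = b 0 := by
      by_contra hne'
      exact hd01 (adj_two hdeg nB01 eA0B0 eA0B1 ed0 ed1 hb0d0 hd0b1 hne' hd1b1)
    by_cases hh3 : 3 ≤ h
    · have hadj : G.Adj (d 1) (a 1) := by rw [hb0d1]; exact eA1B0.symm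
      have := mid_d hdeg hg2 (i := 1) (by omega) (by omega) (a 1) hadj
      rw [show (1:ℕ) - 1 = 0 from rfl, show (1:ℕ) + 1 = 2 from rfl] at this
      rcases this with hh | hh | hh <;> exact ha1 (by rw [hh]; exact memc (by omega))
    · have hh' : h = 2 := by omega
      subst hh'
      have e00 : G.Adj (d 0) (c 1) := (hgcr2 hg2 (by omega)).symm
      have e10 : G.Adj (b 0) (c 1) := by rw [← hb0d1]; exact (hglay hg2 (by omega)).symm
      have hq1 : c 1 ≠ a 0 := by rw [← hc0]; exact hgcc hg2 (by omega) (by omega) (by omega)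
      have hq2 : c 1 ≠ a 1 := fun he => ha1 (by rw [← he]; exact memc (by omega))
      have hx1 : d 0 ≠ c 1 := (hgcd hg2 (by omega) (by omega)).symm
      have hx2 : d 0 ≠ a 0 := fun he => hgcd hg2 (by omega) (by omega) (hc0.trans he.symm)
      have hx3 : d 0 ≠ a 1 := fun he => ha1 (by rw [← he]; exact memw (by omega))
      have hx4 : b 0 ≠ c 1 := fun he => hgcd hg2 (by omega) (by omega) (he.symm.trans hb0d1.symm)
      have hx5 : b 1 ≠ c 1 := fun he => hb1 (by rw [he]; exact memc (by omega))
      obtain ⟨u', w', hg', hset'⟩ := mk3_ex hdeg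
        (p0 := d 0) (p1 := b 0) (p2 := b 1)
        (q0 := c 1) (q1 := a 0) (q2 := a 1)
        hb0d0 hd0b1 nB01
        hq1 hq2 nA01
        hx1 hx2 hx3
        hx4 (Ne.symm nAB00) (Ne.symm nAB10)
        hx5 (Ne.symm nAB01) (Ne.symm nAB11)
        e00 eA0B0.symm eA1B1.symm ed0.symm e10 eA1B0.symm eA0B1.symm
      apply max_absurd hmax2 hg' ?_ ?_
      · intro x hx
        rw [hset']
        rcases hx with ⟨i, hi, hx | hx⟩ <;>
          (have hi2 : i = 0 ∨ i = 1 := by omega) <;>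
          rcases hi2 with rfl | rfl <;> rw [hx]
        · rw [hc0]; simp
        · simp
        · simp
        · rw [hb0d1]; simp
      · intro heq
        exact hb1 (by rw [heq, hset']; simp)

lemma P1 (hdeg : ∀ v : V, G.degree v ≤ 3) {a b : ℕ → V} {h : ℕ} {c d : ℕ → V}
    (hmax1 : IsMaxHourglass G 3 a b) (hmax2 : IsMaxHourglass G h c d)
    {v : V} (hv : v ∈ hgSet 3 a b ∩ hgSet h c d) : b 1 ∈ hgSet h c d := by
  by_contra hb1
  have hg1 := hmax1.1
  have hg2 := hmax2.1
  have hh2 := hg2.1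
  have eA0B0 : G.Adj (a 0) (b 0) := hglay hg1 (by omega)
  have eA1B1 : G.Adj (a 1) (b 1) := hglay hg1 (by omega)
  have eA2B2 : G.Adj (a 2) (b 2) := hglay hg1 (by omega)
  have eA0B1 : G.Adj (a 0) (b 1) := hgcr1 hg1 (by omega)
  have eA1B0 : G.Adj (a 1) (b 0) := hgcr2 hg1 (by omega)
  have eA1B2 : G.Adj (a 1) (b 2) := hgcr1 hg1 (by omega)
  have eA2B1 : G.Adj (a 2) (b 1) := hgcr2 hg1 (by omega)
  have nA01 : a 0 ≠ a 1 := hgcc hg1 (by omega) (by omega) (by omega)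
  have nB01 : b 0 ≠ b 1 := hgdd hg1 (by omega) (by omega) (by omega)
  have nA02 : a 0 ≠ a 2 := hgcc hg1 (by omega) (by omega) (by omega)
  have nB02 : b 0 ≠ b 2 := hgdd hg1 (by omega) (by omega) (by omega)
  have nA12 : a 1 ≠ a 2 := hgcc hg1 (by omega) (by omega) (by omega)
  have nB12 : b 1 ≠ b 2 := hgdd hg1 (by omega) (by omega) (by omega)
  have nAB00 : a 0 ≠ b 0 := hgcd hg1 (by omega) (by omega)
  have nAB01 : a 0 ≠ b 1 := hgcd hg1 (by omega) (by omega)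
  have nAB02 : a 0 ≠ b 2 := hgcd hg1 (by omega) (by omega)
  have nAB10 : a 1 ≠ b 0 := hgcd hg1 (by omega) (by omega)
  have nAB11 : a 1 ≠ b 1 := hgcd hg1 (by omega) (by omega)
  have nAB12 : a 1 ≠ b 2 := hgcd hg1 (by omega) (by omega)
  have nAB20 : a 2 ≠ b 0 := hgcd hg1 (by omega) (by omega)
  have nAB21 : a 2 ≠ b 1 := hgcd hg1 (by omega) (by omega)
  have nAB22 : a 2 ≠ b 2 := hgcd hg1 (by omega) (by omega)
  have na1 : ∀ t, G.Adj (a 1) t → t = b 0 ∨ t = b 1 ∨ t = b 2 := by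
    intro t ht
    have := mid_c hdeg hg1 (i := 1) (by omega) (by omega) t ht
    simpa using this
  have nb1 : ∀ t, G.Adj (b 1) t → t = a 0 ∨ t = a 1 ∨ t = a 2 := by
    intro t ht
    have := mid_d hdeg hg1 (i := 1) (by omega) (by omega) t ht
    simpa using this
  have hmax1' : IsMaxHourglass G 3 (fun i => a (3 - 1 - i)) (fun i => b (3 - 1 - i)) :=
    max_congr (hg_rev hdeg hg1) (hgSet_rev (by omega)) hmax1
  have corner_rep : ∀ x : V, x ∈ hgSet h c d → G.Adj x (b 1) →
      ∃ j, j < h ∧ (j = 0 ∨ j = h - 1) ∧ (x = c j ∨ x = d j) := by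
    intro x hx hadj
    obtain ⟨j, hj, hx'⟩ := hx
    by_cases hmid : 1 ≤ j ∧ j + 1 < h
    · exfalso
      rcases hx' with hx' | hx'
      · rw [hx'] at hadj
        rcases mid_c hdeg hg2 hmid.1 hmid.2 (b 1) hadj with hh | hh | hh <;>
          exact hb1 (by rw [hh]; exact memw (by omega))
      · rw [hx'] at hadj
        rcases mid_d hdeg hg2 hmid.1 hmid.2 (b 1) hadj with hh | hh | hh <;>
          exact hb1 (by rw [hh]; exact memc (by omega))
    · exact ⟨j, hj, by omega, hx'⟩
  by_cases hA1 : a 1 ∈ hgSet h c d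
  · -- a 1 sits at a corner of H2
    obtain ⟨j, hj, hcor, hrep⟩ := corner_rep (a 1) hA1 eA1B1
    obtain ⟨c', d', hmax2', hBeq, hc'0⟩ := anchor_c0 hdeg hmax2 hj hcor hrep
    have hg2' := hmax2'.1
    have hb1' : b 1 ∉ hgSet h c' d' := by rw [hBeq]; exact hb1
    have ed0 : G.Adj (a 1) (d' 0) := by rw [← hc'0]; exact hglay hg2' (by omega)
    have ed1 : G.Adj (a 1) (d' 1) := by rw [← hc'0]; exact hgcr1 hg2' (by omega)
    have hd01 : d' 0 ≠ d' 1 := hgdd hg2' (by omega) (by omega) (by omega)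
    rcases na1 _ ed0 with k0 | k0 | k0
    rotate_left
    · exact hb1' (by rw [← k0]; exact memw (by omega))
    · -- d' 0 = b 2 : use the reversed H1
      rcases na1 _ ed1 with k1 | k1 | k1
      rotate_left
      · exact hb1' (by rw [← k1]; exact memw (by omega))
      · exact hd01 (k0.trans k1.symm)
      · -- d' 0 = b 2, d' 1 = b 0
        exact P1a hdeg hmax1' hmax2' hb1' hc'0 k0 k1
    · -- d' 0 = b 0
      rcases na1 _ ed1 with k1 | k1 | k1
      · exact hd01 (k0.trans k1.symm)
      · exact hb1' (by rw [← k1]; exact memw (by omega))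
      · exact P1a hdeg hmax1 hmax2' hb1' hc'0 k0 k1
  · -- a 1 ∉ B : some corner of H1 of a-type is in B
    have key : a 0 ∈ hgSet h c d ∨ a 2 ∈ hgSet h c d := by
      obtain ⟨hvA, hvB⟩ := hv
      obtain ⟨i, hi, hv'⟩ := hvA
      have hi3 : i = 0 ∨ i = 1 ∨ i = 2 := by omega
      rcases hi3 with rfl | rfl | rfl <;> rcases hv' with rfl | rfl
      · exact Or.inl hvB
      · -- v = b 0
        obtain ⟨p, q, hpq, hpB, hqB, hp, hq⟩ := two_nbrs hg2 hvB
        have hpA1 : p ≠ a 1 := fun he => hA1 (he ▸ hpB)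
        have hqA1 : q ≠ a 1 := fun he => hA1 (he ▸ hqB)
        by_cases hpa0 : p = a 0
        · exact Or.inl (hpa0 ▸ hpB)
        · by_cases hqa0 : q = a 0
          · exact Or.inl (hqa0 ▸ hqB)
          · exact absurd (adj_two hdeg nA01 eA0B0.symm eA1B0.symm hp hq hpa0 hpA1 hqa0 hqA1) hpq
      · exact absurd hvB hA1
      · exact absurd hvB hb1
      · exact Or.inr hvB
      · -- v = b 2
        obtain ⟨p, q, hpq, hpB, hqB, hp, hq⟩ := two_nbrs hg2 hvB
        have hpA1 : p ≠ a 1 := fun he => hA1 (he ▸ hpB)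
        have hqA1 : q ≠ a 1 := fun he => hA1 (he ▸ hqB)
        by_cases hpa2 : p = a 2
        · exact Or.inr (hpa2 ▸ hpB)
        · by_cases hqa2 : q = a 2
          · exact Or.inr (hqa2 ▸ hqB)
          · exact absurd
              (adj_two hdeg (Ne.symm nA12) eA2B2.symm eA1B2.symm hp hq hpa2 hpA1 hqa2 hqA1) hpq
    rcases key with hA0 | hA2
    · obtain ⟨j, hj, hcor, hrep⟩ := corner_rep (a 0) hA0 eA0B1
      obtain ⟨c', d', hmax2', hBeq, hc'0⟩ := anchor_c0 hdeg hmax2 hj hcor hrep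
      exact P1b hdeg hmax1 hmax2' (by rw [hBeq]; exact hb1) (by rw [hBeq]; exact hA1) hc'0
    · obtain ⟨j, hj, hcor, hrep⟩ := corner_rep (a 2) hA2 eA2B1
      obtain ⟨c', d', hmax2', hBeq, hc'0⟩ := anchor_c0 hdeg hmax2 hj hcor hrep
      exact P1b hdeg hmax1' hmax2' (by rw [hBeq]; exact hb1) (by rw [hBeq]; exact hA1) hc'0

end HGaux

namespace HGaux

set_option linter.unusedSectionVars false
set_option linter.unusedVariables false
set_option maxHeartbeats 1000000

variable {V : Type*} [Fintype V] {G : SimpleGraph V} [DecidableRel G.Adj]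

lemma CIa (hdeg : ∀ v : V, G.degree v ≤ 3) {a b : ℕ → V} {h k : ℕ} {c d : ℕ → V}
    (hmax1 : IsMaxHourglass G 3 a b) (hmax2 : IsMaxHourglass G h c d)
    (hne : hgSet 3 a b ≠ hgSet h c d)
    (hk1 : 1 ≤ k) (hk2 : k + 1 < h)
    (e1 : c k = a 1) (e2 : d k = b 1) : False := by
  have hg1 := hmax1.1
  have hg2 := hmax2.1
  have hh2 := hg2.1
  have eA0B0 : G.Adj (a 0) (b 0) := hglay hg1 (by omega)
  have eA1B1 : G.Adj (a 1) (b 1) := hglay hg1 (by omega)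
  have eA2B2 : G.Adj (a 2) (b 2) := hglay hg1 (by omega)
  have eA0B1 : G.Adj (a 0) (b 1) := hgcr1 hg1 (by omega)
  have eA1B0 : G.Adj (a 1) (b 0) := hgcr2 hg1 (by omega)
  have eA1B2 : G.Adj (a 1) (b 2) := hgcr1 hg1 (by omega)
  have eA2B1 : G.Adj (a 2) (b 1) := hgcr2 hg1 (by omega)
  have nA01 : a 0 ≠ a 1 := hgcc hg1 (by omega) (by omega) (by omega)
  have nB01 : b 0 ≠ b 1 := hgdd hg1 (by omega) (by omega) (by omega)
  have nA02 : a 0 ≠ a 2 := hgcc hg1 (by omega) (by omega) (by omega)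
  have nB02 : b 0 ≠ b 2 := hgdd hg1 (by omega) (by omega) (by omega)
  have nA12 : a 1 ≠ a 2 := hgcc hg1 (by omega) (by omega) (by omega)
  have nB12 : b 1 ≠ b 2 := hgdd hg1 (by omega) (by omega) (by omega)
  have nAB00 : a 0 ≠ b 0 := hgcd hg1 (by omega) (by omega)
  have nAB01 : a 0 ≠ b 1 := hgcd hg1 (by omega) (by omega)
  have nAB02 : a 0 ≠ b 2 := hgcd hg1 (by omega) (by omega)
  have nAB10 : a 1 ≠ b 0 := hgcd hg1 (by omega) (by omega)
  have nAB11 : a 1 ≠ b 1 := hgcd hg1 (by omega) (by omega)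
  have nAB12 : a 1 ≠ b 2 := hgcd hg1 (by omega) (by omega)
  have nAB20 : a 2 ≠ b 0 := hgcd hg1 (by omega) (by omega)
  have nAB21 : a 2 ≠ b 1 := hgcd hg1 (by omega) (by omega)
  have nAB22 : a 2 ≠ b 2 := hgcd hg1 (by omega) (by omega)
  have na1 : ∀ t, G.Adj (a 1) t → t = b 0 ∨ t = b 1 ∨ t = b 2 := by
    intro t ht
    have := mid_c hdeg hg1 (i := 1) (by omega) (by omega) t ht
    simpa using this
  have nb1 : ∀ t, G.Adj (b 1) t → t = a 0 ∨ t = a 1 ∨ t = a 2 := by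
    intro t ht
    have := mid_d hdeg hg1 (i := 1) (by omega) (by omega) t ht
    simpa using this
  have done : a 0 ∈ hgSet h c d → a 2 ∈ hgSet h c d → b 0 ∈ hgSet h c d →
      b 2 ∈ hgSet h c d → False := by
    intro m0 m2 n0 n2
    exact max_absurd hmax1 hg2
      (subsetA m0 (by rw [← e1]; exact memc (by omega)) m2 n0
        (by rw [← e2]; exact memw (by omega)) n2) hne
  have ecm : G.Adj (b 1) (c (k - 1)) := by
    have t := hgcr1 hg2 (show (k - 1) + 1 < h by omega)
    rw [show k - 1 + 1 = k from by omega, e2] at t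
    exact t.symm
  have ecp : G.Adj (b 1) (c (k + 1)) := by
    have t := hgcr2 hg2 (show k + 1 < h from hk2)
    rw [e2] at t
    exact t.symm
  have edm : G.Adj (a 1) (d (k - 1)) := by
    have t := hgcr2 hg2 (show (k - 1) + 1 < h by omega)
    rw [show k - 1 + 1 = k from by omega, e1] at t
    exact t
  have edp : G.Adj (a 1) (d (k + 1)) := by
    have t := hgcr1 hg2 (show k + 1 < h from hk2)
    rw [e1] at t
    exact t
  have hdd : ∀ s : Prop, (d (k - 1) = b 0 ∨ d (k - 1) = b 2) →
      (d (k + 1) = b 0 ∨ d (k + 1) = b 2) → (b 0 ∈ hgSet h c d → b 2 ∈ hgSet h c d → s) → s := by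
    intro s hm hp hcont
    rcases hm with hm | hm <;> rcases hp with hp | hp
    · exact absurd (hm.trans hp.symm) (hgdd hg2 (by omega) (by omega) (by omega))
    · exact hcont (by rw [← hm]; exact memw (by omega)) (by rw [← hp]; exact memw (by omega))
    · exact hcont (by rw [← hp]; exact memw (by omega)) (by rw [← hm]; exact memw (by omega))
    · exact absurd (hm.trans hp.symm) (hgdd hg2 (by omega) (by omega) (by omega))
  have hm' : d (k - 1) = b 0 ∨ d (k - 1) = b 2 := by
    rcases na1 _ edm with r | r | r
    · exact Or.inl r
    · exact absurd (r.trans e2.symm) (hgdd hg2 (by omega) (by omega) (by omega))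
    · exact Or.inr r
  have hp' : d (k + 1) = b 0 ∨ d (k + 1) = b 2 := by
    rcases na1 _ edp with r | r | r
    · exact Or.inl r
    · exact absurd (r.trans e2.symm) (hgdd hg2 (by omega) (by omega) (by omega))
    · exact Or.inr r
  have hcm : c (k - 1) = a 0 ∨ c (k - 1) = a 2 := by
    rcases nb1 _ ecm with r | r | r
    · exact Or.inl r
    · exact absurd (r.trans e1.symm) (hgcc hg2 (by omega) (by omega) (by omega))
    · exact Or.inr r
  have hcp : c (k + 1) = a 0 ∨ c (k + 1) = a 2 := by
    rcases nb1 _ ecp with r | r | r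
    · exact Or.inl r
    · exact absurd (r.trans e1.symm) (hgcc hg2 (by omega) (by omega) (by omega))
    · exact Or.inr r
  refine hdd _ hm' hp' (fun n0 n2 => ?_)
  rcases hcm with hm | hm <;> rcases hcp with hp | hp
  · exact absurd (hm.trans hp.symm) (hgcc hg2 (by omega) (by omega) (by omega))
  · exact done (by rw [← hm]; exact memc (by omega)) (by rw [← hp]; exact memc (by omega)) n0 n2
  · exact done (by rw [← hp]; exact memc (by omega)) (by rw [← hm]; exact memc (by omega)) n0 n2
  · exact absurd (hm.trans hp.symm) (hgcc hg2 (by omega) (by omega) (by omega))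

lemma CI (hdeg : ∀ v : V, G.degree v ≤ 3) {a b : ℕ → V} {h k : ℕ} {c d : ℕ → V}
    (hmax1 : IsMaxHourglass G 3 a b) (hmax2 : IsMaxHourglass G h c d)
    (hne : hgSet 3 a b ≠ hgSet h c d)
    (hk1 : 1 ≤ k) (hk2 : k + 1 < h)
    (e1 : c k = a 1) (e2 : d (k + 1) = b 1) (e3 : d k = b 0) :
    h = 3 ∧ (hgSet 3 a b ∩ hgSet h c d).ncard = 5 := by
  have hg1 := hmax1.1
  have hg2 := hmax2.1
  have hh2 := hg2.1
  have eA0B0 : G.Adj (a 0) (b 0) := hglay hg1 (by omega)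
  have eA1B1 : G.Adj (a 1) (b 1) := hglay hg1 (by omega)
  have eA2B2 : G.Adj (a 2) (b 2) := hglay hg1 (by omega)
  have eA0B1 : G.Adj (a 0) (b 1) := hgcr1 hg1 (by omega)
  have eA1B0 : G.Adj (a 1) (b 0) := hgcr2 hg1 (by omega)
  have eA1B2 : G.Adj (a 1) (b 2) := hgcr1 hg1 (by omega)
  have eA2B1 : G.Adj (a 2) (b 1) := hgcr2 hg1 (by omega)
  have nA01 : a 0 ≠ a 1 := hgcc hg1 (by omega) (by omega) (by omega)
  have nB01 : b 0 ≠ b 1 := hgdd hg1 (by omega) (by omega) (by omega)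
  have nA02 : a 0 ≠ a 2 := hgcc hg1 (by omega) (by omega) (by omega)
  have nB02 : b 0 ≠ b 2 := hgdd hg1 (by omega) (by omega) (by omega)
  have nA12 : a 1 ≠ a 2 := hgcc hg1 (by omega) (by omega) (by omega)
  have nB12 : b 1 ≠ b 2 := hgdd hg1 (by omega) (by omega) (by omega)
  have nAB00 : a 0 ≠ b 0 := hgcd hg1 (by omega) (by omega)
  have nAB01 : a 0 ≠ b 1 := hgcd hg1 (by omega) (by omega)
  have nAB02 : a 0 ≠ b 2 := hgcd hg1 (by omega) (by omega)
  have nAB10 : a 1 ≠ b 0 := hgcd hg1 (by omega) (by omega)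
  have nAB11 : a 1 ≠ b 1 := hgcd hg1 (by omega) (by omega)
  have nAB12 : a 1 ≠ b 2 := hgcd hg1 (by omega) (by omega)
  have nAB20 : a 2 ≠ b 0 := hgcd hg1 (by omega) (by omega)
  have nAB21 : a 2 ≠ b 1 := hgcd hg1 (by omega) (by omega)
  have nAB22 : a 2 ≠ b 2 := hgcd hg1 (by omega) (by omega)
  have na1 : ∀ t, G.Adj (a 1) t → t = b 0 ∨ t = b 1 ∨ t = b 2 := by
    intro t ht
    have := mid_c hdeg hg1 (i := 1) (by omega) (by omega) t ht
    simpa using this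
  have nb1 : ∀ t, G.Adj (b 1) t → t = a 0 ∨ t = a 1 ∨ t = a 2 := by
    intro t ht
    have := mid_d hdeg hg1 (i := 1) (by omega) (by omega) t ht
    simpa using this
  have ed : G.Adj (a 1) (d (k - 1)) := by
    have t := hgcr2 hg2 (show (k - 1) + 1 < h by omega)
    rw [show k - 1 + 1 = k from by omega, e1] at t
    exact t
  have e4 : d (k - 1) = b 2 := by
    rcases na1 _ ed with hh | hh | hh
    · exact absurd (hh.trans e3.symm) (hgdd hg2 (by omega) (by omega) (by omega))
    · exact absurd (hh.trans e2.symm) (hgdd hg2 (by omega) (by omega) (by omega))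
    · exact hh
  have hmdk : ∀ t, G.Adj (b 0) t → t = c (k - 1) ∨ t = c k ∨ t = c (k + 1) := by
    intro t ht
    exact mid_d hdeg hg2 (i := k) hk1 hk2 t (by rw [e3]; exact ht)
  rcases hmdk (a 0) eA0B0.symm with f | f | f
  · -- a 0 = c (k - 1) : then c (k+1) = a 2 and A ⊆ B
    have ecb1 : G.Adj (b 1) (c (k + 1)) := by rw [← e2]; exact (hglay hg2 (by omega)).symm
    rcases nb1 _ ecb1 with hh | hh | hh
    · exact absurd (hh.trans f) (hgcc hg2 (by omega) (by omega) (by omega))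
    · exact absurd (hh.trans e1.symm) (hgcc hg2 (by omega) (by omega) (by omega))
    · exact absurd (max_absurd hmax1 hg2
        (subsetA (by rw [f]; exact memc (by omega)) (by rw [← e1]; exact memc (by omega))
          (by rw [← hh]; exact memc (by omega)) (by rw [← e3]; exact memw (by omega))
          (by rw [← e2]; exact memw (by omega)) (by rw [← e4]; exact memw (by omega))) hne) id
  · exact absurd (f.trans e1) nA01
  · -- a 0 = c (k + 1) : main branch
    have eyb2 : G.Adj (c (k - 1)) (b 2) := by rw [← e4]; exact hglay hg2 (by omega)
    have eyb0 : G.Adj (c (k - 1)) (b 0) := by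
      have t := hgcr1 hg2 (show (k - 1) + 1 < h by omega)
      rw [show k - 1 + 1 = k from by omega, e3] at t
      exact t
    by_cases hya2 : c (k - 1) = a 2
    · exact absurd (max_absurd hmax1 hg2
        (subsetA (by rw [f]; exact memc (by omega)) (by rw [← e1]; exact memc (by omega))
          (by rw [← hya2]; exact memc (by omega)) (by rw [← e3]; exact memw (by omega))
          (by rw [← e2]; exact memw (by omega)) (by rw [← e4]; exact memw (by omega))) hne) id
    · have hya0 : c (k - 1) ≠ a 0 :=
        fun he => hgcc hg2 (by omega) (by omega) (show k - 1 ≠ k + 1 by omega) (he.trans f)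
      have hya1 : c (k - 1) ≠ a 1 :=
        fun he => hgcc hg2 (by omega) (by omega) (show k - 1 ≠ k by omega) (he.trans e1.symm)
      have hyb0 : c (k - 1) ≠ b 0 := fun he => hgcd hg2 (by omega) (by omega) (he.trans e3.symm)
      have hyb1 : c (k - 1) ≠ b 1 := fun he => hgcd hg2 (by omega) (by omega) (he.trans e2.symm)
      have hyb2 : c (k - 1) ≠ b 2 := fun he => hgcd hg2 (by omega) (by omega) (he.trans e4.symm)
      by_cases hh3 : h = 3
      · subst hh3
        have hk' : k = 1 := by omega
        subst hk'
        refine ⟨rfl, ?_⟩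
        have e4' : d 0 = b 2 := e4
        have f' : a 0 = c 2 := f
        have hA : hgSet 3 a b = insert (a 2) {a 0, a 1, b 0, b 1, b 2} := by
          rw [hg3_eq]
          ext x
          simp only [Set.mem_insert_iff, Set.mem_singleton_iff]
          tauto
        have hB : hgSet 3 c d = insert (c 0) {a 0, a 1, b 0, b 1, b 2} := by
          rw [hg3_eq (a := c) (b := d), e1, ← f', e3, e2, e4']
          ext x
          simp only [Set.mem_insert_iff, Set.mem_singleton_iff]
          tauto
        rw [hA, hB, inter_insert ?hs ?ht]
        · exact ncard5 nA01 nAB00 nAB01 nAB02 nAB10 nAB11 nAB12 nB01 nB02 nB12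
        case hs =>
          simp only [Set.mem_insert_iff, Set.mem_singleton_iff]
          push_neg
          exact ⟨fun he => hya2 he.symm, Ne.symm nA02, Ne.symm nA12, nAB20, nAB21, nAB22⟩
        case ht =>
          simp only [Set.mem_insert_iff, Set.mem_singleton_iff]
          push_neg
          exact ⟨hya2, hya0, hya1, hyb0, hyb1, hyb2⟩
      · exfalso
        by_cases hright : k + 2 < h
        · have := mid_d hdeg hg2 (i := k + 1) (by omega) (by omega) (a 2)
            (by rw [e2]; exact eA2B1.symm)
          rw [show k + 1 - 1 = k from by omega] at this
          rcases this with hh | hh | hh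
          · exact nA12 (hh.trans e1).symm
          · exact nA02 (hh.trans f.symm).symm
          · exact max_absurd hmax1 hg2
              (subsetA (by rw [f]; exact memc (by omega)) (by rw [← e1]; exact memc (by omega))
                (by rw [hh]; exact memc (by omega)) (by rw [← e3]; exact memw (by omega))
                (by rw [← e2]; exact memw (by omega)) (by rw [← e4]; exact memw (by omega))) hne
        · have hleft : 2 ≤ k := by omega
          have := mid_d hdeg hg2 (i := k - 1) (by omega) (by omega) (a 2)
            (by rw [e4]; exact eA2B2.symm)
          rw [show k - 1 - 1 = k - 2 from by omega, show k - 1 + 1 = k from by omega] at this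
          rcases this with hh | hh | hh
          · exact max_absurd hmax1 hg2
              (subsetA (by rw [f]; exact memc (by omega)) (by rw [← e1]; exact memc (by omega))
                (by rw [hh]; exact memc (by omega)) (by rw [← e3]; exact memw (by omega))
                (by rw [← e2]; exact memw (by omega)) (by rw [← e4]; exact memw (by omega))) hne
          · exact hya2 hh.symm
          · exact nA12 (hh.trans e1).symm

end HGaux

namespace HGaux

set_option linter.unusedSectionVars false
set_option linter.unusedVariables false
set_option maxHeartbeats 1000000

variable {V : Type*} [Fintype V] {G : SimpleGraph V} [DecidableRel G.Adj]

lemma CIP (hdeg : ∀ v : V, G.degree v ≤ 3) {a b : ℕ → V} {h k : ℕ} {c d : ℕ → V}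
    (hmax1 : IsMaxHourglass G 3 a b) (hmax2 : IsMaxHourglass G h c d)
    (hne : hgSet 3 a b ≠ hgSet h c d)
    (hk1 : 1 ≤ k) (hk2 : k + 1 < h) (e1 : c k = a 1) :
    h = 3 ∧ (hgSet 3 a b ∩ hgSet h c d).ncard = 5 := by
  have hg1 := hmax1.1
  have hg2 := hmax2.1
  have hh2 := hg2.1
  have eA0B0 : G.Adj (a 0) (b 0) := hglay hg1 (by omega)
  have eA1B1 : G.Adj (a 1) (b 1) := hglay hg1 (by omega)
  have eA2B2 : G.Adj (a 2) (b 2) := hglay hg1 (by omega)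
  have eA0B1 : G.Adj (a 0) (b 1) := hgcr1 hg1 (by omega)
  have eA1B0 : G.Adj (a 1) (b 0) := hgcr2 hg1 (by omega)
  have eA1B2 : G.Adj (a 1) (b 2) := hgcr1 hg1 (by omega)
  have eA2B1 : G.Adj (a 2) (b 1) := hgcr2 hg1 (by omega)
  have nA01 : a 0 ≠ a 1 := hgcc hg1 (by omega) (by omega) (by omega)
  have nB01 : b 0 ≠ b 1 := hgdd hg1 (by omega) (by omega) (by omega)
  have nA02 : a 0 ≠ a 2 := hgcc hg1 (by omega) (by omega) (by omega)
  have nB02 : b 0 ≠ b 2 := hgdd hg1 (by omega) (by omega) (by omega)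
  have nA12 : a 1 ≠ a 2 := hgcc hg1 (by omega) (by omega) (by omega)
  have nB12 : b 1 ≠ b 2 := hgdd hg1 (by omega) (by omega) (by omega)
  have nAB00 : a 0 ≠ b 0 := hgcd hg1 (by omega) (by omega)
  have nAB01 : a 0 ≠ b 1 := hgcd hg1 (by omega) (by omega)
  have nAB02 : a 0 ≠ b 2 := hgcd hg1 (by omega) (by omega)
  have nAB10 : a 1 ≠ b 0 := hgcd hg1 (by omega) (by omega)
  have nAB11 : a 1 ≠ b 1 := hgcd hg1 (by omega) (by omega)
  have nAB12 : a 1 ≠ b 2 := hgcd hg1 (by omega) (by omega)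
  have nAB20 : a 2 ≠ b 0 := hgcd hg1 (by omega) (by omega)
  have nAB21 : a 2 ≠ b 1 := hgcd hg1 (by omega) (by omega)
  have nAB22 : a 2 ≠ b 2 := hgcd hg1 (by omega) (by omega)
  have na1 : ∀ t, G.Adj (a 1) t → t = b 0 ∨ t = b 1 ∨ t = b 2 := by
    intro t ht
    have := mid_c hdeg hg1 (i := 1) (by omega) (by omega) t ht
    simpa using this
  have nb1 : ∀ t, G.Adj (b 1) t → t = a 0 ∨ t = a 1 ∨ t = a 2 := by
    intro t ht
    have := mid_d hdeg hg1 (i := 1) (by omega) (by omega) t ht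
    simpa using this
  have hrev3 : hgSet 3 (fun i => a (3 - 1 - i)) (fun i => b (3 - 1 - i)) = hgSet 3 a b :=
    hgSet_rev (by omega)
  have hmax1' : IsMaxHourglass G 3 (fun i => a (3 - 1 - i)) (fun i => b (3 - 1 - i)) :=
    max_congr (hg_rev hdeg hg1) hrev3 hmax1
  have eb1 : G.Adj (c k) (b 1) := by rw [e1]; exact eA1B1
  have edk : G.Adj (a 1) (d k) := by rw [← e1]; exact hglay hg2 (by omega)
  rcases mid_c hdeg hg2 hk1 hk2 (b 1) eb1 with m | m | m
  · -- b 1 = d (k - 1) : reverse H2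
    have hBeq : hgSet h (fun i => c (h - 1 - i)) (fun i => d (h - 1 - i)) = hgSet h c d :=
      hgSet_rev (by omega)
    have hmax2' : IsMaxHourglass G h (fun i => c (h - 1 - i)) (fun i => d (h - 1 - i)) :=
      max_congr (hg_rev hdeg hg2) hBeq hmax2
    have hk1' : 1 ≤ h - 1 - k := by omega
    have hk2' : (h - 1 - k) + 1 < h := by omega
    have e1' : (fun i => c (h - 1 - i)) (h - 1 - k) = a 1 := by
      show c (h - 1 - (h - 1 - k)) = a 1
      rw [show h - 1 - (h - 1 - k) = k from by omega]
      exact e1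
    have e2' : (fun i => d (h - 1 - i)) ((h - 1 - k) + 1) = b 1 := by
      show d (h - 1 - (h - 1 - k + 1)) = b 1
      rw [show h - 1 - (h - 1 - k + 1) = k - 1 from by omega]
      exact m.symm
    rcases na1 _ edk with r | r | r
    · have e3' : (fun i => d (h - 1 - i)) (h - 1 - k) = b 0 := by
        show d (h - 1 - (h - 1 - k)) = b 0
        rw [show h - 1 - (h - 1 - k) = k from by omega]
        exact r
      have hres := CI hdeg hmax1 hmax2' (by rw [hBeq]; exact hne) hk1' hk2' e1' e2' e3'
      rw [hBeq] at hres
      exact hres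
    · exact absurd (r.trans m) (hgdd hg2 (by omega) (by omega) (by omega))
    · have e3' : (fun i => d (h - 1 - i)) (h - 1 - k) = (fun i => b (3 - 1 - i)) 0 := by
        show d (h - 1 - (h - 1 - k)) = b 2
        rw [show h - 1 - (h - 1 - k) = k from by omega]
        exact r
      have hres := CI hdeg hmax1' hmax2' (by rw [hBeq, hrev3]; exact hne) hk1' hk2' e1' e2' e3'
      rw [hBeq, hrev3] at hres
      exact hres
  · exact (CIa hdeg hmax1 hmax2 hne hk1 hk2 e1 m.symm).elim
  · -- b 1 = d (k + 1)
    rcases na1 _ edk with r | r | r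
    · exact CI hdeg hmax1 hmax2 hne hk1 hk2 e1 m.symm r
    · exact absurd (r.trans m) (hgdd hg2 (by omega) (by omega) (by omega))
    · have hres := CI hdeg hmax1' hmax2 (by rw [hrev3]; exact hne) hk1 hk2 e1 m.symm r
      rw [hrev3] at hres
      exact hres

end HGaux

namespace HGaux

set_option linter.unusedSectionVars false
set_option linter.unusedVariables false
set_option maxHeartbeats 1000000

variable {V : Type*} [Fintype V] {G : SimpleGraph V} [DecidableRel G.Adj]

lemma CII (hdeg : ∀ v : V, G.degree v ≤ 3) {a b : ℕ → V} {h : ℕ} {c d : ℕ → V}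
    (hmax1 : IsMaxHourglass G 3 a b) (hmax2 : IsMaxHourglass G h c d)
    (hne : hgSet 3 a b ≠ hgSet h c d)
    (hh3 : 3 ≤ h) (e1 : c 0 = a 1) (e2 : d 0 = b 1) (e3 : c 1 = a 0) :
    h = 3 ∧ (hgSet 3 a b ∩ hgSet h c d).ncard = 5 := by
  have hg1 := hmax1.1
  have hg2 := hmax2.1
  have hh2 := hg2.1
  have eA0B0 : G.Adj (a 0) (b 0) := hglay hg1 (by omega)
  have eA1B1 : G.Adj (a 1) (b 1) := hglay hg1 (by omega)
  have eA2B2 : G.Adj (a 2) (b 2) := hglay hg1 (by omega)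
  have eA0B1 : G.Adj (a 0) (b 1) := hgcr1 hg1 (by omega)
  have eA1B0 : G.Adj (a 1) (b 0) := hgcr2 hg1 (by omega)
  have eA1B2 : G.Adj (a 1) (b 2) := hgcr1 hg1 (by omega)
  have eA2B1 : G.Adj (a 2) (b 1) := hgcr2 hg1 (by omega)
  have nA01 : a 0 ≠ a 1 := hgcc hg1 (by omega) (by omega) (by omega)
  have nB01 : b 0 ≠ b 1 := hgdd hg1 (by omega) (by omega) (by omega)
  have nA02 : a 0 ≠ a 2 := hgcc hg1 (by omega) (by omega) (by omega)
  have nB02 : b 0 ≠ b 2 := hgdd hg1 (by omega) (by omega) (by omega)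
  have nA12 : a 1 ≠ a 2 := hgcc hg1 (by omega) (by omega) (by omega)
  have nB12 : b 1 ≠ b 2 := hgdd hg1 (by omega) (by omega) (by omega)
  have nAB00 : a 0 ≠ b 0 := hgcd hg1 (by omega) (by omega)
  have nAB01 : a 0 ≠ b 1 := hgcd hg1 (by omega) (by omega)
  have nAB02 : a 0 ≠ b 2 := hgcd hg1 (by omega) (by omega)
  have nAB10 : a 1 ≠ b 0 := hgcd hg1 (by omega) (by omega)
  have nAB11 : a 1 ≠ b 1 := hgcd hg1 (by omega) (by omega)
  have nAB12 : a 1 ≠ b 2 := hgcd hg1 (by omega) (by omega)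
  have nAB20 : a 2 ≠ b 0 := hgcd hg1 (by omega) (by omega)
  have nAB21 : a 2 ≠ b 1 := hgcd hg1 (by omega) (by omega)
  have nAB22 : a 2 ≠ b 2 := hgcd hg1 (by omega) (by omega)
  have na1 : ∀ t, G.Adj (a 1) t → t = b 0 ∨ t = b 1 ∨ t = b 2 := by
    intro t ht
    have := mid_c hdeg hg1 (i := 1) (by omega) (by omega) t ht
    simpa using this
  have nb1 : ∀ t, G.Adj (b 1) t → t = a 0 ∨ t = a 1 ∨ t = a 2 := by
    intro t ht
    have := mid_d hdeg hg1 (i := 1) (by omega) (by omega) t ht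
    simpa using this
  have na0' : ∀ t, G.Adj (a 0) t → t = d 0 ∨ t = d 1 ∨ t = d 2 := by
    intro t ht
    have := mid_c hdeg hg2 (i := 1) (by omega) (by omega) t (by rw [e3]; exact ht)
    simpa using this
  rcases na0' (b 0) eA0B0 with g | g | g
  · exact absurd (g.trans e2) nB01
  · -- b 0 = d 1 : main branch
    have eA0α : G.Adj (a 0) (d 2) := by rw [← e3]; exact hgcr1 hg2 (by omega)
    have eβb0 : G.Adj (c 2) (b 0) := by rw [g]; exact hgcr2 hg2 (by omega)
    have eβα : G.Adj (c 2) (d 2) := hglay hg2 (by omega)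
    have αb1 : d 2 ≠ b 1 := fun he =>
      hgdd hg2 (by omega) (by omega) (show (2:ℕ) ≠ 0 by omega) (he.trans e2.symm)
    have αb0 : d 2 ≠ b 0 := fun he =>
      hgdd hg2 (by omega) (by omega) (show (2:ℕ) ≠ 1 by omega) (he.trans g)
    have βa1 : c 2 ≠ a 1 := fun he =>
      hgcc hg2 (by omega) (by omega) (show (2:ℕ) ≠ 0 by omega) (he.trans e1.symm)
    have βa0 : c 2 ≠ a 0 := fun he =>
      hgcc hg2 (by omega) (by omega) (show (2:ℕ) ≠ 1 by omega) (he.trans e3.symm)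
    have αa0 : d 2 ≠ a 0 := fun he => hgcd hg2 (by omega) (by omega) (e3.trans he.symm)
    have αa1 : d 2 ≠ a 1 := fun he => hgcd hg2 (by omega) (by omega) (e1.trans he.symm)
    have βb1 : c 2 ≠ b 1 := fun he => hgcd hg2 (by omega) (by omega) (he.trans e2.symm)
    have βb0 : c 2 ≠ b 0 := fun he => hgcd hg2 (by omega) (by omega) (he.trans g)
    by_cases hαb2 : d 2 = b 2
    · by_cases hβa2 : c 2 = a 2
      · refine absurd (max_absurd hmax1 hg2 (subsetA ?_ ?_ ?_ ?_ ?_ ?_) hne) id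
        · rw [← e3]; exact memc (by omega)
        · rw [← e1]; exact memc (by omega)
        · rw [← hβa2]; exact memc (by omega)
        · rw [g]; exact memw (by omega)
        · rw [← e2]; exact memw (by omega)
        · rw [← hαb2]; exact memw (by omega)
      · by_cases hh4 : 4 ≤ h
        · have := mid_d hdeg hg2 (i := 2) (by omega) (by omega) (a 2)
            (by rw [hαb2]; exact eA2B2.symm)
          rw [show (2:ℕ) - 1 = 1 from rfl] at this
          rcases this with hh | hh | hh
          · exact absurd (hh.trans e3) (Ne.symm nA02)
          · exact absurd hh.symm hβa2
          · refine absurd (max_absurd hmax1 hg2 (subsetA ?_ ?_ ?_ ?_ ?_ ?_) hne) id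
            · rw [← e3]; exact memc (by omega)
            · rw [← e1]; exact memc (by omega)
            · rw [hh]; exact memc (by omega)
            · rw [g]; exact memw (by omega)
            · rw [← e2]; exact memw (by omega)
            · rw [← hαb2]; exact memw (by omega)
        · have hh' : h = 3 := by omega
          subst hh'
          refine ⟨rfl, ?_⟩
          have hA : hgSet 3 a b = insert (a 2) {a 0, a 1, b 0, b 1, b 2} := by
            rw [hg3_eq]
            ext x
            simp only [Set.mem_insert_iff, Set.mem_singleton_iff]
            tauto
          have hB : hgSet 3 c d = insert (c 2) {a 0, a 1, b 0, b 1, b 2} := by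
            rw [hg3_eq (a := c) (b := d), e1, e3, e2, ← g, hαb2]
            ext x
            simp only [Set.mem_insert_iff, Set.mem_singleton_iff]
            tauto
          rw [hA, hB, inter_insert ?hs ?ht]
          · exact ncard5 nA01 nAB00 nAB01 nAB02 nAB10 nAB11 nAB12 nB01 nB02 nB12
          case hs =>
            simp only [Set.mem_insert_iff, Set.mem_singleton_iff]
            push_neg
            exact ⟨fun he => hβa2 he.symm, Ne.symm nA02, Ne.symm nA12, nAB20, nAB21, nAB22⟩
          case ht =>
            simp only [Set.mem_insert_iff, Set.mem_singleton_iff]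
            push_neg
            exact ⟨hβa2, βa0, βa1, βb0, βb1,
              fun he => hgcd hg2 (by omega) (by omega) (he.trans hαb2.symm)⟩
    · by_cases hαa2 : d 2 = a 2
      · by_cases hβb2 : c 2 = b 2
        · refine absurd (max_absurd hmax1 hg2 (subsetA ?_ ?_ ?_ ?_ ?_ ?_) hne) id
          · rw [← e3]; exact memc (by omega)
          · rw [← e1]; exact memc (by omega)
          · rw [← hαa2]; exact memw (by omega)
          · rw [g]; exact memw (by omega)
          · rw [← e2]; exact memw (by omega)
          · rw [← hβb2]; exact memc (by omega)
        · -- degree contradiction at a 2 = d 2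
          exfalso
          have s1 : G.Adj (a 2) (a 0) := by
            have := eA0α
            rw [hαa2] at this
            exact this.symm
          have s2 : G.Adj (a 2) (c 2) := by rw [← hαa2]; exact eβα.symm
          have := adj_two hdeg nB12 eA2B1 eA2B2 s1 s2 nAB01 nAB02 βb1 hβb2
          exact βa0 this.symm
      · by_cases hβb2 : c 2 = b 2
        · -- degree contradiction at b 2 = c 2
          exfalso
          have s1 : G.Adj (b 2) (b 0) := by rw [← hβb2]; exact eβb0
          have s2 : G.Adj (b 2) (d 2) := by rw [← hβb2]; exact eβα
          have hd2a1 : d 2 ≠ a 1 := αa1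
          have := adj_two hdeg nA12 eA1B2.symm eA2B2.symm s1 s2
            (Ne.symm nAB10) (Ne.symm nAB20) hd2a1 hαa2
          exact hgdd hg2 (by omega) (by omega) (show (1:ℕ) ≠ 2 by omega) (g.symm.trans this)
        · by_cases hβa2 : c 2 = a 2
          · -- G3 good case or h ≥ 4 contra
            by_cases hh4 : 4 ≤ h
            · have := mid_c hdeg hg2 (i := 2) (by omega) (by omega) (b 2)
                (by rw [hβa2]; exact eA2B2)
              rw [show (2:ℕ) - 1 = 1 from rfl] at this
              rcases this with hh | hh | hh
              · exact absurd (hh.trans g.symm) (Ne.symm nB02)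
              · exact absurd hh.symm hαb2
              · refine absurd (max_absurd hmax1 hg2 (subsetA ?_ ?_ ?_ ?_ ?_ ?_) hne) id
                · rw [← e3]; exact memc (by omega)
                · rw [← e1]; exact memc (by omega)
                · rw [← hβa2]; exact memc (by omega)
                · rw [g]; exact memw (by omega)
                · rw [← e2]; exact memw (by omega)
                · rw [hh]; exact memw (by omega)
            · have hh' : h = 3 := by omega
              subst hh'
              refine ⟨rfl, ?_⟩
              have hA : hgSet 3 a b = insert (b 2) {a 0, a 1, a 2, b 0, b 1} := by
                rw [hg3_eq]
                ext x
                simp only [Set.mem_insert_iff, Set.mem_singleton_iff]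
                tauto
              have hB : hgSet 3 c d = insert (d 2) {a 0, a 1, a 2, b 0, b 1} := by
                rw [hg3_eq (a := c) (b := d), e1, e3, hβa2, e2, ← g]
                ext x
                simp only [Set.mem_insert_iff, Set.mem_singleton_iff]
                tauto
              rw [hA, hB, inter_insert ?hs ?ht]
              · exact ncard5 nA01 nA02 nAB00 nAB01 nA12 nAB10 nAB11 nAB20 nAB21 nB01
              case hs =>
                simp only [Set.mem_insert_iff, Set.mem_singleton_iff]
                push_neg
                exact ⟨fun he => hαb2 he.symm, Ne.symm nAB02, Ne.symm nAB12, Ne.symm nAB22,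
                  Ne.symm nB02, Ne.symm nB12⟩
              case ht =>
                simp only [Set.mem_insert_iff, Set.mem_singleton_iff]
                push_neg
                exact ⟨hαb2, αa0, αa1, hαa2, αb0, αb1⟩
          · -- both external : explicit height-4 hourglass
            exfalso
            have αβ : c 2 ≠ d 2 := hgcd hg2 (by omega) (by omega)
            obtain ⟨u', w', hg', hset'⟩ := mk4_ex hdeg
              (p0 := a 2) (p1 := a 1) (p2 := a 0) (p3 := c 2)
              (q0 := b 2) (q1 := b 1) (q2 := b 0) (q3 := d 2)
              (Ne.symm nA12) (Ne.symm nA02) (fun he => hβa2 he.symm)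
              (Ne.symm nA01) (Ne.symm βa1) (Ne.symm βa0)
              (Ne.symm nB12) (Ne.symm nB02) (fun he => hαb2 he.symm)
              (Ne.symm nB01) (Ne.symm αb1) (Ne.symm αb0)
              nAB22 nAB21 nAB20 (fun he => hαa2 he.symm)
              nAB12 nAB11 nAB10 (Ne.symm αa1)
              nAB02 nAB01 nAB00 (Ne.symm αa0)
              hβb2 βb1 βb0 αβ
              eA2B2 eA1B1 eA0B0 eβα eA2B1 eA1B2 eA1B0 eA0B1 eA0α eβb0
            apply max_absurd hmax1 hg' ?_ ?_
            · rw [hset']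
              apply subsetA <;> simp
            · intro heq
              have : d 2 ∈ hgSet 3 a b := by rw [heq, hset']; simp
              exact notin3 αa0 αa1 hαa2 αb0 αb1 hαb2 this
  · -- b 0 = d 2
    have et : G.Adj (a 1) (d 1) := by rw [← e1]; exact hgcr1 hg2 (by omega)
    rcases na1 _ et with r | r | r
    · exact ((hgdd hg2 (by omega) (by omega) (show (1:ℕ) ≠ 2 by omega)) (r.trans g)).elim
    · exact ((hgdd hg2 (by omega) (by omega) (show (1:ℕ) ≠ 0 by omega)) (r.trans e2.symm)).elim
    · -- d 1 = b 2
      have := mid_d hdeg hg2 (i := 1) (by omega) (by omega) (a 2)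
        (by rw [r]; exact eA2B2.symm)
      rw [show (1:ℕ) - 1 = 0 from rfl] at this
      rcases this with hh | hh | hh
      · exact ((Ne.symm nA12) (hh.trans e1)).elim
      · exact ((Ne.symm nA02) (hh.trans e3)).elim
      · refine absurd (max_absurd hmax1 hg2 (subsetA ?_ ?_ ?_ ?_ ?_ ?_) hne) id
        · rw [← e3]; exact memc (by omega)
        · rw [← e1]; exact memc (by omega)
        · rw [hh]; exact memc (by omega)
        · rw [g]; exact memw (by omega)
        · rw [← e2]; exact memw (by omega)
        · rw [← r]; exact memw (by omega)

end HGaux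

namespace HGaux

set_option linter.unusedSectionVars false
set_option linter.unusedVariables false
set_option maxHeartbeats 1000000

variable {V : Type*} [Fintype V] {G : SimpleGraph V} [DecidableRel G.Adj]

lemma P2h2 (hdeg : ∀ v : V, G.degree v ≤ 3) {a b : ℕ → V} {c d : ℕ → V}
    (hmax1 : IsMaxHourglass G 3 a b) (hmax2 : IsMaxHourglass G 2 c d)
    (hc0 : c 0 = a 1) (hd : d 0 = b 1 ∨ d 1 = b 1) : False := by
  have hg1 := hmax1.1
  have hg2 := hmax2.1
  have hh2 := hg2.1
  have eA0B0 : G.Adj (a 0) (b 0) := hglay hg1 (by omega)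
  have eA1B1 : G.Adj (a 1) (b 1) := hglay hg1 (by omega)
  have eA2B2 : G.Adj (a 2) (b 2) := hglay hg1 (by omega)
  have eA0B1 : G.Adj (a 0) (b 1) := hgcr1 hg1 (by omega)
  have eA1B0 : G.Adj (a 1) (b 0) := hgcr2 hg1 (by omega)
  have eA1B2 : G.Adj (a 1) (b 2) := hgcr1 hg1 (by omega)
  have eA2B1 : G.Adj (a 2) (b 1) := hgcr2 hg1 (by omega)
  have nA01 : a 0 ≠ a 1 := hgcc hg1 (by omega) (by omega) (by omega)
  have nB01 : b 0 ≠ b 1 := hgdd hg1 (by omega) (by omega) (by omega)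
  have nA02 : a 0 ≠ a 2 := hgcc hg1 (by omega) (by omega) (by omega)
  have nB02 : b 0 ≠ b 2 := hgdd hg1 (by omega) (by omega) (by omega)
  have nA12 : a 1 ≠ a 2 := hgcc hg1 (by omega) (by omega) (by omega)
  have nB12 : b 1 ≠ b 2 := hgdd hg1 (by omega) (by omega) (by omega)
  have nAB00 : a 0 ≠ b 0 := hgcd hg1 (by omega) (by omega)
  have nAB01 : a 0 ≠ b 1 := hgcd hg1 (by omega) (by omega)
  have nAB02 : a 0 ≠ b 2 := hgcd hg1 (by omega) (by omega)
  have nAB10 : a 1 ≠ b 0 := hgcd hg1 (by omega) (by omega)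
  have nAB11 : a 1 ≠ b 1 := hgcd hg1 (by omega) (by omega)
  have nAB12 : a 1 ≠ b 2 := hgcd hg1 (by omega) (by omega)
  have nAB20 : a 2 ≠ b 0 := hgcd hg1 (by omega) (by omega)
  have nAB21 : a 2 ≠ b 1 := hgcd hg1 (by omega) (by omega)
  have nAB22 : a 2 ≠ b 2 := hgcd hg1 (by omega) (by omega)
  have na1 : ∀ t, G.Adj (a 1) t → t = b 0 ∨ t = b 1 ∨ t = b 2 := by
    intro t ht
    have := mid_c hdeg hg1 (i := 1) (by omega) (by omega) t ht
    simpa using this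
  have nb1 : ∀ t, G.Adj (b 1) t → t = a 0 ∨ t = a 1 ∨ t = a 2 := by
    intro t ht
    have := mid_d hdeg hg1 (i := 1) (by omega) (by omega) t ht
    simpa using this
  have hBsub : (c 1 = a 0 ∨ c 1 = a 2) → (d 0 = b 0 ∨ d 0 = b 1 ∨ d 0 = b 2) →
      (d 1 = b 0 ∨ d 1 = b 1 ∨ d 1 = b 2) → hgSet 2 c d ⊆ hgSet 3 a b := by
    intro hs h0 h1
    rintro x ⟨i, hi, hx | hx⟩ <;> (have hi2 : i = 0 ∨ i = 1 := by omega) <;>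
      rcases hi2 with rfl | rfl
    · rw [hx, hc0]; exact memc (by omega)
    · rcases hs with s | s
      · rw [hx, s]; exact memc (by omega)
      · rw [hx, s]; exact memc (by omega)
    · rcases h0 with s | s | s <;> (rw [hx, s]; exact memw (by omega))
    · rcases h1 with s | s | s <;> (rw [hx, s]; exact memw (by omega))
  have final : (c 1 = a 0 ∨ c 1 = a 2) → (d 0 = b 0 ∨ d 0 = b 1 ∨ d 0 = b 2) →
      (d 1 = b 0 ∨ d 1 = b 1 ∨ d 1 = b 2) → False := by
    intro hs h0 h1
    have hw : ∃ w, w ∉ hgSet 2 c d ∧ w ∈ hgSet 3 a b := by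
      rcases hs with s | s
      · refine ⟨a 2, notin2 (fun he => nA12 (he.trans hc0).symm)
          (fun he => nA02 (he.trans s).symm) ?_ ?_, memc (by omega)⟩
        · rcases h0 with t | t | t
          · exact fun he => nAB20 (he.trans t)
          · exact fun he => nAB21 (he.trans t)
          · exact fun he => nAB22 (he.trans t)
        · rcases h1 with t | t | t
          · exact fun he => nAB20 (he.trans t)
          · exact fun he => nAB21 (he.trans t)
          · exact fun he => nAB22 (he.trans t)
      · refine ⟨a 0, notin2 (fun he => nA01 (he.trans hc0))
          (fun he => nA02 (he.trans s)) ?_ ?_, memc (by omega)⟩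
        · rcases h0 with t | t | t
          · exact fun he => nAB00 (he.trans t)
          · exact fun he => nAB01 (he.trans t)
          · exact fun he => nAB02 (he.trans t)
        · rcases h1 with t | t | t
          · exact fun he => nAB00 (he.trans t)
          · exact fun he => nAB01 (he.trans t)
          · exact fun he => nAB02 (he.trans t)
    obtain ⟨w, hwB, hwA⟩ := hw
    exact hmax2.2 ⟨3, a, b, hg1, Set.ssubset_iff_subset_ne.mpr
      ⟨hBsub hs h0 h1, fun heq => hwB (heq ▸ hwA)⟩⟩
  rcases hd with hd | hd
  · have ec1 : G.Adj (b 1) (c 1) := by rw [← hd]; exact (hgcr2 hg2 (by omega)).symm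
    have ed1 : G.Adj (a 1) (d 1) := by rw [← hc0]; exact hgcr1 hg2 (by omega)
    rcases nb1 _ ec1 with s | s | s
    · rcases na1 _ ed1 with t | t | t
      · exact final (Or.inl s) (Or.inr (Or.inl hd)) (Or.inl t)
      · exact hgdd hg2 (by omega) (by omega) (by omega) (t.trans hd.symm)
      · exact final (Or.inl s) (Or.inr (Or.inl hd)) (Or.inr (Or.inr t))
    · exact hgcc hg2 (by omega) (by omega) (by omega) (s.trans hc0.symm)
    · rcases na1 _ ed1 with t | t | t
      · exact final (Or.inr s) (Or.inr (Or.inl hd)) (Or.inl t)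
      · exact hgdd hg2 (by omega) (by omega) (by omega) (t.trans hd.symm)
      · exact final (Or.inr s) (Or.inr (Or.inl hd)) (Or.inr (Or.inr t))
  · have ec1 : G.Adj (b 1) (c 1) := by rw [← hd]; exact (hglay hg2 (by omega)).symm
    have ed0 : G.Adj (a 1) (d 0) := by rw [← hc0]; exact hglay hg2 (by omega)
    rcases nb1 _ ec1 with s | s | s
    · rcases na1 _ ed0 with t | t | t
      · exact final (Or.inl s) (Or.inl t) (Or.inr (Or.inl hd))
      · exact hgdd hg2 (by omega) (by omega) (by omega) (t.trans hd.symm)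
      · exact final (Or.inl s) (Or.inr (Or.inr t)) (Or.inr (Or.inl hd))
    · exact hgcc hg2 (by omega) (by omega) (by omega) (s.trans hc0.symm)
    · rcases na1 _ ed0 with t | t | t
      · exact final (Or.inr s) (Or.inl t) (Or.inr (Or.inl hd))
      · exact hgdd hg2 (by omega) (by omega) (by omega) (t.trans hd.symm)
      · exact final (Or.inr s) (Or.inr (Or.inr t)) (Or.inr (Or.inl hd))

end HGaux

namespace HGaux

set_option linter.unusedSectionVars false
set_option linter.unusedVariables false
set_option maxHeartbeats 1000000

variable {V : Type*} [Fintype V] {G : SimpleGraph V} [DecidableRel G.Adj]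

lemma P2 (hdeg : ∀ v : V, G.degree v ≤ 3) {a b : ℕ → V} {h : ℕ} {c d : ℕ → V}
    (hmax1 : IsMaxHourglass G 3 a b) (hmax2 : IsMaxHourglass G h c d)
    (hne : hgSet 3 a b ≠ hgSet h c d)
    (hA1 : a 1 ∈ hgSet h c d) (hB1 : b 1 ∈ hgSet h c d) :
    h = 3 ∧ (hgSet 3 a b ∩ hgSet h c d).ncard = 5 := by
  have hg1 := hmax1.1
  have hg2 := hmax2.1
  have hh2 := hg2.1
  have eA0B0 : G.Adj (a 0) (b 0) := hglay hg1 (by omega)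
  have eA1B1 : G.Adj (a 1) (b 1) := hglay hg1 (by omega)
  have eA2B2 : G.Adj (a 2) (b 2) := hglay hg1 (by omega)
  have eA0B1 : G.Adj (a 0) (b 1) := hgcr1 hg1 (by omega)
  have eA1B0 : G.Adj (a 1) (b 0) := hgcr2 hg1 (by omega)
  have eA1B2 : G.Adj (a 1) (b 2) := hgcr1 hg1 (by omega)
  have eA2B1 : G.Adj (a 2) (b 1) := hgcr2 hg1 (by omega)
  have nA01 : a 0 ≠ a 1 := hgcc hg1 (by omega) (by omega) (by omega)
  have nB01 : b 0 ≠ b 1 := hgdd hg1 (by omega) (by omega) (by omega)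
  have nA02 : a 0 ≠ a 2 := hgcc hg1 (by omega) (by omega) (by omega)
  have nB02 : b 0 ≠ b 2 := hgdd hg1 (by omega) (by omega) (by omega)
  have nA12 : a 1 ≠ a 2 := hgcc hg1 (by omega) (by omega) (by omega)
  have nB12 : b 1 ≠ b 2 := hgdd hg1 (by omega) (by omega) (by omega)
  have nAB00 : a 0 ≠ b 0 := hgcd hg1 (by omega) (by omega)
  have nAB01 : a 0 ≠ b 1 := hgcd hg1 (by omega) (by omega)
  have nAB02 : a 0 ≠ b 2 := hgcd hg1 (by omega) (by omega)
  have nAB10 : a 1 ≠ b 0 := hgcd hg1 (by omega) (by omega)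
  have nAB11 : a 1 ≠ b 1 := hgcd hg1 (by omega) (by omega)
  have nAB12 : a 1 ≠ b 2 := hgcd hg1 (by omega) (by omega)
  have nAB20 : a 2 ≠ b 0 := hgcd hg1 (by omega) (by omega)
  have nAB21 : a 2 ≠ b 1 := hgcd hg1 (by omega) (by omega)
  have nAB22 : a 2 ≠ b 2 := hgcd hg1 (by omega) (by omega)
  have na1 : ∀ t, G.Adj (a 1) t → t = b 0 ∨ t = b 1 ∨ t = b 2 := by
    intro t ht
    have := mid_c hdeg hg1 (i := 1) (by omega) (by omega) t ht
    simpa using this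
  have nb1 : ∀ t, G.Adj (b 1) t → t = a 0 ∨ t = a 1 ∨ t = a 2 := by
    intro t ht
    have := mid_d hdeg hg1 (i := 1) (by omega) (by omega) t ht
    simpa using this
  have hrev3 : hgSet 3 (fun i => a (3 - 1 - i)) (fun i => b (3 - 1 - i)) = hgSet 3 a b :=
    hgSet_rev (by omega)
  have hmax1' : IsMaxHourglass G 3 (fun i => a (3 - 1 - i)) (fun i => b (3 - 1 - i)) :=
    max_congr (hg_rev hdeg hg1) hrev3 hmax1
  obtain ⟨i, hi, hrepA⟩ := hA1
  by_cases hmidA : 1 ≤ i ∧ i + 1 < h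
  · rcases hrepA with hr | hr
    · exact CIP hdeg hmax1 hmax2 hne hmidA.1 hmidA.2 hr.symm
    · have hmax2s : IsMaxHourglass G h d c := max_congr (hg_swap hg2) hgSet_swap hmax2
      have hres := CIP hdeg hmax1 hmax2s
        (by rw [show hgSet h d c = hgSet h c d from hgSet_swap]; exact hne) hmidA.1 hmidA.2 hr.symm
      rw [show hgSet h d c = hgSet h c d from hgSet_swap] at hres
      exact hres
  · have hcorA : i = 0 ∨ i = h - 1 := by omega
    obtain ⟨c', d', hmax2', hBeq, hc'0⟩ := anchor_c0 hdeg hmax2 hi hcorA hrepA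
    have hg2' := hmax2'.1
    have hB1' : b 1 ∈ hgSet h c' d' := by rw [hBeq]; exact hB1
    have hne' : hgSet 3 a b ≠ hgSet h c' d' := by rw [hBeq]; exact hne
    obtain ⟨j, hj, hrepB⟩ := hB1'
    by_cases hmidB : 1 ≤ j ∧ j + 1 < h
    · have hmax1s : IsMaxHourglass G 3 b a := max_congr (hg_swap hg1) hgSet_swap hmax1
      have hnes : hgSet 3 b a ≠ hgSet h c' d' := by
        rw [show hgSet 3 b a = hgSet 3 a b from hgSet_swap]; exact hne'
      rcases hrepB with hr | hr
      · have hres := CIP hdeg hmax1s hmax2' hnes hmidB.1 hmidB.2 hr.symm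
        rw [show hgSet 3 b a = hgSet 3 a b from hgSet_swap, hBeq] at hres
        exact hres
      · have hmax2's : IsMaxHourglass G h d' c' := max_congr (hg_swap hg2') hgSet_swap hmax2'
        have hres := CIP hdeg hmax1s hmax2's
          (by rw [show hgSet h d' c' = hgSet h c' d' from hgSet_swap]; exact hnes)
          hmidB.1 hmidB.2 hr.symm
        rw [show hgSet 3 b a = hgSet 3 a b from hgSet_swap,
          show hgSet h d' c' = hgSet h c' d' from hgSet_swap, hBeq] at hres
        exact hres
    · have hcorB : j = 0 ∨ j = h - 1 := by omega
      rcases hrepB with hr | hr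
      · -- b 1 on the c'-side
        rcases hcorB with rfl | hje
        · exact ((Ne.symm nAB11) (hr.trans hc'0)).elim
        · rw [hje] at hr
          exfalso
          by_cases hh3 : 3 ≤ h
          · have ed0 : G.Adj (a 1) (d' 0) := by rw [← hc'0]; exact hglay hg2' (by omega)
            have ed1 : G.Adj (a 1) (d' 1) := by rw [← hc'0]; exact hgcr1 hg2' (by omega)
            have fd1 : G.Adj (b 1) (d' (h - 1)) := by rw [hr]; exact hglay hg2' (by omega)
            have fd2 : G.Adj (b 1) (d' (h - 2)) := by
              rw [hr]
              have := hgcr2 hg2' (show h - 2 + 1 < h by omega)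
              rwa [show h - 2 + 1 = h - 1 from by omega] at this
            have exS1 : d' (h - 1) ≠ a 1 :=
              fun s => hgcd hg2' (by omega) (by omega) (hc'0.trans s.symm)
            have exS2 : d' (h - 2) ≠ a 1 :=
              fun s => hgcd hg2' (by omega) (by omega) (hc'0.trans s.symm)
            have hSS : d' (h - 1) ≠ d' (h - 2) := hgdd hg2' (by omega) (by omega) (by omega)
            have exT1 : d' 0 ≠ b 1 :=
              fun t => hgcd hg2' (by omega) (by omega) (t.trans hr).symm
            have exT2 : d' 1 ≠ b 1 :=
              fun t => hgcd hg2' (by omega) (by omega) (t.trans hr).symm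
            have hTT : d' 0 ≠ d' 1 := hgdd hg2' (by omega) (by omega) (by omega)
            have ma02 : a 0 ∈ hgSet h c' d' ∧ a 2 ∈ hgSet h c' d' := by
              rcases nb1 _ fd1 with s | s | s
              · rcases nb1 _ fd2 with t | t | t
                · exact absurd (s.trans t.symm) hSS
                · exact absurd t exS2
                · exact ⟨by rw [← s]; exact memw (by omega), by rw [← t]; exact memw (by omega)⟩
              · exact absurd s exS1
              · rcases nb1 _ fd2 with t | t | t
                · exact ⟨by rw [← t]; exact memw (by omega), by rw [← s]; exact memw (by omega)⟩
                · exact absurd t exS2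
                · exact absurd (s.trans t.symm) hSS
            have mb02 : b 0 ∈ hgSet h c' d' ∧ b 2 ∈ hgSet h c' d' := by
              rcases na1 _ ed0 with s | s | s
              · rcases na1 _ ed1 with t | t | t
                · exact absurd (s.trans t.symm) hTT
                · exact absurd t exT2
                · exact ⟨by rw [← s]; exact memw (by omega), by rw [← t]; exact memw (by omega)⟩
              · exact absurd s exT1
              · rcases na1 _ ed1 with t | t | t
                · exact ⟨by rw [← t]; exact memw (by omega), by rw [← s]; exact memw (by omega)⟩
                · exact absurd t exT2
                · exact absurd (s.trans t.symm) hTT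
            exact max_absurd hmax1 hg2'
              (subsetA ma02.1 (by rw [← hc'0]; exact memc (by omega)) ma02.2
                mb02.1 (by rw [hr]; exact memc (by omega)) mb02.2) hne'
          · have hh' : h = 2 := by omega
            have ed0 : G.Adj (a 1) (d' 0) := by rw [← hc'0]; exact hglay hg2' (by omega)
            have fd0 : G.Adj (b 1) (d' 0) := by
              rw [hr]
              have := hgcr2 hg2' (show 0 + 1 < h by omega)
              have he : h - 1 = 0 + 1 := by omega
              rw [he]
              exact this
            rcases na1 _ ed0 with t | t | t <;> rcases nb1 _ fd0 with s | s | s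
            · exact nAB00 (s.symm.trans t)
            · exact nAB10 (s.symm.trans t)
            · exact nAB20 (s.symm.trans t)
            · exact nAB01 (s.symm.trans t)
            · exact nAB11 (s.symm.trans t)
            · exact nAB21 (s.symm.trans t)
            · exact nAB02 (s.symm.trans t)
            · exact nAB12 (s.symm.trans t)
            · exact nAB22 (s.symm.trans t)
      · -- b 1 on the d'-side
        rcases hcorB with rfl | hje
        · -- b 1 = d' 0
          by_cases hh3 : 3 ≤ h
          · have ec1 : G.Adj (b 1) (c' 1) := by rw [hr]; exact (hgcr2 hg2' (by omega)).symm
            rcases nb1 _ ec1 with s | s | s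
            · have hres := CII hdeg hmax1 hmax2' hne' hh3 hc'0 hr.symm s
              rw [hBeq] at hres
              exact hres
            · exact ((hgcc hg2' (by omega) (by omega) (show (1:ℕ) ≠ 0 by omega))
                (s.trans hc'0.symm)).elim
            · have hres := CII hdeg hmax1' hmax2' (by rw [hrev3]; exact hne') hh3
                hc'0 hr.symm s
              rw [hrev3, hBeq] at hres
              exact hres
          · have hh' : h = 2 := by omega
            subst hh'
            exact (P2h2 hdeg hmax1 hmax2' hc'0 (Or.inl hr.symm)).elim
        · rw [hje] at hr
          by_cases hh3 : 3 ≤ h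
          · exfalso
            have ed0 : G.Adj (a 1) (d' 0) := by rw [← hc'0]; exact hglay hg2' (by omega)
            have ed1 : G.Adj (a 1) (d' 1) := by rw [← hc'0]; exact hgcr1 hg2' (by omega)
            have fc1 : G.Adj (b 1) (c' (h - 1)) := by rw [hr]; exact (hglay hg2' (by omega)).symm
            have fc2 : G.Adj (b 1) (c' (h - 2)) := by
              rw [hr]
              have := hgcr1 hg2' (show h - 2 + 1 < h by omega)
              rw [show h - 2 + 1 = h - 1 from by omega] at this
              exact this.symm
            have exS1 : c' (h - 1) ≠ a 1 :=
              fun s => hgcc hg2' (by omega) (by omega) (show h - 1 ≠ 0 by omega)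
                (s.trans hc'0.symm)
            have exS2 : c' (h - 2) ≠ a 1 :=
              fun s => hgcc hg2' (by omega) (by omega) (show h - 2 ≠ 0 by omega)
                (s.trans hc'0.symm)
            have hSS : c' (h - 1) ≠ c' (h - 2) := hgcc hg2' (by omega) (by omega) (by omega)
            have exT1 : d' 0 ≠ b 1 :=
              fun t => hgdd hg2' (by omega) (by omega) (show (0:ℕ) ≠ h - 1 by omega)
                (t.trans hr)
            have exT2 : d' 1 ≠ b 1 :=
              fun t => hgdd hg2' (by omega) (by omega) (show (1:ℕ) ≠ h - 1 by omega)
                (t.trans hr)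
            have hTT : d' 0 ≠ d' 1 := hgdd hg2' (by omega) (by omega) (by omega)
            have ma02 : a 0 ∈ hgSet h c' d' ∧ a 2 ∈ hgSet h c' d' := by
              rcases nb1 _ fc1 with s | s | s
              · rcases nb1 _ fc2 with t | t | t
                · exact absurd (s.trans t.symm) hSS
                · exact absurd t exS2
                · exact ⟨by rw [← s]; exact memc (by omega), by rw [← t]; exact memc (by omega)⟩
              · exact absurd s exS1
              · rcases nb1 _ fc2 with t | t | t
                · exact ⟨by rw [← t]; exact memc (by omega), by rw [← s]; exact memc (by omega)⟩
                · exact absurd t exS2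
                · exact absurd (s.trans t.symm) hSS
            have mb02 : b 0 ∈ hgSet h c' d' ∧ b 2 ∈ hgSet h c' d' := by
              rcases na1 _ ed0 with s | s | s
              · rcases na1 _ ed1 with t | t | t
                · exact absurd (s.trans t.symm) hTT
                · exact absurd t exT2
                · exact ⟨by rw [← s]; exact memw (by omega), by rw [← t]; exact memw (by omega)⟩
              · exact absurd s exT1
              · rcases na1 _ ed1 with t | t | t
                · exact ⟨by rw [← t]; exact memw (by omega), by rw [← s]; exact memw (by omega)⟩
                · exact absurd t exT2
                · exact absurd (s.trans t.symm) hTT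
            exact max_absurd hmax1 hg2'
              (subsetA ma02.1 (by rw [← hc'0]; exact memc (by omega)) ma02.2
                mb02.1 (by rw [hr]; exact memw (by omega)) mb02.2) hne'
          · have hh' : h = 2 := by omega
            subst hh'
            exact (P2h2 hdeg hmax1 hmax2' hc'0 (Or.inr hr.symm)).elim

end HGaux

/-- two distinct overlapping maximal hourglasses, one of which has
height three, in a graph of maximum degree three, both have height three and
intersect in exactly five vertices. -/
theorem stmt_16 {V : Type*} [Fintype V] (G : SimpleGraph V) [DecidableRel G.Adj]
    (hdeg : ∀ v : V, G.degree v ≤ 3)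
    (h₂ : ℕ) (u₁ w₁ u₂ w₂ : ℕ → V)
    (hH₁ : IsMaxHourglass G 3 u₁ w₁) (hH₂ : IsMaxHourglass G h₂ u₂ w₂)
    (hne : hgSet 3 u₁ w₁ ≠ hgSet h₂ u₂ w₂)
    (hInter : (hgSet 3 u₁ w₁ ∩ hgSet h₂ u₂ w₂).Nonempty) :
    h₂ = 3 ∧ (hgSet 3 u₁ w₁ ∩ hgSet h₂ u₂ w₂).ncard = 5 := by
  obtain ⟨v, hv⟩ := hInter
  have hb1 : w₁ 1 ∈ hgSet h₂ u₂ w₂ := HGaux.P1 hdeg hH₁ hH₂ hv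
  have hmax1s : IsMaxHourglass G 3 w₁ u₁ :=
    HGaux.max_congr (HGaux.hg_swap hH₁.1) HGaux.hgSet_swap hH₁
  have hv' : v ∈ hgSet 3 w₁ u₁ ∩ hgSet h₂ u₂ w₂ :=
    ⟨by rw [show hgSet 3 w₁ u₁ = hgSet 3 u₁ w₁ from HGaux.hgSet_swap]; exact hv.1, hv.2⟩
  have ha1 : u₁ 1 ∈ hgSet h₂ u₂ w₂ := HGaux.P1 hdeg hmax1s hH₂ hv'
  exact HGaux.P2 hdeg hH₁ hH₂ hne ha1 hb1
end

section
/- In a bipartite hourglass of height h ≥ 5 with the corner cross edges present, the shifted matching is exchange-stable: let H be an hourglass of height h ≥ 5 with vertices u_0,...,u_{h-1}, w_0,...,w_{h-1} and additional edges {u_0, w_{h-1}} and {u_{h-1}, w_0} (so H is bipartite and every vertex has degree three). Then the matching M = {{u_{(i-1) mod h}, w_i} : 0 ≤ i ≤ h-1} is a perfect matching of H, and M admits no exchange-blocking pair within H under any strict preferences each agent has over its (at most three) neighbors. -/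
/-!
Index the hourglass cyclically, so that `u i` is adjacent to `w (i - 1)`, `w i`, `w (i + 1)` and
the matching sends `u i ↦ w (i + 1)`, `w i ↦ u (i - 1)` (indices mod `h`). By the degree bound
these are all the neighbours of `u i`, and symmetrically for `w i`. An exchange-blocking pair
`x, y` needs `x ~ M y` and `y ~ M x`, i.e. a 4-cycle `x, M x, y, M y` through two matched edges.
As the graph is bipartite, `x` and `y` lie on the same side, say `u i` and `u j`; then
`j + 1 ∈ {i - 1, i, i + 1}` and `i + 1 ∈ {j - 1, j, j + 1}` mod `h`, so `j - i` lies in both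
`{-2, -1, 0}` and `{0, 1, 2}`, which for `h ≥ 5` forces `i = j`.
-/

theorem SimpleGraph.eq_or_eq_or_eq_of_degree_le_three_s17 {V : Type*} [Fintype V]
    {G : SimpleGraph V} [DecidableRel G.Adj] {v a b c x : V} (hdeg : G.degree v ≤ 3)
    (ha : G.Adj v a) (hb : G.Adj v b) (hc : G.Adj v c)
    (hab : a ≠ b) (hac : a ≠ c) (hbc : b ≠ c) (hx : G.Adj v x) :
    x = a ∨ x = b ∨ x = c := by
  classical
  have hsub : ({a, b, c} : Finset V) ⊆ G.neighborFinset v := by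
    simp [Finset.insert_subset_iff, ha, hb, hc]
  have hcard : ({a, b, c} : Finset V).card = 3 :=
    Finset.card_eq_three.mpr ⟨a, b, c, hab, hac, hbc, rfl⟩
  have hnbrs := Finset.eq_of_subset_of_card_le hsub
    (by rw [hcard, G.card_neighborFinset_eq_degree]; exact hdeg)
  have hmem : x ∈ ({a, b, c} : Finset V) := hnbrs ▸ (G.mem_neighborFinset v x).mpr hx
  simpa using hmem

section Cyclic

variable {h i j : ℕ}

def cycSucc (h i : ℕ) : ℕ := (i + 1) % h

-- `h - 1` stands for `-1`, avoiding truncated subtraction at `i = 0`.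
def cycPred (h i : ℕ) : ℕ := (i + (h - 1)) % h

def CycNear (h i j : ℕ) : Prop := j = cycPred h i ∨ j = i ∨ j = cycSucc h i

theorem cycSucc_lt (hh : 0 < h) : cycSucc h i < h := Nat.mod_lt _ hh

theorem cycPred_lt (hh : 0 < h) : cycPred h i < h := Nat.mod_lt _ hh

theorem cycSucc_cases (hi : i < h) :
    (i + 1 < h ∧ cycSucc h i = i + 1) ∨ (i + 1 = h ∧ cycSucc h i = 0) := by
  rcases Nat.lt_or_ge (i + 1) h with hlt | hge
  · exact Or.inl ⟨hlt, Nat.mod_eq_of_lt hlt⟩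
  · have hsucc : i + 1 = h := by omega
    exact Or.inr ⟨hsucc, by rw [cycSucc, hsucc, Nat.mod_self]⟩

theorem cycPred_cases (hi : i < h) :
    (i = 0 ∧ cycPred h i = h - 1) ∨ (0 < i ∧ cycPred h i = i - 1) := by
  rcases Nat.eq_zero_or_pos i with rfl | hpos
  · exact Or.inl ⟨rfl, by rw [cycPred, Nat.zero_add, Nat.mod_eq_of_lt (by omega)]⟩
  · refine Or.inr ⟨hpos, ?_⟩
    rw [cycPred, show i + (h - 1) = i - 1 + h by omega, Nat.add_mod_right,
      Nat.mod_eq_of_lt (by omega)]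

theorem cycPred_cycSucc (hi : i < h) : cycPred h (cycSucc h i) = i := by
  rcases cycSucc_cases hi with ⟨_, hs⟩ | ⟨_, hs⟩ <;>
    rcases cycPred_cases (cycSucc_lt (i := i) (by omega : 0 < h)) with ⟨_, hp⟩ | ⟨_, hp⟩ <;>
      omega

theorem cycSucc_cycPred (hi : i < h) : cycSucc h (cycPred h i) = i := by
  rcases cycPred_cases hi with ⟨_, hp⟩ | ⟨_, hp⟩ <;>
    rcases cycSucc_cases (cycPred_lt (i := i) (by omega : 0 < h)) with ⟨_, hs⟩ | ⟨_, hs⟩ <;>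
      omega

theorem eq_of_cycNear_cycSucc (hh : 5 ≤ h) (hi : i < h) (hj : j < h)
    (hij : CycNear h i (cycSucc h j)) (hji : CycNear h j (cycSucc h i)) : i = j := by
  unfold CycNear at hij hji
  rcases cycSucc_cases hi with ⟨_, _⟩ | ⟨_, _⟩ <;>
    rcases cycSucc_cases hj with ⟨_, _⟩ | ⟨_, _⟩ <;>
    rcases cycPred_cases hi with ⟨_, _⟩ | ⟨_, _⟩ <;>
    rcases cycPred_cases hj with ⟨_, _⟩ | ⟨_, _⟩ <;>
    omega

theorem eq_of_cycNear_cycPred (hh : 5 ≤ h) (hi : i < h) (hj : j < h)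
    (hij : CycNear h i (cycPred h j)) (hji : CycNear h j (cycPred h i)) : i = j := by
  unfold CycNear at hij hji
  rcases cycSucc_cases hi with ⟨_, _⟩ | ⟨_, _⟩ <;>
    rcases cycSucc_cases hj with ⟨_, _⟩ | ⟨_, _⟩ <;>
    rcases cycPred_cases hi with ⟨_, _⟩ | ⟨_, _⟩ <;>
    rcases cycPred_cases hj with ⟨_, _⟩ | ⟨_, _⟩ <;>
    omega

end Cyclic

namespace IsHourglass

variable {V : Type*} {G : SimpleGraph V} {h i j : ℕ} {u w : ℕ → V}

theorem swap (hH : IsHourglass G h u w) : IsHourglass G h w u := by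
  obtain ⟨h2, hu, hw, huw, hrung, hcross, hmid⟩ := hH
  refine ⟨h2, hw, hu, fun i hi j hj => (huw j hj i hi).symm, fun i hi => (hrung i hi).symm,
    fun i hi => ⟨(hcross i hi).2.symm, (hcross i hi).1.symm⟩, fun i hi hi' => ?_⟩
  obtain ⟨hwu, huu, huw', hww⟩ := hmid i hi hi'
  exact ⟨huw', hww, hwu, huu⟩

theorem adj_cycSucc (hH : IsHourglass G h u w) (hc : G.Adj (u (h - 1)) (w 0)) (hi : i < h) :
    G.Adj (u i) (w (cycSucc h i)) := by
  obtain ⟨-, -, -, -, -, hcross, -⟩ := hH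
  rcases cycSucc_cases hi with ⟨hlt, hs⟩ | ⟨hsucc, hs⟩
  · rw [hs]; exact (hcross i hlt).1
  · rw [hs, show i = h - 1 by omega]; exact hc

theorem adj_cycPred (hH : IsHourglass G h u w) (hc : G.Adj (u 0) (w (h - 1))) (hi : i < h) :
    G.Adj (u i) (w (cycPred h i)) := by
  obtain ⟨-, -, -, -, -, hcross, -⟩ := hH
  rcases cycPred_cases hi with ⟨rfl, hp⟩ | ⟨hpos, hp⟩
  · rw [hp]; exact hc
  · rw [hp]
    simpa [Nat.sub_add_cancel hpos] using (hcross (i - 1) (by omega)).2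

variable [Fintype V] [DecidableRel G.Adj]

theorem eq_of_adj (hH : IsHourglass G h u w) (hh : 3 ≤ h) (hc1 : G.Adj (u 0) (w (h - 1)))
    (hc2 : G.Adj (u (h - 1)) (w 0)) (hdeg : G.degree (u i) ≤ 3) (hi : i < h) {x : V}
    (hx : G.Adj (u i) x) : x = w (cycPred h i) ∨ x = w i ∨ x = w (cycSucc h i) := by
  have hw := hH.2.2.1
  have hp := cycPred_lt (i := i) (by omega : 0 < h)
  have hs := cycSucc_lt (i := i) (by omega : 0 < h)
  have hdist : cycPred h i ≠ i ∧ cycPred h i ≠ cycSucc h i ∧ i ≠ cycSucc h i := by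
    rcases cycSucc_cases hi with ⟨_, _⟩ | ⟨_, _⟩ <;>
      rcases cycPred_cases hi with ⟨_, _⟩ | ⟨_, _⟩ <;> omega
  exact SimpleGraph.eq_or_eq_or_eq_of_degree_le_three_s17 hdeg (hH.adj_cycPred hc1 hi)
    (hH.2.2.2.2.1 i hi) (hH.adj_cycSucc hc2 hi) ((hw.ne_iff hp hi).mpr hdist.1)
    ((hw.ne_iff hp hs).mpr hdist.2.1) ((hw.ne_iff hi hs).mpr hdist.2.2) hx

theorem cycNear_of_adj (hH : IsHourglass G h u w) (hh : 3 ≤ h) (hc1 : G.Adj (u 0) (w (h - 1)))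
    (hc2 : G.Adj (u (h - 1)) (w 0)) (hdeg : G.degree (u i) ≤ 3) (hi : i < h) (hj : j < h)
    (hadj : G.Adj (u i) (w j)) : CycNear h i j := by
  have hpos : 0 < h := by omega
  have hw := hH.2.2.1
  rcases hH.eq_of_adj hh hc1 hc2 hdeg hi hadj with he | he | he
  · exact Or.inl (hw hj (cycPred_lt hpos) he)
  · exact Or.inr (Or.inl (hw hj hi he))
  · exact Or.inr (Or.inr (hw hj (cycSucc_lt hpos) he))

theorem not_adj_left (hH : IsHourglass G h u w) (hh : 3 ≤ h) (hc1 : G.Adj (u 0) (w (h - 1)))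
    (hc2 : G.Adj (u (h - 1)) (w 0)) (hdeg : G.degree (u i) ≤ 3) (hi : i < h) (hj : j < h) :
    ¬ G.Adj (u i) (u j) := by
  have hpos : 0 < h := by omega
  have huw := hH.2.2.2.1
  intro hadj
  rcases hH.eq_of_adj hh hc1 hc2 hdeg hi hadj with he | he | he
  · exact huw j hj _ (cycPred_lt hpos) he
  · exact huw j hj i hi he
  · exact huw j hj _ (cycSucc_lt hpos) he

theorem eq_of_adj_of_adj_shift (hH : IsHourglass G h u w) (hh : 5 ≤ h)
    (hc1 : G.Adj (u 0) (w (h - 1))) (hc2 : G.Adj (u (h - 1)) (w 0))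
    (hdeg : ∀ v, G.degree v ≤ 3) {M : V → V}
    (hMu : ∀ i < h, M (u i) = w (cycSucc h i)) (hMw : ∀ i < h, M (w i) = u (cycPred h i))
    {x y : V} (hx : x ∈ hgSet h u w) (hy : y ∈ hgSet h u w)
    (hxy : G.Adj x (M y)) (hyx : G.Adj y (M x)) : x = y := by
  have hpos : 0 < h := by omega
  have h3 : 3 ≤ h := by omega
  obtain ⟨i, hi, rfl | rfl⟩ := hx <;> obtain ⟨j, hj, rfl | rfl⟩ := hy
  · rw [hMu j hj] at hxy
    rw [hMu i hi] at hyx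
    rw [eq_of_cycNear_cycSucc hh hi hj
      (hH.cycNear_of_adj h3 hc1 hc2 (hdeg _) hi (cycSucc_lt hpos) hxy)
      (hH.cycNear_of_adj h3 hc1 hc2 (hdeg _) hj (cycSucc_lt hpos) hyx)]
  · rw [hMw j hj] at hxy
    exact absurd hxy (hH.not_adj_left h3 hc1 hc2 (hdeg _) hi (cycPred_lt hpos))
  · rw [hMu j hj] at hxy
    exact absurd hxy (hH.swap.not_adj_left h3 hc2.symm hc1.symm (hdeg _) hi (cycSucc_lt hpos))
  · rw [hMw j hj] at hxy
    rw [hMw i hi] at hyx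
    rw [eq_of_cycNear_cycPred hh hi hj
      (hH.swap.cycNear_of_adj h3 hc2.symm hc1.symm (hdeg _) hi (cycPred_lt hpos) hxy)
      (hH.swap.cycNear_of_adj h3 hc2.symm hc1.symm (hdeg _) hj (cycPred_lt hpos) hyx)]

end IsHourglass

/-- in a bipartite hourglass of height `h ≥ 5` with both corner
cross edges present (in a graph of maximum degree three), the shifted matching
`M (w i) = u ((i-1) mod h)` is a perfect matching of the hourglass and admits no
exchange-blocking pair within the hourglass under any strict preferences the
agents have over their neighbours. -/
theorem stmt_17 {V : Type*} [Fintype V] (G : SimpleGraph V) [DecidableRel G.Adj]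
    (hdeg : ∀ v : V, G.degree v ≤ 3)
    (h : ℕ) (u w : ℕ → V) (hH : IsHourglass G h u w) (hh : 5 ≤ h)
    (hc1 : G.Adj (u 0) (w (h - 1))) (hc2 : G.Adj (u (h - 1)) (w 0))
    (M : V → V)
    (hMu : ∀ i < h, M (u i) = w ((i + 1) % h))
    (hMw : ∀ i < h, M (w i) = u ((i + (h - 1)) % h)) :
    (∀ i < h, G.Adj (u i) (M (u i)) ∧ G.Adj (w i) (M (w i)) ∧
        M (M (u i)) = u i ∧ M (M (w i)) = w i) ∧
    (∀ pref : V → V → V → Prop,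
        (∀ v p q, pref v p q → G.Adj v p ∧ G.Adj v q) →
        (∀ v p, ¬ pref v p p) →
        ¬ ∃ x ∈ hgSet h u w, ∃ y ∈ hgSet h u w,
            x ≠ y ∧ pref x (M y) (M x) ∧ pref y (M x) (M y)) := by
  have hpos : 0 < h := by omega
  replace hMu : ∀ i < h, M (u i) = w (cycSucc h i) := hMu
  replace hMw : ∀ i < h, M (w i) = u (cycPred h i) := hMw
  refine ⟨fun i hi => ⟨?_, ?_, ?_, ?_⟩, ?_⟩
  · rw [hMu i hi]; exact hH.adj_cycSucc hc2 hi
  · rw [hMw i hi]; exact hH.swap.adj_cycPred hc2.symm hi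
  · rw [hMu i hi, hMw _ (cycSucc_lt hpos), cycPred_cycSucc hi]
  · rw [hMw i hi, hMu _ (cycPred_lt hpos), cycSucc_cycPred hi]
  · rintro pref hpref - ⟨x, hx, y, hy, hne, hprefx, hprefy⟩
    exact hne (hH.eq_of_adj_of_adj_shift hh hc1 hc2 hdeg hMu hMw hx hy
      (hpref _ _ _ hprefx).1 (hpref _ _ _ hprefy).1)
end

section
/- Dynamic programming recurrence for exchange-stable perfect matchings on hourglasses: let H be an hourglass of height h where every perfect matching either matches each layer i horizontally ({u_i,w_i} ∈ M) or cross-matches consecutive layers i-1 and i ({u_{i-1},w_i},{u_i,w_{i-1}} ⊆ M). Define D_h[i] (resp. D_c[i]) to be true iff the sub-hourglass on layers 0..i has a perfect exchange-stable matching in which layer i is horizontally matched (resp. layers i-1 and i are cross-matched). Then for all 2 ≤ i ≤ h-1: D_h[i] = D_c[i-1] ∨ (D_h[i-1] ∧ τ_h^{i-1,i}) and D_c[i] = (D_c[i-2] ∨ D_h[i-2]) ∧ τ_c^{i-1,i}, where τ_h^{i-1,i} (resp. τ_c^{i-1,i}) is true iff horizontally matching (resp. cross-matching) layers i-1 and i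 is exchange-stable restricted to the four agents u_{i-1}, w_{i-1}, u_i, w_i. -/
/-- Acceptability inside an hourglass with layers `(u i, w i)`, `i < h`:
`u i` finds acceptable exactly `w (i-1)`, `w i`, `w (i+1)` (within range), and
symmetrically for `w i`. -/
def HGAdj {V : Type*} (h : ℕ) (u w : ℕ → V) (x y : V) : Prop :=
  ∃ i < h, ∃ j < h,
    ((x = u i ∧ y = w j) ∨ (x = w i ∧ y = u j)) ∧ (i = j ∨ i + 1 = j ∨ j + 1 = i)

/-- Layer `z` is horizontally matched by `M`. -/
def HorizAt {V : Type*} (u w : ℕ → V) (M : V → V) (z : ℕ) : Prop :=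
  M (u z) = w z ∧ M (w z) = u z

/-- Layers `z - 1` and `z` are cross-matched by `M`. -/
def CrossAt {V : Type*} (u w : ℕ → V) (M : V → V) (z : ℕ) : Prop :=
  1 ≤ z ∧ M (u z) = w (z - 1) ∧ M (u (z - 1)) = w z ∧
    M (w z) = u (z - 1) ∧ M (w (z - 1)) = u z

/-- `M` perfectly matches the sub-hourglass on layers `0, …, i`, decomposing
into horizontal and cross matches. -/
def PerfectUpTo {V : Type*} (u w : ℕ → V) (M : V → V) (i : ℕ) : Prop :=
  ∀ z ≤ i, HorizAt u w M z ∨ CrossAt u w M z ∨ (z + 1 ≤ i ∧ CrossAt u w M (z + 1))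

/-- The agents of layers `0, …, i`. -/
def LayerSet {V : Type*} (u w : ℕ → V) (i : ℕ) : Set V :=
  {v | ∃ z ≤ i, v = u z ∨ v = w z}

/-- No exchange-blocking pair of `M` among the agents of `S`. -/
def StableAmong {V : Type*} (pref : V → V → V → Prop) (M : V → V) (S : Set V) : Prop :=
  ¬ ∃ x ∈ S, ∃ y ∈ S, x ≠ y ∧ pref x (M y) (M x) ∧ pref y (M x) (M y)

/-- `D_h[i]`: the sub-hourglass on layers `0, …, i` admits a perfect
exchange-stable matching in which layer `i` is horizontally matched. -/
def Dh {V : Type*} (pref : V → V → V → Prop) (u w : ℕ → V) (i : ℕ) : Prop :=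
  ∃ M : V → V, PerfectUpTo u w M i ∧ StableAmong pref M (LayerSet u w i) ∧
    HorizAt u w M i

/-- `D_c[i]`: the sub-hourglass on layers `0, …, i` admits a perfect
exchange-stable matching in which layers `i - 1` and `i` are cross-matched. -/
def Dc {V : Type*} (pref : V → V → V → Prop) (u w : ℕ → V) (i : ℕ) : Prop :=
  ∃ M : V → V, PerfectUpTo u w M i ∧ StableAmong pref M (LayerSet u w i) ∧
    CrossAt u w M i

/-- The matching that horizontally matches layers `i - 1` and `i`. -/
def horizM {V : Type*} [DecidableEq V] (u w : ℕ → V) (i : ℕ) : V → V := fun v =>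
  if v = u (i - 1) then w (i - 1) else if v = u i then w i
  else if v = w (i - 1) then u (i - 1) else if v = w i then u i else v

/-- The matching that cross-matches layers `i - 1` and `i`. -/
def crossM {V : Type*} [DecidableEq V] (u w : ℕ → V) (i : ℕ) : V → V := fun v =>
  if v = u (i - 1) then w i else if v = u i then w (i - 1)
  else if v = w (i - 1) then u i else if v = w i then u (i - 1) else v

/-- `τ_h^{i-1,i}`: horizontally matching layers `i - 1` and `i` is
exchange-stable restricted to the four agents of those layers. -/
def tauH {V : Type*} [DecidableEq V] (pref : V → V → V → Prop) (u w : ℕ → V) (i : ℕ) : Prop :=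
  StableAmong pref (horizM u w i) {u (i - 1), w (i - 1), u i, w i}

/-- `τ_c^{i-1,i}`: cross-matching layers `i - 1` and `i` is exchange-stable
restricted to the four agents of those layers. -/
def tauC {V : Type*} [DecidableEq V] (pref : V → V → V → Prop) (u w : ℕ → V) (i : ℕ) : Prop :=
  StableAmong pref (crossM u w i) {u (i - 1), w (i - 1), u i, w i}

/-! Agents of different layers are different, and an acceptable partner lies in the same or an
adjacent layer. The forward implications restrict a matching to the lower layers. For the
backward ones, a matching `M` of layers `0, …, j` is glued to a horizontal or crossed top block.
A blocking pair of an agent `y` of the block and an agent `x` below it needs `M x` acceptable to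
`y` and `M y` acceptable to `x`, which puts `x`, `M x`, `y` and `M y` in the two layers where
the block meets the rest. No agent of a crossed block shares its layer with its partner; below a
horizontal block, `x` and `M x` share layer `j` only if `M` matches layer `j` horizontally, and
then the pair lies among the four agents that `τ_h` speaks about. -/

structure DistinctAgents {V : Type*} (h : ℕ) (u w : ℕ → V) : Prop where
  injOn_u : Set.InjOn u (Set.Iio h)
  injOn_w : Set.InjOn w (Set.Iio h)
  u_ne_w : ∀ i < h, ∀ j < h, u i ≠ w j

def InLayer {V : Type*} (u w : ℕ → V) (z : ℕ) (v : V) : Prop :=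
  v = u z ∨ v = w z

open Set

section Hourglass

variable {V : Type*} {h : ℕ} {u w : ℕ → V} {M M' : V → V} {pref : V → V → V → Prop}
  {x y v : V} {a b j k z : ℕ}

theorem DistinctAgents.layer_eq (H : DistinctAgents h u w) (hva : InLayer u w a v)
    (hvb : InLayer u w b v) (ha : a < h) (hb : b < h) : a = b := by
  rcases hva with rfl | rfl <;> rcases hvb with e | e
  · exact H.injOn_u ha hb e
  · exact absurd e (H.u_ne_w a ha b hb)
  · exact absurd e.symm (H.u_ne_w b hb a ha)
  · exact H.injOn_w ha hb e

theorem DistinctAgents.u_ne_u (H : DistinctAgents h u w) (ha : a < h) (hb : b < h)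
    (hab : a ≠ b) : u a ≠ u b :=
  fun e => hab (H.injOn_u ha hb e)

theorem DistinctAgents.w_ne_w (H : DistinctAgents h u w) (ha : a < h) (hb : b < h)
    (hab : a ≠ b) : w a ≠ w b :=
  fun e => hab (H.injOn_w ha hb e)

theorem DistinctAgents.notMem_layerSet (H : DistinctAgents h u w) (hv : InLayer u w a v)
    (ha : a < h) (hja : j < a) : v ∉ LayerSet u w j := by
  rintro ⟨z, hz, hvz⟩
  have := H.layer_eq hv hvz ha (by omega)
  omega

theorem HGAdj.ne (H : DistinctAgents h u w) (hxy : HGAdj h u w x y) : x ≠ y := by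
  obtain ⟨i, hi, j, hj, ⟨rfl, rfl⟩ | ⟨rfl, rfl⟩, -⟩ := hxy
  · exact H.u_ne_w i hi j hj
  · exact fun e => H.u_ne_w j hj i hi e.symm

theorem HGAdj.layer_le (H : DistinctAgents h u w) (hxy : HGAdj h u w x y)
    (hx : InLayer u w a x) (hy : InLayer u w b y) (ha : a < h) (hb : b < h) :
    a ≤ b + 1 ∧ b ≤ a + 1 := by
  obtain ⟨i, hi, j, hj, hxy, hij⟩ := hxy
  have hlayers : InLayer u w i x ∧ InLayer u w j y := by
    rcases hxy with ⟨rfl, rfl⟩ | ⟨rfl, rfl⟩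
    · exact ⟨Or.inl rfl, Or.inr rfl⟩
    · exact ⟨Or.inr rfl, Or.inl rfl⟩
  obtain rfl := H.layer_eq hx hlayers.1 ha hi
  obtain rfl := H.layer_eq hy hlayers.2 hb hj
  omega

theorem layerSet_mono (hjk : j ≤ k) : LayerSet u w j ⊆ LayerSet u w k :=
  fun _ ⟨z, hz, hv⟩ => ⟨z, hz.trans hjk, hv⟩

theorem layerSet_succ : LayerSet u w (j + 1) = LayerSet u w j ∪ {u (j + 1), w (j + 1)} := by
  ext v
  constructor
  · rintro ⟨z, hz, hv⟩
    rcases Nat.lt_or_ge z (j + 1) with hlt | hge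
    · exact Or.inl ⟨z, by omega, hv⟩
    · obtain rfl : z = j + 1 := by omega
      exact Or.inr hv
  · rintro (⟨z, hz, hv⟩ | hv)
    · exact ⟨z, by omega, hv⟩
    · exact ⟨j + 1, le_rfl, hv⟩

theorem layerSet_add_two :
    LayerSet u w (j + 2) = LayerSet u w j ∪ {u (j + 1), w (j + 1), u (j + 2), w (j + 2)} := by
  rw [layerSet_succ, layerSet_succ, union_assoc, insert_union, singleton_union]

theorem two_layers_subset_layerSet (hk : j + 1 ≤ k) :
    ({u j, w j, u (j + 1), w (j + 1)} : Set V) ⊆ LayerSet u w k := by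
  rintro v (rfl | rfl | rfl | rfl)
  · exact ⟨j, by omega, Or.inl rfl⟩
  · exact ⟨j, by omega, Or.inr rfl⟩
  · exact ⟨j + 1, hk, Or.inl rfl⟩
  · exact ⟨j + 1, hk, Or.inr rfl⟩

theorem HorizAt.congr (hM : HorizAt u w M z) (hMM : ∀ v, InLayer u w z v → M' v = M v) :
    HorizAt u w M' z :=
  ⟨(hMM _ (Or.inl rfl)).trans hM.1, (hMM _ (Or.inr rfl)).trans hM.2⟩

theorem CrossAt.congr (hM : CrossAt u w M z)
    (hMM : ∀ v, InLayer u w (z - 1) v ∨ InLayer u w z v → M' v = M v) : CrossAt u w M' z :=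
  ⟨hM.1, (hMM _ (Or.inr (Or.inl rfl))).trans hM.2.1, (hMM _ (Or.inl (Or.inl rfl))).trans hM.2.2.1,
    (hMM _ (Or.inr (Or.inr rfl))).trans hM.2.2.2.1, (hMM _ (Or.inl (Or.inr rfl))).trans hM.2.2.2.2⟩

theorem CrossAt.inLayer_pred (hM : CrossAt u w M z) (hv : InLayer u w z v) :
    InLayer u w (z - 1) (M v) := by
  rcases hv with rfl | rfl
  · exact Or.inr hM.2.1
  · exact Or.inl hM.2.2.2.1

theorem CrossAt.inLayer_succ (hM : CrossAt u w M z) (hv : InLayer u w (z - 1) v) :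
    InLayer u w z (M v) := by
  rcases hv with rfl | rfl
  · exact Or.inr hM.2.2.1
  · exact Or.inl hM.2.2.2.2

theorem PerfectUpTo.horizAt_or_crossAt (hM : PerfectUpTo u w M j) :
    HorizAt u w M j ∨ CrossAt u w M j := by
  rcases hM j le_rfl with hh | hc | ⟨hj, -⟩
  · exact Or.inl hh
  · exact Or.inr hc
  · omega

theorem PerfectUpTo.of_not_crossAt_succ (hM : PerfectUpTo u w M k) (hjk : j ≤ k)
    (hnc : ¬ CrossAt u w M (j + 1)) : PerfectUpTo u w M j := by
  intro z hz
  rcases hM z (hz.trans hjk) with hh | hc | ⟨-, hc⟩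
  · exact Or.inl hh
  · exact Or.inr (Or.inl hc)
  · obtain hzj | rfl := hz.lt_or_eq
    · exact Or.inr (Or.inr ⟨hzj, hc⟩)
    · exact absurd hc hnc

theorem PerfectUpTo.congr (hM : PerfectUpTo u w M j) (hMM : EqOn M' M (LayerSet u w j)) :
    PerfectUpTo u w M' j := by
  have hlow : ∀ z ≤ j, ∀ v, InLayer u w z v → M' v = M v := fun z hz _ hv => hMM ⟨z, hz, hv⟩
  intro z hz
  rcases hM z hz with hh | hc | ⟨hz1, hc⟩
  · exact Or.inl (hh.congr (hlow z hz))
  · exact Or.inr (Or.inl (hc.congr fun v hv => hv.elim (hlow _ (by omega) v) (hlow z hz v)))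
  · exact Or.inr (Or.inr ⟨hz1, hc.congr fun v hv => hv.elim (hlow _ (by omega) v) (hlow _ hz1 v)⟩)

theorem PerfectUpTo.mapsTo (hM : PerfectUpTo u w M j) :
    MapsTo M (LayerSet u w j) (LayerSet u w j) := by
  rintro v ⟨z, hz, hv⟩
  rcases hM z hz with hh | hc | ⟨hz1, hc⟩
  · rcases hv with rfl | rfl
    · exact ⟨z, hz, Or.inr hh.1⟩
    · exact ⟨z, hz, Or.inl hh.2⟩
  · exact ⟨z - 1, by omega, hc.inLayer_pred hv⟩
  · exact ⟨z + 1, hz1, hc.inLayer_succ hv⟩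

theorem PerfectUpTo.succ_of_horizAt (hM : PerfectUpTo u w M j) (htop : HorizAt u w M (j + 1)) :
    PerfectUpTo u w M (j + 1) := by
  intro z hz
  obtain hzj | rfl := hz.lt_or_eq
  · rcases hM z (by omega) with hh | hc | ⟨hz1, hc⟩
    · exact Or.inl hh
    · exact Or.inr (Or.inl hc)
    · exact Or.inr (Or.inr ⟨by omega, hc⟩)
  · exact Or.inl htop

theorem PerfectUpTo.add_two_of_crossAt (hM : PerfectUpTo u w M j)
    (htop : CrossAt u w M (j + 2)) : PerfectUpTo u w M (j + 2) := by
  intro z hz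
  by_cases hzj : z ≤ j
  · rcases hM z hzj with hh | hc | ⟨hz1, hc⟩
    · exact Or.inl hh
    · exact Or.inr (Or.inl hc)
    · exact Or.inr (Or.inr ⟨by omega, hc⟩)
  · obtain rfl | rfl : z = j + 1 ∨ z = j + 2 := by omega
    · exact Or.inr (Or.inr ⟨le_rfl, htop⟩)
    · exact Or.inr (Or.inl htop)

theorem StableAmong.mono {S T : Set V} (hM : StableAmong pref M T) (hST : S ⊆ T) :
    StableAmong pref M S :=
  fun ⟨x, hx, y, hy, hxy⟩ => hM ⟨x, hST hx, y, hST hy, hxy⟩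

theorem StableAmong.congr {S : Set V} (hM : StableAmong pref M S) (hMM : EqOn M M' S) :
    StableAmong pref M' S := by
  rintro ⟨x, hx, y, hy, hxy, hpx, hpy⟩
  rw [← hMM hx, ← hMM hy] at hpx hpy
  exact hM ⟨x, hx, y, hy, hxy, hpx, hpy⟩

theorem StableAmong.union {S T : Set V} (hS : StableAmong pref M S) (hT : StableAmong pref M T)
    (hST : ∀ x ∈ S, ∀ y ∈ T, x ≠ y → pref x (M y) (M x) → pref y (M x) (M y) → False) :
    StableAmong pref M (S ∪ T) := by
  rintro ⟨x, hx | hx, y, hy | hy, hxy, hpx, hpy⟩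
  · exact hS ⟨x, hx, y, hy, hxy, hpx, hpy⟩
  · exact hST x hx y hy hxy hpx hpy
  · exact hST y hy x hx hxy.symm hpy hpx
  · exact hT ⟨x, hx, y, hy, hxy, hpx, hpy⟩

theorem stableAmong_pair (H : DistinctAgents h u w)
    (hacc : ∀ x p q, pref x p q → HGAdj h u w x p) (hxy : M x = y) (hyx : M y = x) :
    StableAmong pref M {x, y} := by
  rintro ⟨a, ha, b, hb, hab, hpa, -⟩
  have hMb : M b = a := by
    rcases ha with rfl | rfl <;> rcases hb with rfl | rfl
    exacts [absurd rfl hab, hyx, hxy, absurd rfl hab]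
  exact (hacc _ _ _ hpa).ne H hMb.symm

end Hourglass

section Blocks

variable {V : Type*} [DecidableEq V] {h : ℕ} {u w : ℕ → V} {M : V → V}
  {pref : V → V → V → Prop} {j : ℕ}

theorem horizAt_horizM (H : DistinctAgents h u w) (hj : j + 1 < h) :
    HorizAt u w (horizM u w (j + 1)) j ∧ HorizAt u w (horizM u w (j + 1)) (j + 1) := by
  have hj' : j < h := by omega
  simp [HorizAt, horizM, H.u_ne_u hj hj' j.succ_ne_self, H.w_ne_w hj hj' j.succ_ne_self,
    (H.u_ne_w j hj' j hj').symm, (H.u_ne_w (j + 1) hj j hj').symm,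
    (H.u_ne_w j hj' (j + 1) hj).symm, (H.u_ne_w (j + 1) hj (j + 1) hj).symm]

theorem crossAt_crossM (H : DistinctAgents h u w) (hj : j + 1 < h) :
    CrossAt u w (crossM u w (j + 1)) (j + 1) := by
  have hj' : j < h := by omega
  simp [CrossAt, crossM, H.u_ne_u hj hj' j.succ_ne_self, H.w_ne_w hj hj' j.succ_ne_self,
    (H.u_ne_w j hj' j hj').symm, (H.u_ne_w (j + 1) hj j hj').symm,
    (H.u_ne_w j hj' (j + 1) hj).symm, (H.u_ne_w (j + 1) hj (j + 1) hj).symm]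

theorem tauH_iff (H : DistinctAgents h u w) (hj : j + 1 < h) (h₀ : HorizAt u w M j)
    (h₁ : HorizAt u w M (j + 1)) :
    tauH pref u w (j + 1) ↔ StableAmong pref M {u j, w j, u (j + 1), w (j + 1)} := by
  obtain ⟨h₀', h₁'⟩ := horizAt_horizM H hj
  have hMM : EqOn M (horizM u w (j + 1)) {u j, w j, u (j + 1), w (j + 1)} := by
    rintro v (rfl | rfl | rfl | rfl)
    exacts [h₀.1.trans h₀'.1.symm, h₀.2.trans h₀'.2.symm, h₁.1.trans h₁'.1.symm,
      h₁.2.trans h₁'.2.symm]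
  exact ⟨fun hτ => hτ.congr hMM.symm, fun hM => hM.congr hMM⟩

theorem tauC_iff (H : DistinctAgents h u w) (hj : j + 1 < h) (hc : CrossAt u w M (j + 1)) :
    tauC pref u w (j + 1) ↔ StableAmong pref M {u j, w j, u (j + 1), w (j + 1)} := by
  have hc' := crossAt_crossM H hj
  have hMM : EqOn M (crossM u w (j + 1)) {u j, w j, u (j + 1), w (j + 1)} := by
    rintro v (rfl | rfl | rfl | rfl)
    exacts [hc.2.2.1.trans hc'.2.2.1.symm, hc.2.2.2.2.trans hc'.2.2.2.2.symm,
      hc.2.1.trans hc'.2.1.symm, hc.2.2.2.1.trans hc'.2.2.2.1.symm]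
  exact ⟨fun hτ => hτ.congr hMM.symm, fun hM => hM.congr hMM⟩

end Blocks

section Recurrence

variable {V : Type*} [DecidableEq V] {h : ℕ} {u w : ℕ → V} {M : V → V}
  {pref : V → V → V → Prop} {j : ℕ}

theorem dc_or_dh_and_tauH_of_dh_succ (H : DistinctAgents h u w) (hj : j + 1 < h)
    (hD : Dh pref u w (j + 1)) : Dc pref u w j ∨ Dh pref u w j ∧ tauH pref u w (j + 1) := by
  obtain ⟨M, hperf, hstab, htop⟩ := hD
  have hnc : ¬ CrossAt u w M (j + 1) := fun hc => by
    have := H.layer_eq (Or.inr htop.1) (Or.inr hc.2.1) hj (by omega)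
    omega
  have hperf' := hperf.of_not_crossAt_succ (Nat.le_succ j) hnc
  have hstab' := hstab.mono (layerSet_mono (Nat.le_succ j))
  rcases hperf'.horizAt_or_crossAt with hh | hc
  · exact Or.inr ⟨⟨M, hperf', hstab', hh⟩,
      (tauH_iff H hj hh htop).2 (hstab.mono (two_layers_subset_layerSet le_rfl))⟩
  · exact Or.inl ⟨M, hperf', hstab', hc⟩

theorem dc_or_dh_and_tauC_of_dc_add_two (H : DistinctAgents h u w) (hj : j + 2 < h)
    (hD : Dc pref u w (j + 2)) : (Dc pref u w j ∨ Dh pref u w j) ∧ tauC pref u w (j + 2) := by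
  obtain ⟨M, hperf, hstab, htop⟩ := hD
  have hnc : ¬ CrossAt u w M (j + 1) := fun hc => by
    have := H.layer_eq (Or.inr htop.2.2.1) (Or.inr hc.2.1) hj (by omega)
    omega
  have hperf' := hperf.of_not_crossAt_succ (by omega) hnc
  have hstab' := hstab.mono (layerSet_mono (by omega : j ≤ j + 2))
  refine ⟨?_, (tauC_iff H hj htop).2 (hstab.mono (two_layers_subset_layerSet le_rfl))⟩
  rcases hperf'.horizAt_or_crossAt with hh | hc
  · exact Or.inr ⟨M, hperf', hstab', hh⟩
  · exact Or.inl ⟨M, hperf', hstab', hc⟩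

theorem dh_succ_of_perfectUpTo (H : DistinctAgents h u w)
    (hacc : ∀ x p q, pref x p q → HGAdj h u w x p) (hj : j + 1 < h)
    (hperf : PerfectUpTo u w M j) (hstab : StableAmong pref M (LayerSet u w j))
    (hcase : CrossAt u w M j ∨ HorizAt u w M j ∧ tauH pref u w (j + 1)) :
    Dh pref u w (j + 1) := by
  classical
  set M' := (LayerSet u w j).piecewise M (horizM u w (j + 1))
  have hlow : EqOn M' M (LayerSet u w j) := piecewise_eqOn _ _ _
  have htop : HorizAt u w M' (j + 1) := (horizAt_horizM H hj).2.congr fun v hv =>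
    piecewise_eq_of_notMem _ _ _ (H.notMem_layerSet hv hj (Nat.lt_succ_self j))
  have hperf' := hperf.congr hlow
  refine ⟨M', hperf'.succ_of_horizAt htop, ?_, htop⟩
  rw [layerSet_succ]
  refine (hstab.congr hlow.symm).union (stableAmong_pair H hacc htop.1 htop.2) ?_
  intro x hx y hy hxy hpx hpy
  obtain ⟨b, hb, hxb⟩ := hx
  obtain ⟨b', hb', hMxb'⟩ := hperf'.mapsTo ⟨b, hb, hxb⟩
  have hy1 : InLayer u w (j + 1) y := hy
  have hMy1 : InLayer u w (j + 1) (M' y) := by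
    rcases hy1 with rfl | rfl
    exacts [Or.inr htop.1, Or.inl htop.2]
  have hbj := ((hacc _ _ _ hpx).layer_le H hxb hMy1 (by omega) hj).2
  have hb'j := ((hacc _ _ _ hpy).layer_le H hy1 hMxb' hj (by omega)).1
  obtain rfl : j = b := by omega
  rcases hcase with hc | ⟨hh, hτ⟩
  · rw [hlow ⟨j, hb, hxb⟩] at hMxb'
    have hlayer := H.layer_eq hMxb' (hc.inLayer_pred hxb) (by omega) (by omega)
    have hj1 := hc.1
    omega
  · have hh' : HorizAt u w M' j := hh.congr fun v hv => hlow ⟨j, le_rfl, hv⟩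
    refine (tauH_iff H hj hh' htop).1 hτ ⟨x, ?_, y, ?_, hxy, hpx, hpy⟩
    · rcases hxb with rfl | rfl <;> simp
    · rcases hy1 with rfl | rfl <;> simp

theorem dc_add_two_of_perfectUpTo (H : DistinctAgents h u w)
    (hacc : ∀ x p q, pref x p q → HGAdj h u w x p) (hj : j + 2 < h)
    (hperf : PerfectUpTo u w M j) (hstab : StableAmong pref M (LayerSet u w j))
    (hτ : tauC pref u w (j + 2)) : Dc pref u w (j + 2) := by
  classical
  set M' := (LayerSet u w j).piecewise M (crossM u w (j + 2))
  have hlow : EqOn M' M (LayerSet u w j) := piecewise_eqOn _ _ _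
  have htop : CrossAt u w M' (j + 2) := (crossAt_crossM H hj).congr fun v hv =>
    piecewise_eq_of_notMem _ _ _ <| hv.elim (H.notMem_layerSet · (by omega) (by omega))
      (H.notMem_layerSet · hj (by omega))
  have hperf' := hperf.congr hlow
  refine ⟨M', hperf'.add_two_of_crossAt htop, ?_, htop⟩
  rw [layerSet_add_two]
  refine (hstab.congr hlow.symm).union ((tauC_iff H hj htop).1 hτ) ?_
  intro x hx y hy _ hpx hpy
  obtain ⟨b, hb, hxb⟩ := hx
  obtain ⟨b', hb', hMxb'⟩ := hperf'.mapsTo ⟨b, hb, hxb⟩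
  have hy' : InLayer u w (j + 1) y ∨ InLayer u w (j + 2) y := by
    rcases hy with rfl | rfl | rfl | rfl
    exacts [Or.inl (Or.inl rfl), Or.inl (Or.inr rfl), Or.inr (Or.inl rfl), Or.inr (Or.inr rfl)]
  rcases hy' with hy' | hy'
  · have := ((hacc _ _ _ hpx).layer_le H hxb (htop.inLayer_succ hy') (by omega) hj).2
    omega
  · have := ((hacc _ _ _ hpy).layer_le H hy' hMxb' hj (by omega)).1
    omega

end Recurrence

theorem stmt_18_general {V : Type*} [DecidableEq V]
    (h : ℕ) (u w : ℕ → V)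
    (hu : Set.InjOn u (Set.Iio h)) (hw : Set.InjOn w (Set.Iio h))
    (huw : ∀ i < h, ∀ j < h, u i ≠ w j)
    (pref : V → V → V → Prop)
    (hacc : ∀ x p q, pref x p q → HGAdj h u w x p ∧ HGAdj h u w x q)
    (i : ℕ) (hi2 : 2 ≤ i) (hih : i ≤ h - 1) :
    (Dh pref u w i ↔ Dc pref u w (i - 1) ∨ (Dh pref u w (i - 1) ∧ tauH pref u w i)) ∧
    (Dc pref u w i ↔ (Dc pref u w (i - 2) ∨ Dh pref u w (i - 2)) ∧ tauC pref u w i) := by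
  obtain ⟨j, rfl⟩ : ∃ j, i = j + 2 := ⟨i - 2, by omega⟩
  have H : DistinctAgents h u w := ⟨hu, hw, huw⟩
  have hacc' : ∀ x p q, pref x p q → HGAdj h u w x p := fun x p q hp => (hacc x p q hp).1
  have hj : j + 2 < h := by omega
  refine ⟨⟨dc_or_dh_and_tauH_of_dh_succ H hj, ?_⟩, ⟨dc_or_dh_and_tauC_of_dc_add_two H hj, ?_⟩⟩
  · rintro (⟨M, hperf, hstab, hc⟩ | ⟨⟨M, hperf, hstab, hh⟩, hτ⟩)
    · exact dh_succ_of_perfectUpTo H hacc' hj hperf hstab (Or.inl hc)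
    · exact dh_succ_of_perfectUpTo H hacc' hj hperf hstab (Or.inr ⟨hh, hτ⟩)
  · rintro ⟨⟨M, hperf, hstab, -⟩ | ⟨M, hperf, hstab, -⟩, hτ⟩ <;>
      exact dc_add_two_of_perfectUpTo H hacc' hj hperf hstab hτ

/-- the dynamic-programming recurrences
`D_h[i] = D_c[i-1] ∨ (D_h[i-1] ∧ τ_h^{i-1,i})` and
`D_c[i] = (D_c[i-2] ∨ D_h[i-2]) ∧ τ_c^{i-1,i}` hold for all `2 ≤ i ≤ h - 1`. -/
theorem stmt_18 {V : Type*} [DecidableEq V]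
    (h : ℕ) (u w : ℕ → V)
    (hu : Set.InjOn u (Set.Iio h)) (hw : Set.InjOn w (Set.Iio h))
    (huw : ∀ i < h, ∀ j < h, u i ≠ w j)
    (pref : V → V → V → Prop)
    (hacc : ∀ x p q, pref x p q → HGAdj h u w x p ∧ HGAdj h u w x q)
    (hirr : ∀ x p, ¬ pref x p p)
    (i : ℕ) (hi2 : 2 ≤ i) (hih : i ≤ h - 1) :
    (Dh pref u w i ↔ Dc pref u w (i - 1) ∨ (Dh pref u w (i - 1) ∧ tauH pref u w i)) ∧
    (Dc pref u w i ↔ (Dc pref u w (i - 2) ∨ Dh pref u w (i - 2)) ∧ tauC pref u w i) :=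
  stmt_18_general h u w hu hw huw pref hacc i hi2 hih
end
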